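/- arXiv:1202.0154 — 9 statements merged into one kernel-verified Lean document; each statement's English description precedes it below -/
import Mathlib

section
/- Let {π_n} be a sequence of orthogonal polynomials with respect to a nonnegative integrable weight ω on an interval (a,b), with leading coefficients k_n ≠ 0 and normalization ∫_a^b ω(x) π_n(x)² dx = h_n > 0, i.e. ∫_a^b ω π_m π_n = h_n δ_{mn}. Let x_0 < x_1 < ⋯ < x_n be the n+1 roots of π_{n+1}, assumed real, distinct and lying in (a,b). Let λ_j := 1/∏_{k≠j}(x_j − x_k) be the barycentric weights and let w_j := ∫_a^b ω(x) ∏_{k≠j}((x − x_k)/(x_j − x_k)) dx be the Gaussian quadrature weights. Then for every j = 0,…,n one has λ_j = (k_n/h_n) · π_n(x_j) · w_j. -/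
open MeasureTheory Finset

open Polynomial in
/-- The linear functional `p ↦ ∫ ω p`. -/
noncomputable def Lint (a b : ℝ) (ω : ℝ → ℝ) (p : Polynomial ℝ) : ℝ :=
  ∫ t in a..b, ω t * p.eval t

open Polynomial in
lemma Lint_add (a b : ℝ) (ω : ℝ → ℝ)
    (hω_int : ∀ p : Polynomial ℝ,
      IntervalIntegrable (fun t => ω t * p.eval t) volume a b)
    (p q : Polynomial ℝ) :
    Lint a b ω (p + q) = Lint a b ω p + Lint a b ω q := by
  unfold Lint
  rw [← intervalIntegral.integral_add (hω_int p) (hω_int q)]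
  congr 1; funext t; simp [mul_add]

open Polynomial in
lemma Lint_Cmul (a b : ℝ) (ω : ℝ → ℝ) (c : ℝ) (p : Polynomial ℝ) :
    Lint a b ω (C c * p) = c * Lint a b ω p := by
  unfold Lint
  rw [← intervalIntegral.integral_const_mul]
  congr 1; funext t; simp; ring

open Polynomial in
lemma Lint_orth (a b : ℝ) (ω : ℝ → ℝ)
    (hω_int : ∀ p : Polynomial ℝ,
      IntervalIntegrable (fun t => ω t * p.eval t) volume a b)
    (π : ℕ → Polynomial ℝ)
    (hdeg : ∀ i, (π i).natDegree = i)
    (hlead : ∀ i, (π i).coeff i ≠ 0)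
    (h : ℕ → ℝ)
    (horth : ∀ i k : ℕ, Lint a b ω (π i * π k) = if i = k then h k else 0) :
    ∀ m : ℕ, ∀ q : Polynomial ℝ, q.degree < (m : ℕ) → Lint a b ω (π m * q) = 0 := by
  have key : ∀ d : ℕ, ∀ q : Polynomial ℝ, q.natDegree ≤ d → ∀ m : ℕ, d < m →
      Lint a b ω (π m * q) = 0 := by
    intro d
    induction d with
    | zero =>
      intro q hq m hm
      set k0 := (π 0).coeff 0 with hk0
      have hk0ne : k0 ≠ 0 := hlead 0
      have hπ0 : π 0 = C k0 := eq_C_of_natDegree_le_zero (by rw [hdeg 0])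
      have hq' : q = C (q.coeff 0) := eq_C_of_natDegree_le_zero hq
      have hqe : q = C (q.coeff 0 / k0) * π 0 := by
        rw [hπ0, ← C_mul, div_mul_cancel₀ _ hk0ne]; exact hq'
      rw [hqe, show π m * (C (q.coeff 0 / k0) * π 0)
            = C (q.coeff 0 / k0) * (π m * π 0) by ring,
        Lint_Cmul, horth m 0, if_neg (by omega : m ≠ 0), mul_zero]
    | succ d ih =>
      intro q hq m hm
      set c := q.coeff (d + 1) / (π (d + 1)).coeff (d + 1) with hc
      set r := q - C c * π (d + 1) with hr
      have hrd : r.natDegree ≤ d := by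
        rw [natDegree_le_iff_coeff_eq_zero]
        intro i hi
        simp only [hr, coeff_sub, coeff_C_mul]
        rcases eq_or_lt_of_le (Nat.succ_le_of_lt hi) with h1 | h1
        · rw [← h1, hc, div_mul_cancel₀ _ (hlead (d + 1)), sub_self]
        · rw [coeff_eq_zero_of_natDegree_lt (lt_of_le_of_lt hq h1),
            coeff_eq_zero_of_natDegree_lt (by rw [hdeg (d + 1)]; exact h1),
            mul_zero, sub_zero]
      have hsplit : q = C c * π (d + 1) + r := by rw [hr]; ring
      rw [hsplit, mul_add, Lint_add a b ω hω_int,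
        show π m * (C c * π (d + 1)) = C c * (π m * π (d + 1)) by ring,
        Lint_Cmul, horth m (d + 1), if_neg (by omega : m ≠ d + 1),
        ih r hrd m (by omega)]
      ring
  intro m q hq
  by_cases h0 : q = 0
  · subst h0; simp [Lint]
  · exact key q.natDegree q le_rfl m ((natDegree_lt_iff_degree_lt h0).mpr hq)

/-- **Barycentric weights in terms of Gaussian quadrature weights.** -/
theorem barycentric_eq_gauss_quadrature
    (a b : ℝ) (hab : a < b) (ω : ℝ → ℝ)
    (hω_nonneg : ∀ t ∈ Set.Ioo a b, 0 ≤ ω t)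
    (hω_int : ∀ p : Polynomial ℝ,
      IntervalIntegrable (fun t => ω t * p.eval t) volume a b)
    (π : ℕ → Polynomial ℝ)
    (hdeg : ∀ i, (π i).natDegree = i)
    (hlead : ∀ i, (π i).coeff i ≠ 0)
    (h : ℕ → ℝ) (hpos : ∀ i, 0 < h i)
    (horth : ∀ i k : ℕ,
      (∫ t in a..b, ω t * (π i).eval t * (π k).eval t) = if i = k then h k else 0)
    (n : ℕ) (x : Fin (n + 1) → ℝ)
    (hx_mono : StrictMono x)
    (hx_mem : ∀ j, x j ∈ Set.Ioo a b)
    (hx_root : ∀ j, (π (n + 1)).eval (x j) = 0)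
    (lam w : Fin (n + 1) → ℝ)
    (hlam : ∀ j, lam j = (∏ k ∈ Finset.univ.erase j, (x j - x k))⁻¹)
    (hw : ∀ j, w j =
      ∫ t in a..b, ω t * ∏ k ∈ Finset.univ.erase j, ((t - x k) / (x j - x k))) :
    ∀ j, lam j = ((π n).coeff n / h n) * (π n).eval (x j) * w j := by
  classical
  open Polynomial in
  intro j
  -- reformulate orthogonality in terms of `Lint`
  have horthL : ∀ i k : ℕ, Lint a b ω (π i * π k) = if i = k then h k else 0 := by
    intro i k
    rw [← horth i k]
    unfold Lint
    congr 1; funext t; simp [mul_assoc]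
  have horth_low := Lint_orth a b ω hω_int π hdeg hlead h horthL
  set kn := (π n).coeff n with hkn
  set v := (π n).eval (x j) with hv
  -- the nodal polynomials
  set Qj : Polynomial ℝ := ∏ k ∈ Finset.univ.erase j, (X - C (x k)) with hQj
  set Q : Polynomial ℝ := ∏ k : Fin (n + 1), (X - C (x k)) with hQdef
  have hQsplit : Q = (X - C (x j)) * Qj := by
    rw [hQdef, hQj, ← Finset.mul_prod_erase _ _ (Finset.mem_univ j)]
  have hQmonic : Q.Monic := monic_prod_of_monic _ _ fun k _ => monic_X_sub_C _
  have hQjmonic : Qj.Monic := monic_prod_of_monic _ _ fun k _ => monic_X_sub_C _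
  have hQdeg : Q.natDegree = n + 1 := by
    rw [hQdef, natDegree_prod _ _ fun k _ => X_sub_C_ne_zero _]
    simp
  have hQjdeg : Qj.natDegree = n := by
    rw [hQj, natDegree_prod _ _ fun k _ => X_sub_C_ne_zero _]
    simp [Finset.card_erase_of_mem]
  -- Q divides π (n+1)
  have hdvd : Q ∣ π (n + 1) := by
    refine Finset.prod_dvd_of_coprime ?_ fun k _ => (dvd_iff_isRoot).mpr (hx_root k)
    exact (Polynomial.pairwise_coprime_X_sub_C hx_mono.injective).set_pairwise _
  obtain ⟨g, hg⟩ := hdvd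
  have hπn1 : π (n + 1) ≠ 0 := fun hz => hlead (n + 1) (by rw [hz]; simp)
  have hgne : g ≠ 0 := fun hz => hπn1 (by rw [hg, hz, mul_zero])
  have hgdeg : g.natDegree = 0 := by
    have := natDegree_mul (hQmonic.ne_zero) hgne
    rw [← hg, hdeg (n + 1), hQdeg] at this
    omega
  set c := g.coeff 0 with hcdef
  have hgC : g = C c := eq_C_of_natDegree_le_zero (le_of_eq hgdeg)
  have hcne : c ≠ 0 := fun hz => hgne (by rw [hgC, hz, map_zero])
  have hQeq : Q = C c⁻¹ * π (n + 1) := by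
    rw [hg, hgC, mul_left_comm, ← C_mul, inv_mul_cancel₀ hcne, C_1, mul_one]
  -- factor π n - C v at x j
  have hroot : IsRoot (π n - C v) (x j) := by simp [IsRoot, hv]
  obtain ⟨s, hs⟩ := (dvd_iff_isRoot).mpr hroot
  -- the key vanishing polynomial p
  set p : Polynomial ℝ := (π n - C v) * Qj with hp
  have hpfact : p = π (n + 1) * (C c⁻¹ * s) := by
    rw [hp, hs, show (X - C (x j)) * s * Qj = s * ((X - C (x j)) * Qj) by ring,
      ← hQsplit, hQeq]
    ring
  have hLp : Lint a b ω p = 0 := by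
    rw [hpfact]
    refine horth_low (n + 1) _ ?_
    by_cases hs0 : s = 0
    · rw [hs0, mul_zero]
      exact lt_of_le_of_lt bot_le (by exact_mod_cast WithBot.bot_lt_coe (n + 1))
    · have hpne : p ≠ 0 := by
        rw [hp, hs]
        exact mul_ne_zero (mul_ne_zero (X_sub_C_ne_zero _) hs0) hQjmonic.ne_zero
      have h1 : p.natDegree ≤ n + n := by
        calc p.natDegree ≤ (π n - C v).natDegree + Qj.natDegree := natDegree_mul_le
        _ ≤ n + n := add_le_add
            (le_trans (natDegree_sub_le _ _) (by simp [hdeg n])) (le_of_eq hQjdeg)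
      have h2 : p.natDegree = s.natDegree + (n + 1) := by
        have hps : p = s * Q := by rw [hp, hs, hQsplit]; ring
        rw [hps, natDegree_mul hs0 hQmonic.ne_zero, hQdeg]
      have hsn : s.natDegree ≤ n := by omega
      have hcs : (C c⁻¹ * s).natDegree ≤ n := by
        calc (C c⁻¹ * s).natDegree ≤ (C c⁻¹).natDegree + s.natDegree := natDegree_mul_le
        _ ≤ n := by simp [hsn]
      have hne : C c⁻¹ * s ≠ 0 := mul_ne_zero (by simp [inv_ne_zero hcne]) hs0
      calc (C c⁻¹ * s).degree = ((C c⁻¹ * s).natDegree : WithBot ℕ) := degree_eq_natDegree hne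
      _ < ((n + 1 : ℕ) : WithBot ℕ) := by exact_mod_cast Nat.lt_succ_of_le hcs
  -- π n * Qj = C v * Qj + p
  have hLmain : Lint a b ω (π n * Qj) = v * Lint a b ω Qj := by
    have : π n * Qj = C v * Qj + p := by rw [hp]; ring
    rw [this, Lint_add a b ω hω_int, Lint_Cmul, hLp, add_zero]
  -- π n * Qj integrates to h n / kn
  have hLmain2 : Lint a b ω (π n * Qj) = kn⁻¹ * h n := by
    set r2 : Polynomial ℝ := Qj - C kn⁻¹ * π n with hr2
    have hr2deg : r2.degree < (n : ℕ) := by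
      rw [(degree_lt_iff_coeff_zero _ _)]
      intro m hm
      have hm' : n ≤ m := by exact_mod_cast hm
      simp only [hr2, coeff_sub, coeff_C_mul]
      rcases eq_or_lt_of_le hm' with h1 | h1
      · rw [← h1, show Qj.coeff n = 1 from hQjdeg ▸ hQjmonic.coeff_natDegree,
          hkn, inv_mul_cancel₀ (hlead n), sub_self]
      · rw [coeff_eq_zero_of_natDegree_lt (hQjdeg ▸ h1),
          coeff_eq_zero_of_natDegree_lt (by rw [hdeg n]; exact h1), mul_zero, sub_zero]
    have hQjsplit : Qj = C kn⁻¹ * π n + r2 := by rw [hr2]; ring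
    rw [hQjsplit, mul_add, Lint_add a b ω hω_int,
      show π n * (C kn⁻¹ * π n) = C kn⁻¹ * (π n * π n) by ring,
      Lint_Cmul, horthL n n, if_pos rfl, horth_low n r2 hr2deg, add_zero]
  -- w j = lam j * Lint Qj
  have hwj : w j = lam j * Lint a b ω Qj := by
    rw [hw j, hlam j]
    unfold Lint
    rw [← intervalIntegral.integral_const_mul]
    congr 1; funext t
    rw [Finset.prod_div_distrib]
    have hQje : Qj.eval t = ∏ k ∈ Finset.univ.erase j, (t - x k) := by
      rw [hQj, eval_prod]; simp
    rw [hQje, div_eq_mul_inv]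
    ring
  -- conclude
  have hkey : v * Lint a b ω Qj = kn⁻¹ * h n := by rw [← hLmain, hLmain2]
  rw [hwj]
  have hhn : h n ≠ 0 := (hpos n).ne'
  have hknne : kn ≠ 0 := hlead n
  calc lam j = (kn / h n) * (kn⁻¹ * h n) * lam j := by field_simp
  _ = (kn / h n) * (v * Lint a b ω Qj) * lam j := by rw [hkey]
  _ = kn / h n * v * (lam j * Lint a b ω Qj) := by ring
end

section
/- Let ω be a positive integrable weight on (a,b), σ a real polynomial of degree at most 2, τ a real polynomial of degree 1, with (σ(x)ω(x))' = τ(x)ω(x) on (a,b). Set ν_m := −m τ' − (m(m−1)/2) σ''. Let {π_n} be polynomials with deg π_n = n and leading coefficient k_n ≠ 0, each satisfying σ π_n'' + τ π_n' + ν_n π_n = 0, and orthogonal: ∫_a^b ω π_m π_n = h_n δ_{mn} with h_n > 0. Let β_n be the middle coefficient of the three-term recurrence x π_n(x) = (k_n/k_{n+1}) π_{n+1}(x) + β_n π_n(x) + (h_n k_{n−1}/(k_n h_{n−1})) π_{n−1}(x), and set τ_n(x) := τ(x) + n σ'(x). Then for n ≥ 1 (assuming ν_n ≠ 0 and ν_{2n+1}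 ≠ 0) the lowering identity holds: σ(x) π_n'(x) = −((2n+1)ν_n/(n ν_{2n+1})) [ (ν_{2n} ν_{2n+1}/(2 ν_n (2n+1))) (x − β_n) + τ_n(x) ] π_n(x) + (ν_{2n} h_n k_{n−1}/(2n k_n h_{n−1})) π_{n−1}(x) for all x. -/
open MeasureTheory Polynomial Filter Set

private lemma decomp2 (p : Polynomial ℝ) (hp : p.degree ≤ 2) :
    p = C (p.coeff 2) * X ^ 2 + C (p.coeff 1) * X + C (p.coeff 0) := by
  ext j
  rcases j with _|_|_|j
  · simp
  · simp
  · simp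
  · have h1 : p.coeff (j+3) = 0 := coeff_eq_zero_of_degree_lt (lt_of_le_of_lt hp (by
      norm_num [Nat.cast_ofNat]; exact_mod_cast by omega))
    simp [h1, coeff_X_pow]

private lemma ring_id {R : Type*} [CommRing R] (σ σd σdd τ T P Pd Pdd Pddd A A1 cc N : R)
    (hE : σ*Pdd + τ*Pd + A*P = 0)
    (hE' : σd*Pdd + σ*Pddd + T*Pd + τ*Pdd + A*Pd = 0)
    (hA1 : A1 = A - T - N*σdd)
    (hX : N * cc * (T + N*σdd) = A)
    (hY : 2 * cc * (T + N*σdd) = σdd - 2*T - N*σdd) :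
    σ * (σdd*Pd + 2*σd*Pdd + σ*Pddd - cc*(2*(T+N*σdd)*Pd + (τ+N*σd)*Pdd))
      + τ * (σd*Pd + σ*Pdd - cc*((T+N*σdd)*P + (τ+N*σd)*Pd))
      + A1 * (σ*Pd - cc*(τ+N*σd)*P) = 0 := by
  subst hA1; subst hX
  linear_combination σ * hE' + (σd - cc*(τ+N*σd)) * hE - (σ*Pd)*hY

private lemma coeff_quad_mul (s σ1 σ0 : ℝ) (r : Polynomial ℝ) (N : ℕ) :
    ((C s * X^2 + C σ1 * X + C σ0) * r).coeff (N+2)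
      = s * r.coeff N + σ1 * r.coeff (N+1) + σ0 * r.coeff (N+2) := by
  have h1 : C s * X^2 * r = C s * (r * X^2) := by ring
  have h2 : C σ1 * X * r = C σ1 * (r * X^1) := by ring
  rw [add_mul, add_mul, h1, h2, coeff_add, coeff_add, coeff_C_mul, coeff_C_mul, coeff_C_mul]
  rw [show N + 2 = N + 1 + 1 from rfl, ← coeff_mul_X_pow r 2 N, ← coeff_mul_X_pow r 1 (N+1)]

private lemma coeff_lin_mul (t τ0 : ℝ) (r : Polynomial ℝ) (N : ℕ) :
    ((C t * X + C τ0) * r).coeff (N+1) = t * r.coeff N + τ0 * r.coeff (N+1) := by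
  have h2 : C t * X * r = C t * (r * X^1) := by ring
  rw [add_mul, h2, coeff_add, coeff_C_mul, coeff_C_mul, ← coeff_mul_X_pow r 1 N]

private lemma eigen_coeff (σ τ q : Polynomial ℝ) (s σ1 σ0 t τ0 μ : ℝ)
    (hσeq : σ = C s * X^2 + C σ1 * X + C σ0) (hτeq : τ = C t * X + C τ0)
    (N : ℕ) (hN : 1 ≤ N) (hq : q.natDegree ≤ N)
    (hL : σ * derivative (derivative q) + τ * derivative q + C μ * q = 0) :
    (s * N * ((N : ℝ) - 1) + t * N + μ) * q.coeff N = 0 := by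
  have h0 := congrArg (fun r => Polynomial.coeff r N) hL
  simp only [coeff_add, coeff_zero, coeff_C_mul] at h0
  rw [hσeq, hτeq] at h0
  have e1 : q.coeff (N+1) = 0 := coeff_eq_zero_of_natDegree_lt (by omega)
  have e2 : q.coeff (N+2) = 0 := coeff_eq_zero_of_natDegree_lt (by omega)
  have e3 : q.coeff (N+3) = 0 := coeff_eq_zero_of_natDegree_lt (by omega)
  obtain ⟨M, rfl⟩ : ∃ M, N = M + 1 := ⟨N - 1, by omega⟩
  rcases Nat.eq_zero_or_pos M with rfl | hM
  · -- N = 1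
    have hq' : derivative q = C ((derivative q).coeff 0) :=
      eq_C_of_natDegree_le_zero (le_trans (natDegree_derivative_le q) (by omega))
    have hq'' : derivative (derivative q) = 0 := by rw [hq']; simp
    rw [hq''] at h0
    simp only [mul_zero, coeff_zero, zero_add] at h0
    rw [coeff_lin_mul t τ0 (derivative q) 0] at h0
    simp only [coeff_derivative] at h0
    push_cast at h0 ⊢
    rw [e1] at h0
    linear_combination h0
  · obtain ⟨K, rfl⟩ : ∃ K, M = K + 1 := ⟨M - 1, by omega⟩
    rw [show K + 1 + 1 = K + 2 from rfl] at *
    rw [coeff_quad_mul, coeff_lin_mul t τ0 (derivative q) (K+1)] at h0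
    simp only [coeff_derivative] at h0
    rw [show K+1+1 = K+2 from rfl, show K+2+1+1 = K+2+2 from rfl] at h0
    rw [e1, e2] at h0
    push_cast at h0 ⊢
    linear_combination h0

section
variable (a b : ℝ) (ω : ℝ → ℝ)
variable (hω_int : ∀ p : Polynomial ℝ, IntervalIntegrable (fun t => ω t * p.eval t) volume a b)

private lemma int_cmul (c : ℝ) (p : Polynomial ℝ) :
    (∫ t in a..b, ω t * (C c * p).eval t) = c * ∫ t in a..b, ω t * p.eval t := by
  rw [show (fun t => ω t * (C c * p).eval t) = fun t => c * (ω t * p.eval t) from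
    funext fun t => by simp; ring]
  exact intervalIntegral.integral_const_mul c _

include hω_int in
private lemma int_add (p q : Polynomial ℝ) :
    (∫ t in a..b, ω t * (p + q).eval t)
      = (∫ t in a..b, ω t * p.eval t) + ∫ t in a..b, ω t * q.eval t := by
  rw [show (fun t => ω t * (p + q).eval t) = fun t => ω t * p.eval t + ω t * q.eval t from
    funext fun t => by simp [eval_add]; ring]
  exact intervalIntegral.integral_add (hω_int p) (hω_int q)

variable (π : ℕ → Polynomial ℝ) (k h : ℕ → ℝ)
variable (hπtop : ∀ i, (π i).coeff i = k i)
variable (hπhigh : ∀ i j, i < j → (π i).coeff j = 0)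
variable (hk0 : ∀ i, k i ≠ 0)
variable (hπ0 : π 0 = C (k 0))
variable (horth' : ∀ i l, (∫ t in a..b, ω t * ((π i) * (π l)).eval t) = if i = l then h l else 0)

include hω_int hπtop hπhigh hk0 hπ0 horth' in
private lemma int_zero : ∀ (N : ℕ) (p : Polynomial ℝ), p.natDegree ≤ N →
    ∀ i, N < i → (∫ t in a..b, ω t * ((π i) * p).eval t) = 0 := by
  intro N
  induction N with
  | zero =>
    intro p hp i hi
    have hC : C (p.coeff 0) = C (p.coeff 0 / k 0) * C (k 0) := by
      rw [← C_mul, div_mul_cancel₀ _ (hk0 0)]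
    have hpe : π i * p = C (p.coeff 0 / k 0) * (π i * π 0) := by
      conv_lhs => rw [eq_C_of_natDegree_le_zero hp]
      rw [hπ0, hC]; ring
    rw [hpe, int_cmul, horth', if_neg (by omega), mul_zero]
  | succ N IH =>
    intro p hp i hi
    have hrd : (p - C (p.coeff (N+1) / k (N+1)) * π (N+1)).natDegree ≤ N := by
      rw [natDegree_le_iff_coeff_eq_zero]
      intro j hj
      rcases eq_or_lt_of_le (Nat.succ_le_of_lt hj) with hj' | hj'
      · rw [← hj']
        simp only [coeff_sub, coeff_C_mul, hπtop, div_mul_cancel₀ _ (hk0 (N+1)), sub_self]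
      · have h1 : p.coeff j = 0 := coeff_eq_zero_of_natDegree_lt (lt_of_le_of_lt hp hj')
        have h2 : (π (N+1)).coeff j = 0 := hπhigh _ _ hj'
        simp [coeff_sub, coeff_C_mul, h1, h2]
    have hsplit : π i * p = C (p.coeff (N+1) / k (N+1)) * (π i * π (N+1))
        + π i * (p - C (p.coeff (N+1) / k (N+1)) * π (N+1)) := by ring
    rw [hsplit, int_add a b ω hω_int, int_cmul, horth', if_neg (by omega),
      IH _ hrd i (by omega), mul_zero, add_zero]

include hω_int hπtop hπhigh hk0 hπ0 horth' in
private lemma int_eval : ∀ (i : ℕ) (p : Polynomial ℝ), p.natDegree ≤ i →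
    (∫ t in a..b, ω t * ((π i) * p).eval t) = p.coeff i / k i * h i := by
  intro i p hp
  have hrc : ∀ j, i ≤ j → (p - C (p.coeff i / k i) * π i).coeff j = 0 := by
    intro j hj
    rcases eq_or_lt_of_le hj with hj' | hj'
    · rw [← hj']
      simp only [coeff_sub, coeff_C_mul, hπtop, div_mul_cancel₀ _ (hk0 i), sub_self]
    · have h1 : p.coeff j = 0 := coeff_eq_zero_of_natDegree_lt (lt_of_le_of_lt hp hj')
      have h2 : (π i).coeff j = 0 := hπhigh _ _ hj'
      simp [coeff_sub, coeff_C_mul, h1, h2]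
  have hsplit : π i * p = C (p.coeff i / k i) * (π i * π i)
      + π i * (p - C (p.coeff i / k i) * π i) := by ring
  rw [hsplit, int_add a b ω hω_int, int_cmul, horth', if_pos rfl]
  rcases Nat.eq_zero_or_pos i with rfl | hi
  · have : p - C (p.coeff 0 / k 0) * π 0 = 0 := by
      ext j; exact hrc j (Nat.zero_le j)
    rw [this, mul_zero]
    simp
  · have hdr : (p - C (p.coeff i / k i) * π i).natDegree ≤ i - 1 := by
      rw [natDegree_le_iff_coeff_eq_zero]
      intro j hj
      exact hrc j (by omega)
    rw [int_zero a b ω hω_int π k h hπtop hπhigh hk0 hπ0 horth' (i-1) _ hdr i (by omega), add_zero]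

include hω_int hπtop hπhigh hk0 hπ0 horth' in
private lemma vanish (hpos : ∀ i, 0 < h i) :
    ∀ (N : ℕ) (q : Polynomial ℝ), q.natDegree ≤ N →
    (∀ m : ℕ, m ≤ N → (∫ t in a..b, ω t * ((π m) * q).eval t) = 0) → q = 0 := by
  intro N
  induction N with
  | zero =>
    intro q hq hint
    have h1 := (int_eval a b ω hω_int π k h hπtop hπhigh hk0 hπ0 horth' 0 q hq).symm.trans
      (hint 0 le_rfl)
    have hc : q.coeff 0 = 0 := by
      have := hpos 0
      have := hk0 0
      field_simp at h1
      exact (mul_eq_zero.mp (h1.trans (mul_zero _))).resolve_right (ne_of_gt (hpos 0))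
    rw [eq_C_of_natDegree_le_zero hq, hc, map_zero]
  | succ N IH =>
    intro q hq hint
    have h1 := (int_eval a b ω hω_int π k h hπtop hπhigh hk0 hπ0 horth' (N+1) q hq).symm.trans
      (hint (N+1) le_rfl)
    have hc : q.coeff (N+1) = 0 := by
      have := hpos (N+1)
      have := hk0 (N+1)
      field_simp at h1
      exact (mul_eq_zero.mp (h1.trans (mul_zero _))).resolve_right (ne_of_gt (hpos (N+1)))
    have hq' : q.natDegree ≤ N := by
      rw [natDegree_le_iff_coeff_eq_zero]
      intro j hj
      rcases eq_or_lt_of_le (Nat.succ_le_of_lt hj) with hj' | hj'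
      · rw [← hj']; exact hc
      · exact coeff_eq_zero_of_natDegree_lt (lt_of_le_of_lt hq hj')
    exact IH q hq' (fun m hm => hint m (by omega))

end
set_option maxHeartbeats 1000000 in

private lemma FTC_main (a b : ℝ) (hab : a < b) (ω : ℝ → ℝ)
    (hω_int : ∀ p : Polynomial ℝ, IntervalIntegrable (fun t => ω t * p.eval t) volume a b)
    (σ τ : Polynomial ℝ)
    (hPearson : ∀ t ∈ Set.Ioo a b, HasDerivAt (fun s => σ.eval s * ω s) (τ.eval t * ω t) t) :
    ∃ La Lb : ℝ, ∀ p : Polynomial ℝ,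
      (∫ t in a..b, ω t * (τ*p + σ*derivative p).eval t) = Lb * p.eval b - La * p.eval a := by
  have hm : (a+b)/2 ∈ Set.Ioo a b := ⟨by linarith, by linarith⟩
  set m := (a+b)/2 with hmdef
  have hsub : Set.Ioo a b ⊆ Set.uIcc a b := by
    rw [Set.uIcc_of_le hab.le]; exact Set.Ioo_subset_Icc_self
  have hmu : m ∈ Set.uIcc a b := hsub hm
  have hau : a ∈ Set.uIcc a b := Set.left_mem_uIcc
  have hbu : b ∈ Set.uIcc a b := Set.right_mem_uIcc
  -- derivative of F·p on Ioo
  have hFb : ∀ (p : Polynomial ℝ), ∀ x ∈ Set.Ioo a b,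
      HasDerivAt (fun y => σ.eval y * ω y * p.eval y) (ω x * (τ*p + σ*derivative p).eval x) x := by
    intro p x hx
    have h1 := (hPearson x hx).mul (p.hasDerivAt x)
    refine h1.congr_deriv ?_
    simp only [eval_add, eval_mul]
    ring
  have key1 : ∀ (p : Polynomial ℝ) (c d : ℝ), c ∈ Set.Ioo a b → d ∈ Set.Ioo a b →
      (∫ t in c..d, ω t * (τ*p + σ*derivative p).eval t)
        = σ.eval d * ω d * p.eval d - σ.eval c * ω c * p.eval c := by
    intro p c d hc hd
    refine intervalIntegral.integral_eq_sub_of_hasDerivAt (fun x hx => hFb p x ?_) ?_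
    · exact Set.ordConnected_Ioo.uIcc_subset hc hd hx
    · exact (hω_int _).mono_set (Set.uIcc_subset_uIcc (hsub hc) (hsub hd))
  have Φcont : ∀ q : Polynomial ℝ,
      ContinuousOn (fun x => ∫ t in m..x, ω t * q.eval t) (Set.uIcc a b) :=
    fun q => intervalIntegral.continuousOn_primitive_interval' (hω_int q) hmu
  have tendΦ : ∀ (q : Polynomial ℝ) (e : ℝ), e ∈ Set.uIcc a b →
      Tendsto (fun x => ∫ t in m..x, ω t * q.eval t) (nhdsWithin e (Set.Ioo a b))
        (nhds (∫ t in m..e, ω t * q.eval t)) :=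
    fun q e he => ((Φcont q) e he).mono hsub
  have hFeq : ∀ c ∈ Set.Ioo a b,
      σ.eval c * ω c = σ.eval m * ω m + ∫ t in m..c, ω t * τ.eval t := by
    intro c hc
    have h1 := key1 1 m c hm hc
    simp only [derivative_one, mul_zero, mul_one, add_zero, eval_one] at h1
    linarith [h1]
  -- limit of F at endpoints
  have hFtend : ∀ e, e ∈ Set.uIcc a b →
      Tendsto (fun x => σ.eval x * ω x) (nhdsWithin e (Set.Ioo a b))
        (nhds (σ.eval m * ω m + ∫ t in m..e, ω t * τ.eval t)) := by
    intro e he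
    refine (Filter.Tendsto.const_add (σ.eval m * ω m) (tendΦ τ e he)).congr' ?_
    filter_upwards [self_mem_nhdsWithin] with c hc
    exact (hFeq c hc).symm
  refine ⟨σ.eval m * ω m + ∫ t in m..a, ω t * τ.eval t,
          σ.eval m * ω m + ∫ t in m..b, ω t * τ.eval t, fun p => ?_⟩
  have hend : ∀ e, e ∈ Set.uIcc a b → Filter.NeBot (nhdsWithin e (Set.Ioo a b)) →
      (∫ t in m..e, ω t * (τ*p + σ*derivative p).eval t)
        = (σ.eval m * ω m + ∫ t in m..e, ω t * τ.eval t) * p.eval e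
          - σ.eval m * ω m * p.eval m := by
    intro e he hne
    have T1 := tendΦ (τ*p + σ*derivative p) e he
    have TP : Tendsto (fun x => p.eval x) (nhdsWithin e (Set.Ioo a b)) (nhds (p.eval e)) :=
      (p.continuousAt).tendsto.mono_left nhdsWithin_le_nhds
    have T2 : Tendsto (fun x => ∫ t in m..x, ω t * (τ*p + σ*derivative p).eval t)
        (nhdsWithin e (Set.Ioo a b))
        (nhds ((σ.eval m * ω m + ∫ t in m..e, ω t * τ.eval t) * p.eval e
          - σ.eval m * ω m * p.eval m)) := by
      refine (((hFtend e he).mul TP).sub_const (σ.eval m * ω m * p.eval m)).congr' ?_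
      filter_upwards [self_mem_nhdsWithin] with c hc
      rw [← key1 p m c hm hc]
    exact tendsto_nhds_unique T1 T2
  have ha' := hend a hau (left_nhdsWithin_Ioo_neBot hab)
  have hb' := hend b hbu (right_nhdsWithin_Ioo_neBot hab)
  have i1 : IntervalIntegrable (fun t => ω t * (τ*p + σ*derivative p).eval t) volume a m :=
    (hω_int _).mono_set (Set.uIcc_subset_uIcc hau hmu)
  have i2 : IntervalIntegrable (fun t => ω t * (τ*p + σ*derivative p).eval t) volume m b :=
    (hω_int _).mono_set (Set.uIcc_subset_uIcc hmu hbu)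
  have hsplit := intervalIntegral.integral_add_adjacent_intervals i1 i2
  have hsym : (∫ t in a..m, ω t * (τ*p + σ*derivative p).eval t)
      = - ∫ t in m..a, ω t * (τ*p + σ*derivative p).eval t :=
    (intervalIntegral.integral_symm m a)
  rw [← hsplit, hsym, ha', hb']
  ring
set_option maxHeartbeats 2000000 in
/-- **Lowering identity for orthogonal polynomials of hypergeometric type.**
If the classical family `π_n` satisfies `σ π_n'' + τ π_n' + ν_n π_n = 0` with
`(σω)' = τω` on `(a,b)`, and `β_n` is the middle coefficient of the three-term
recurrence, then
`σ(x) π_n'(x) = -((2n+1)ν_n/(n ν_{2n+1})) [ (ν_{2n} ν_{2n+1}/(2 ν_n (2n+1))) (x-β_n)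
  + τ_n(x) ] π_n(x) + (ν_{2n} h_n k_{n-1}/(2n k_n h_{n-1})) π_{n-1}(x)`. -/
theorem lowering_identity_hypergeometric
    (a b : ℝ) (hab : a < b) (ω : ℝ → ℝ)
    (hω_pos : ∀ t ∈ Set.Ioo a b, 0 < ω t)
    (hω_int : ∀ p : Polynomial ℝ,
      IntervalIntegrable (fun t => ω t * p.eval t) volume a b)
    (σ τ : Polynomial ℝ) (hσ : σ.degree ≤ 2) (hτ : τ.degree = 1)
    (hPearson : ∀ t ∈ Set.Ioo a b,
      HasDerivAt (fun s => σ.eval s * ω s) (τ.eval t * ω t) t)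
    (ν : ℕ → ℝ)
    (hν : ∀ m : ℕ, ν m = -(m : ℝ) * τ.coeff 1
      - ((m : ℝ) * ((m : ℝ) - 1) / 2) * (2 * σ.coeff 2))
    (π : ℕ → Polynomial ℝ)
    (hdeg : ∀ i, (π i).natDegree = i)
    (k : ℕ → ℝ) (hk : ∀ i, k i = (π i).coeff i) (hk0 : ∀ i, k i ≠ 0)
    (hODE : ∀ i, σ * derivative (derivative (π i)) + τ * derivative (π i)
      + Polynomial.C (ν i) * π i = 0)
    (h : ℕ → ℝ) (hpos : ∀ i, 0 < h i)
    (horth : ∀ i l : ℕ,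
      (∫ t in a..b, ω t * (π i).eval t * (π l).eval t) = if i = l then h l else 0)
    (n : ℕ) (hn : 1 ≤ n) (hνn : ν n ≠ 0) (hν2n1 : ν (2 * n + 1) ≠ 0)
    (β : ℝ)
    (hrec : Polynomial.X * π n = Polynomial.C (k n / k (n + 1)) * π (n + 1)
      + Polynomial.C β * π n
      + Polynomial.C (h n * k (n - 1) / (k n * h (n - 1))) * π (n - 1)) :
    ∀ x : ℝ, σ.eval x * (derivative (π n)).eval x =
      -((2 * (n : ℝ) + 1) * ν n / ((n : ℝ) * ν (2 * n + 1)))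
        * ((ν (2 * n) * ν (2 * n + 1) / (2 * ν n * (2 * (n : ℝ) + 1))) * (x - β)
            + (τ.eval x + (n : ℝ) * (derivative σ).eval x))
        * (π n).eval x
      + (ν (2 * n) * h n * k (n - 1) / (2 * (n : ℝ) * k n * h (n - 1)))
        * (π (n - 1)).eval x := by
  -- ## coefficients of σ and τ
  set s := σ.coeff 2 with hs
  set σ1 := σ.coeff 1 with hσ1
  set σ0 := σ.coeff 0 with hσ0
  set t := τ.coeff 1 with ht
  set τ0 := τ.coeff 0 with hτ0
  have hσeq : σ = C s * X^2 + C σ1 * X + C σ0 := decomp2 σ hσ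
  have hτc2 : τ.coeff 2 = 0 := coeff_eq_zero_of_degree_lt (by rw [hτ]; norm_num)
  have hτeq : τ = C t * X + C τ0 := by
    have h1 := decomp2 τ (le_trans (le_of_eq hτ) (by norm_num))
    rw [hτc2] at h1
    simpa using h1
  have ht0 : t ≠ 0 := by
    have := Polynomial.coeff_ne_zero_of_eq_degree (n := 1) (by exact_mod_cast hτ)
    exact this
  have hσd : derivative σ = C (2*s) * X + C σ1 := by
    rw [hσeq]; simp [C_mul]; ring_nf; rw [show (C 2 : ℝ[X]) = 2 from map_ofNat C 2]
  have hσdd : derivative (derivative σ) = C (2*s) := by rw [hσd]; simp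
  have hτd : derivative τ = C t := by rw [hτeq]; simp
  have hσn2 : σ.natDegree ≤ 2 := natDegree_le_iff_degree_le.mpr (by exact_mod_cast hσ)
  have hτn1 : τ.natDegree = 1 := natDegree_eq_of_degree_eq_some (by exact_mod_cast hτ)
  -- ## π family basics
  have hπtop : ∀ i, (π i).coeff i = k i := fun i => (hk i).symm
  have hπhigh : ∀ i j, i < j → (π i).coeff j = 0 := fun i j hij =>
    coeff_eq_zero_of_natDegree_lt (by rw [hdeg]; exact hij)
  have hπ0 : π 0 = C (k 0) := by
    rw [hk 0]; exact eq_C_of_natDegree_le_zero (le_of_eq (hdeg 0))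
  have horth' : ∀ i l, (∫ t' in a..b, ω t' * ((π i) * (π l)).eval t') = if i = l then h l else 0 := by
    intro i l
    rw [← horth i l]
    congr 1
    funext t'
    simp [eval_mul]; ring
  -- ## scalar facts
  have hn0 : (n:ℝ) ≠ 0 := Nat.cast_ne_zero.mpr (by omega)
  have hνnn : ν n = -(n:ℝ)*t - (n:ℝ)*((n:ℝ)-1)*s := by rw [hν]; ring
  have hν2n1' : ν (2*n+1) = -(2*(n:ℝ)+1)*(t + 2*(n:ℝ)*s) := by rw [hν]; push_cast; ring
  have hν2n' : ν (2*n) = -(2*(n:ℝ))*t - 2*(n:ℝ)*(2*(n:ℝ)-1)*s := by rw [hν]; push_cast; ring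
  have htn0 : t + 2*(n:ℝ)*s ≠ 0 := by
    intro h0
    exact hν2n1 (by rw [hν2n1', h0, mul_zero])
  set cc := ν n / ((n:ℝ) * (t + 2*(n:ℝ)*s)) with hcc
  set cnp1 := -(ν (2*n) * k n) / (2*(n:ℝ)*k (n+1)) with hcnp1
  -- ## FTC and boundary vanishing
  obtain ⟨La, Lb, hFTC⟩ := FTC_main a b hab ω hω_int σ τ hPearson
  have hπ1eq : π 1 = C (k 1) * X + C ((π 1).coeff 0) := by
    have h2 := decomp2 (π 1) (le_trans degree_le_natDegree (by rw [hdeg]; exact_mod_cast by norm_num))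
    rw [hπhigh 1 2 (by omega)] at h2
    rw [hπtop 1] at h2
    simpa using h2
  have hν1 : ν 1 = -t := by rw [hν]; push_cast; ring
  have hd1 : derivative (π 1) = C (k 1) := by rw [hπ1eq]; simp
  have hdd1 : derivative (derivative (π 1)) = 0 := by rw [hd1]; simp
  have h3 : τ * C (k 1) = C t * π 1 := by
    have h1 := hODE 1
    rw [hdd1, hd1, mul_zero, zero_add, hν1, map_neg] at h1
    linear_combination h1
  have hτπ1 : τ = C (t / k 1) * π 1 := by
    have hc : C (t/k 1) * C (k 1) = (C t : Polynomial ℝ) := by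
      rw [← C_mul, div_mul_cancel₀ _ (hk0 1)]
    refine mul_right_cancel₀ (show (C (k 1):Polynomial ℝ) ≠ 0 by simpa using hk0 1) ?_
    linear_combination h3 - π 1 * hc
  have hintτ : (∫ t' in a..b, ω t' * τ.eval t') = 0 := by
    have e1 : τ = C (t/(k 1 * k 0)) * (π 1 * π 0) := by
      rw [hτπ1, hπ0, mul_comm (π 1) (C (k 0)), ← mul_assoc, ← C_mul]
      congr 2
      field_simp [hk0 0, hk0 1]
    rw [e1, int_cmul, horth' 1 0, if_neg one_ne_zero, mul_zero]
  have hLab : Lb = La := by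
    have h1 := hFTC 1
    have h2 : τ * 1 + σ * derivative 1 = τ := by simp
    rw [h2, hintτ, eval_one, eval_one, mul_one, mul_one] at h1
    linarith
  have hπ2eq : π 2 = C (k 2) * X^2 + C ((π 2).coeff 1) * X + C ((π 2).coeff 0) := by
    have h2 := decomp2 (π 2) (le_trans degree_le_natDegree (by rw [hdeg]; exact_mod_cast by norm_num))
    rw [hπtop 2] at h2
    exact h2
  have hintπ2 : (∫ t' in a..b, ω t' * (π 2).eval t') = 0 := by
    have e1 : π 2 = C (1/(k 0)) * (π 2 * π 0) := by
      rw [hπ0, mul_comm (π 2) (C (k 0)), ← mul_assoc, ← C_mul]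
      rw [show 1/(k 0) * k 0 = 1 by rw [one_div, inv_mul_cancel₀ (hk0 0)], C_1, one_mul]
    rw [e1, int_cmul, horth' 2 0, if_neg (by omega), mul_zero]
  have hODE2' : τ * derivative (π 2) + σ * derivative (derivative (π 2)) = C (-(ν 2)) * π 2 := by
    have h1 := hODE 2
    rw [map_neg]
    linear_combination h1
  have hdπ2eval : ∀ y, (derivative (π 2)).eval y = 2*(k 2)*y + (π 2).coeff 1 := by
    intro y
    rw [hπ2eq]
    simp
    ring
  have hLb0 : Lb = 0 := by
    have h1 := hFTC (derivative (π 2))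
    rw [hODE2'] at h1
    rw [int_cmul, hintπ2, mul_zero] at h1
    rw [hdπ2eval, hdπ2eval, hLab] at h1
    have h2 : La * (2*(k 2)*(b-a)) = 0 := by linarith
    rcases mul_eq_zero.mp h2 with h4 | h4
    · rw [hLab]; exact h4
    · exfalso
      have : b - a ≠ 0 := by intro hz; linarith
      have := mul_ne_zero (mul_ne_zero (two_ne_zero) (hk0 2)) this
      exact this h4
  have hLa0 : La = 0 := by rw [← hLab]; exact hLb0
  have keyFTC : ∀ p : Polynomial ℝ,
      (∫ t' in a..b, ω t' * (τ*p + σ*derivative p).eval t') = 0 := by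
    intro p
    rw [hFTC p, hLb0, hLa0]
    ring
  -- ## the polynomial w = σ π_n' - cc τ_n π_n and W
  set τn : Polynomial ℝ := τ + C (n:ℝ) * derivative σ with hτndef
  have hτneq : τn = C (t + 2*(n:ℝ)*s) * X + C (τ0 + (n:ℝ)*σ1) := by
    rw [hτndef, hσd, hτeq]; simp [C_mul, C_add]; ring
  have hτnd : derivative τn = C t + C (n:ℝ) * C (2*s) := by
    rw [hτndef, derivative_add, derivative_C_mul, hτd, hσdd]
  set w : Polynomial ℝ := σ * derivative (π n) - C cc * (τn * π n) with hwdef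
  have hE' : derivative σ * derivative (derivative (π n)) + σ * derivative (derivative (derivative (π n)))
      + C t * derivative (π n) + τ * derivative (derivative (π n)) + C (ν n) * derivative (π n) = 0 := by
    have h0 := congrArg derivative (hODE n)
    simp only [derivative_add, derivative_mul, derivative_C_mul, derivative_C, derivative_zero,
      zero_mul, zero_add, add_zero] at h0
    rw [hτd] at h0
    linear_combination h0
  have hA1C : (C (ν (n+1)) : Polynomial ℝ) = C (ν n) - C t - C (n:ℝ) * C (2*s) := by
    rw [← C_mul, ← C_sub, ← C_sub]
    congr 1
    rw [hν, hν]; push_cast; ring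
  have hXC : (C (n:ℝ) : Polynomial ℝ) * C cc * (C t + C (n:ℝ) * C (2*s)) = C (ν n) := by
    rw [← C_mul, ← C_mul, ← C_add, ← C_mul]
    congr 1
    rw [hcc]
    field_simp [show t + (n:ℝ)*2*s ≠ 0 by convert htn0 using 1; ring]
  have hYC : (2 : Polynomial ℝ) * C cc * (C t + C (n:ℝ) * C (2*s))
      = C (2*s) - 2*(C t) - C (n:ℝ)*C (2*s) := by
    rw [show (2 : Polynomial ℝ) = C 2 from (map_ofNat C 2).symm]
    simp only [← C_mul, ← C_add, ← C_sub]
    congr 1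
    rw [hcc, hνnn]
    field_simp [hn0, htn0]
    ring
  have hdw : derivative w = derivative σ * derivative (π n) + σ * derivative (derivative (π n))
      - C cc * ((C t + C (n:ℝ) * C (2*s)) * π n + τn * derivative (π n)) := by
    rw [hwdef, derivative_sub, derivative_mul, derivative_C_mul, derivative_mul, hτnd]
  have hddw : derivative (derivative w) = C (2*s) * derivative (π n)
      + 2 * derivative σ * derivative (derivative (π n)) + σ * derivative (derivative (derivative (π n)))
      - C cc * (2 * (C t + C (n:ℝ) * C (2*s)) * derivative (π n) + τn * derivative (derivative (π n))) := by
    rw [hdw]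
    simp only [derivative_sub, derivative_add, derivative_mul, derivative_C_mul, hτnd, hσdd,
      derivative_C, derivative_one, zero_mul, mul_zero, add_zero, zero_add, map_add]
    ring
  have hLw : σ * derivative (derivative w) + τ * derivative w + C (ν (n+1)) * w = 0 := by
    have hmain := ring_id σ (derivative σ) (C (2*s)) τ (C t) (π n) (derivative (π n))
      (derivative (derivative (π n))) (derivative (derivative (derivative (π n))))
      (C (ν n)) (C (ν (n+1))) (C cc) (C (n:ℝ)) (hODE n) hE' hA1C hXC hYC
    rw [hddw, hdw, hwdef]
    linear_combination hmain
  set W : Polynomial ℝ := w - C cnp1 * π (n+1) with hWdef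
  have hLW : σ * derivative (derivative W) + τ * derivative W + C (ν (n+1)) * W = 0 := by
    have h2 := hODE (n+1)
    rw [hWdef]
    simp only [derivative_sub, derivative_C_mul]
    linear_combination hLw - C cnp1 * h2
  -- ## degree bound on W
  have hdPdeg : (derivative (π n)).natDegree ≤ n - 1 := by
    have := natDegree_derivative_le (π n); rwa [hdeg n] at this
  have hσdPdeg : (σ * derivative (π n)).natDegree ≤ n + 1 :=
    le_trans natDegree_mul_le (by omega)
  have hτndeg : τn.natDegree ≤ 1 := by
    rw [hτneq]
    apply natDegree_linear_le
  have hτnPdeg : (τn * π n).natDegree ≤ n + 1 :=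
    le_trans natDegree_mul_le (by rw [hdeg n]; omega)
  have hc1 : (σ * derivative (π n)).coeff (n+1) = s * (n:ℝ) * k n := by
    obtain ⟨M, hM⟩ : ∃ M, n = M+1 := ⟨n-1, by omega⟩
    subst hM
    rw [hσeq, show M+1+1 = M+2 from rfl, coeff_quad_mul]
    simp only [coeff_derivative]
    rw [hπtop, hπhigh _ _ (by omega), hπhigh _ _ (by omega)]
    push_cast
    ring
  have hc2 : (τn * π n).coeff (n+1) = (t + 2*(n:ℝ)*s) * k n := by
    rw [hτneq, coeff_lin_mul, hπtop, hπhigh _ _ (by omega)]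
    ring
  have hWdeg : W.natDegree ≤ n := by
    rw [natDegree_le_iff_coeff_eq_zero]
    intro j hj
    rcases eq_or_lt_of_le (Nat.succ_le_of_lt hj) with hj' | hj'
    · rw [hWdef, hwdef, coeff_sub, coeff_sub, coeff_C_mul, coeff_C_mul, ← hj']
      rw [hc1, hc2, hπtop (n+1), hcnp1, hcc, hν2n', hνnn]
      field_simp [hn0, htn0, hk0 (n+1), show t + s*(n:ℝ)*2 ≠ 0 by convert htn0 using 1; ring]
      ring
    · rw [hWdef, hwdef, coeff_sub, coeff_sub, coeff_C_mul, coeff_C_mul]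
      rw [coeff_eq_zero_of_natDegree_lt (lt_of_le_of_lt hσdPdeg hj'),
        coeff_eq_zero_of_natDegree_lt (lt_of_le_of_lt hτnPdeg hj'),
        hπhigh (n+1) j (by omega)]
      ring
  -- ## coefficient n of W vanishes
  have hWn : W.coeff n = 0 := by
    have hei := eigen_coeff σ τ W s σ1 σ0 t τ0 (ν (n+1)) hσeq hτeq n hn hWdeg hLW
    have hfac : s * (n:ℝ) * ((n:ℝ) - 1) + t * (n:ℝ) + ν (n+1) = -(t + 2*(n:ℝ)*s) := by
      rw [hν]; push_cast; ring
    rw [hfac] at hei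
    rcases mul_eq_zero.mp hei with h4 | h4
    · exact absurd (neg_eq_zero.mp h4) htn0
    · exact h4
  have hWdeg' : W.natDegree ≤ n - 1 := by
    rw [natDegree_le_iff_coeff_eq_zero]
    intro j hj
    rcases eq_or_lt_of_le (show n ≤ j by omega) with hj' | hj'
    · rw [← hj']; exact hWn
    · exact coeff_eq_zero_of_natDegree_lt (lt_of_le_of_lt hWdeg hj')
  -- ## orthogonality of W to π_m, m < n
  have horthW : ∀ m, m < n → (∫ t' in a..b, ω t' * ((π m) * W).eval t') = 0 := by
    intro m hmn
    have hd0 : derivative (π 0) = 0 := by rw [hπ0]; simp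
    have hb1 : (τ * π m).natDegree ≤ m + 1 :=
      le_trans natDegree_mul_le (by rw [hτn1, hdeg m]; omega)
    have hb2 : (σ * derivative (π m)).natDegree ≤ m + 1 := by
      rcases Nat.eq_zero_or_pos m with rfl | hm0
      · rw [hd0, mul_zero]; simp
      · refine le_trans natDegree_mul_le ?_
        have := natDegree_derivative_le (π m); rw [hdeg m] at this
        omega
    have hdτπ' : (τ * π m + σ * derivative (π m)).natDegree ≤ m + 1 :=
      le_trans (natDegree_add_le _ _) (max_le hb1 hb2)
    have hdτπ : (τ * π m + σ * derivative (π m)).natDegree ≤ n :=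
      le_trans hdτπ' (by omega)
    have hτnmdeg' : (τn * π m).natDegree ≤ m + 1 :=
      le_trans natDegree_mul_le (by rw [hdeg m]; omega)
    have hτnmdeg : (τn * π m).natDegree ≤ n :=
      le_trans natDegree_mul_le (by rw [hdeg m]; omega)
    have hftc := keyFTC (π n * π m)
    have hsplit1 : τ*(π n*π m) + σ*derivative (π n*π m)
        = σ*derivative (π n)*π m + π n*(τ*π m + σ*derivative (π m)) := by
      rw [derivative_mul]; ring
    rw [hsplit1, int_add a b ω hω_int,
      int_eval a b ω hω_int π k h hπtop hπhigh hk0 hπ0 horth' n _ hdτπ] at hftc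
    have hWexp : π m * W = σ * derivative (π n) * π m
        + (C (-cc) * (π n * (τn * π m)) + C (-cnp1) * (π (n+1) * π m)) := by
      rw [hWdef, hwdef, map_neg, map_neg]; ring
    rw [hWexp, int_add a b ω hω_int, int_add a b ω hω_int, int_cmul, int_cmul,
      int_eval a b ω hω_int π k h hπtop hπhigh hk0 hπ0 horth' n _ hτnmdeg,
      horth' (n+1) m, if_neg (by omega)]
    have hval : (∫ t' in a..b, ω t' * (σ*derivative (π n)*π m).eval t')
        = -((τ * π m + σ * derivative (π m)).coeff n / k n * h n) := by linarith
    rw [hval, mul_zero, add_zero]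
    rcases Nat.eq_or_lt_of_le hmn with hm1 | hm1
    · -- m = n - 1
      have hA1 : (τ * π m).coeff n = t * k m := by
        rw [hτeq, ← hm1, coeff_lin_mul, hπtop, hπhigh _ _ (by omega)]
        ring
      have hA2 : (σ * derivative (π m)).coeff n = s*(m:ℝ)*k m := by
        rcases Nat.eq_zero_or_pos m with rfl | hm0
        · rw [hd0, mul_zero, coeff_zero]; push_cast; ring
        · obtain ⟨M, hM⟩ : ∃ M, m = M+1 := ⟨m-1, by omega⟩
          subst hM
          rw [show n = M+2 by omega, hσeq, coeff_quad_mul]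
          simp only [coeff_derivative]
          rw [hπtop, hπhigh _ _ (by omega), hπhigh _ _ (by omega)]
          push_cast
          ring
      have hB : (τn * π m).coeff n = (t + 2*(n:ℝ)*s) * k m := by
        rw [hτneq, ← hm1, coeff_lin_mul, hπtop, hπhigh _ _ (by omega)]
        ring
      rw [coeff_add, hA1, hA2, hB, hcc, hνnn]
      have hmr : (m:ℝ) = (n:ℝ) - 1 := by
        have h7 : ((m.succ : ℕ):ℝ) = (n:ℝ) := by exact_mod_cast congrArg (fun z : ℕ => (z:ℝ)) hm1
        push_cast at h7
        linarith
      rw [hmr]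
      field_simp [hn0, htn0, hk0 n, show t + s*(n:ℝ)*2 ≠ 0 by convert htn0 using 1; ring]
      ring
    · -- m + 1 < n
      have hA0 : (τ * π m + σ * derivative (π m)).coeff n = 0 :=
        coeff_eq_zero_of_natDegree_lt (lt_of_le_of_lt hdτπ' hm1)
      have hB0 : (τn * π m).coeff n = 0 :=
        coeff_eq_zero_of_natDegree_lt (lt_of_le_of_lt hτnmdeg' hm1)
      rw [hA0, hB0]
      simp
  -- ## conclude W = 0
  have hW0 : W = 0 := vanish a b ω hω_int π k h hπtop hπhigh hk0 hπ0 horth' hpos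
    (n-1) W hWdeg' (fun m hm => horthW m (by omega))
  -- ## final evaluation
  intro x
  have hEv := congrArg (Polynomial.eval x) hW0
  rw [hWdef, hwdef] at hEv
  simp only [eval_sub, eval_mul, eval_add, eval_C, eval_X, eval_zero, hτndef] at hEv
  have hRx := congrArg (Polynomial.eval x) hrec
  simp only [eval_add, eval_mul, eval_C, eval_X] at hRx
  have hPn1 : (π (n+1)).eval x = (k (n+1)/k n) * ((x - β)*(π n).eval x
      - (h n*k (n-1)/(k n*h (n-1)))*(π (n-1)).eval x) := by
    have h4 : k n / k (n+1) * (π (n+1)).eval x = (x - β)*(π n).eval x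
        - (h n*k (n-1)/(k n*h (n-1)))*(π (n-1)).eval x := by
      linear_combination -hRx
    rw [← h4]
    field_simp [hk0 n, hk0 (n+1)]
  rw [hPn1] at hEv
  have key2 : cnp1 * (k (n+1)/k n) = -(ν (2*n))/(2*(n:ℝ)) := by
    rw [hcnp1]
    field_simp [hn0, hk0 n, hk0 (n+1)]
  have h2n1 : (2*(n:ℝ)+1) ≠ 0 := by positivity
  have hEv' : σ.eval x * (derivative (π n)).eval x
      = cc*((τ.eval x + (n:ℝ)*(derivative σ).eval x)*(π n).eval x)
        + (-(ν (2*n))/(2*(n:ℝ))) * ((x - β)*(π n).eval x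
          - (h n*k (n-1)/(k n*h (n-1)))*(π (n-1)).eval x) := by
    linear_combination hEv + ((x - β)*(π n).eval x
      - (h n*k (n-1)/(k n*h (n-1)))*(π (n-1)).eval x) * key2
  rw [hcc] at hEv'
  rw [hν2n1']
  rw [show -((2*(n:ℝ)+1)*ν n/((n:ℝ)*(-(2*(n:ℝ)+1)*(t+2*(n:ℝ)*s))))
      = ν n/((n:ℝ)*(t+2*(n:ℝ)*s)) by
    rw [show (n:ℝ) * (-(2*(n:ℝ)+1)*(t+2*(n:ℝ)*s))
        = -((2*(n:ℝ)+1)*((n:ℝ)*(t+2*(n:ℝ)*s))) by ring, div_neg, neg_neg]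
    exact mul_div_mul_left _ _ h2n1]
  rw [show ν (2*n)*(-(2*(n:ℝ)+1)*(t+2*(n:ℝ)*s))/(2*ν n*(2*(n:ℝ)+1))
      = -(ν (2*n)*(t+2*(n:ℝ)*s))/(2*ν n) by
    rw [show ν (2*n)*(-(2*(n:ℝ)+1)*(t+2*(n:ℝ)*s))
        = (2*(n:ℝ)+1) * (-(ν (2*n)*(t+2*(n:ℝ)*s))) by ring,
      show 2*ν n*(2*(n:ℝ)+1) = (2*(n:ℝ)+1)*(2*ν n) by ring]
    exact mul_div_mul_left _ _ h2n1]
  have hhn1 : h (n-1) ≠ 0 := ne_of_gt (hpos (n-1))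
  field_simp [hn0, htn0, hνn, hk0 n, hhn1, show t + (n:ℝ)*2*s ≠ 0 by convert htn0 using 1; ring] at hEv' ⊢
  linear_combination hEv'
end

section
/- Let ω be a positive integrable weight on (a,b), σ a real polynomial of degree at most 2, τ a real polynomial of degree 1, with (σ(x)ω(x))' = τ(x)ω(x) on (a,b). Set ν_m := −m τ' − (m(m−1)/2) σ''. Let {π_n} be polynomials with deg π_n = n and leading coefficient k_n ≠ 0, each satisfying σ π_n'' + τ π_n' + ν_n π_n = 0, and orthogonal: ∫_a^b ω π_m π_n = h_n δ_{mn} with h_n > 0. If x_j is any root of π_{n+1}, then σ(x_j) π_{n+1}'(x_j) = ( ν_{2n+2} k_n h_{n+1} / ((2n+2) k_{n+1} h_n) ) · π_n(x_j). -/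
open MeasureTheory Polynomial Filter Topology Set



/-- A "linear functional" vanishing on a degree-graded family `e 0, …, e (N-1)`
vanishes on all polynomials of degree `< N`. -/
lemma aux_phi_zero (e : ℕ → Polynomial ℝ)
    (hdeg : ∀ i, (e i).natDegree = i)
    (hlead : ∀ i, (e i).coeff i ≠ 0)
    (Φ : Polynomial ℝ → ℝ)
    (hadd : ∀ p q, Φ (p + q) = Φ p + Φ q)
    (hsmul : ∀ (c : ℝ) (p : Polynomial ℝ), Φ (Polynomial.C c * p) = c * Φ p)
    (N : ℕ) (hΦe : ∀ i, i < N → Φ (e i) = 0) :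
    ∀ p : Polynomial ℝ, p.degree < (N : WithBot ℕ) → Φ p = 0 := by
  have hΦ0 : Φ 0 = 0 := by have := hadd 0 0; simp at this; linarith
  suffices H : ∀ d : ℕ, ∀ p : Polynomial ℝ, p.natDegree ≤ d →
      p.degree < (N : WithBot ℕ) → Φ p = 0 by
    intro p hp; exact H p.natDegree p le_rfl hp
  intro d
  induction d with
  | zero =>
    intro p hp hpN
    by_cases h0 : p = 0
    · simp [h0, hΦ0]
    · have hd0 : p.natDegree = 0 := le_antisymm hp (Nat.zero_le _)
      have hNpos : 0 < N := by
        rcases Nat.eq_zero_or_pos N with hN | hN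
        · exfalso
          rw [hN] at hpN
          rw [Polynomial.degree_eq_natDegree h0, hd0] at hpN
          simp at hpN
        · exact hN
      have he0 : e 0 = Polynomial.C ((e 0).coeff 0) :=
        Polynomial.eq_C_of_natDegree_eq_zero (hdeg 0)
      have hp' : p = Polynomial.C (p.coeff 0 / (e 0).coeff 0) * e 0 := by
        conv_rhs => rw [he0]
        rw [← Polynomial.C_mul]
        rw [Polynomial.eq_C_of_natDegree_eq_zero hd0]
        congr 1
        field_simp [hlead 0]
        simp
      rw [hp', hsmul, hΦe 0 hNpos, mul_zero]
  | succ d ih =>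
    intro p hp hpN
    by_cases h0 : p = 0
    · simp [h0, hΦ0]
    by_cases hd : p.natDegree ≤ d
    · exact ih p hd hpN
    push_neg at hd
    have hm : p.natDegree = d + 1 := le_antisymm hp hd
    set m := d + 1 with hmdef
    set c : ℝ := p.coeff m / (e m).coeff m with hc
    set q : Polynomial ℝ := p - Polynomial.C c * e m with hq
    have hqm : q.coeff m = 0 := by
      simp only [hq, Polynomial.coeff_sub, Polynomial.coeff_C_mul, hc]
      field_simp [hlead m]
      simp
    have hqnat : q.natDegree ≤ m := by
      apply le_trans (Polynomial.natDegree_sub_le _ _)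
      simp only [max_le_iff]
      refine ⟨le_of_eq hm, ?_⟩
      exact le_trans (Polynomial.natDegree_C_mul_le _ _) (le_of_eq (hdeg m))
    have hqd : q.natDegree ≤ d := by
      by_cases hq0 : q = 0
      · simp [hq0]
      rcases lt_or_eq_of_le hqnat with hlt | heq
      · omega
      · exfalso
        have : q.leadingCoeff = 0 := by
          rw [Polynomial.leadingCoeff, heq]; exact hqm
        exact hq0 (Polynomial.leadingCoeff_eq_zero.mp this)
    have hmN : m < N := by
      have := hpN
      rw [Polynomial.degree_eq_natDegree h0, hm] at this
      exact_mod_cast this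
    have hqN : q.degree < (N : WithBot ℕ) := by
      apply lt_of_le_of_lt (Polynomial.degree_le_natDegree)
      exact_mod_cast lt_of_le_of_lt hqd (by omega)
    have hsplit : p = q + Polynomial.C c * e m := by rw [hq]; ring
    rw [hsplit, hadd, hsmul, hΦe m hmN, mul_zero, add_zero]
    exact ih q hqd hqN


/-- Integration by parts with the Pearson relation: there exist endpoint limits
`La`, `Lb` of `σω` such that for every polynomial `p`,
`∫ ω·(τp + σp') = Lb p(b) − La p(a)`. -/
lemma aux_pearson (a b : ℝ) (hab : a < b) (ω : ℝ → ℝ)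
    (hω_int : ∀ p : Polynomial ℝ,
      IntervalIntegrable (fun t => ω t * p.eval t) volume a b)
    (σ τ : Polynomial ℝ)
    (hPearson : ∀ t ∈ Set.Ioo a b,
      HasDerivAt (fun s => σ.eval s * ω s) (τ.eval t * ω t) t) :
    ∃ La Lb : ℝ, ∀ p : Polynomial ℝ,
      (∫ t in a..b, ω t * (τ * p + σ * Polynomial.derivative p).eval t)
        = Lb * p.eval b - La * p.eval a := by
  set g : ℝ → ℝ := fun t => τ.eval t * ω t with hgdef
  have hg : IntervalIntegrable g volume a b := by
    simpa [hgdef, mul_comm] using hω_int τ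
  set c : ℝ := (a + b) / 2 with hcdef
  have hc : c ∈ Set.Ioo a b := ⟨by simp only [hcdef]; linarith, by simp only [hcdef]; linarith⟩
  have hcu : c ∈ Set.uIcc a b := by
    rw [Set.uIcc_of_le hab.le]; exact ⟨by linarith [hc.1], by linarith [hc.2]⟩
  have hprim : ContinuousOn (fun x => ∫ s in c..x, g s) (Set.uIcc a b) :=
    intervalIntegral.continuousOn_primitive_interval' hg hcu
  have hrep : ∀ t ∈ Set.Ioo a b,
      σ.eval t * ω t = σ.eval c * ω c + ∫ s in c..t, g s := by
    intro t ht
    have hsub : Set.uIcc c t ⊆ Set.Ioo a b :=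
      Set.ordConnected_Ioo.uIcc_subset hc ht
    have h1 : ∫ s in c..t, g s = σ.eval t * ω t - σ.eval c * ω c := by
      apply intervalIntegral.integral_eq_sub_of_hasDerivAt
      · intro x hx; exact hPearson x (hsub hx)
      · apply hg.mono_set
        apply Set.uIcc_subset_uIcc hcu
        rw [Set.uIcc_of_le hab.le]
        exact ⟨ht.1.le, ht.2.le⟩
    linarith
  set La : ℝ := σ.eval c * ω c + ∫ s in c..a, g s with hLadef
  set Lb : ℝ := σ.eval c * ω c + ∫ s in c..b, g s with hLbdef
  have hmemab : a ∈ Set.uIcc a b := Set.left_mem_uIcc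
  have hmembb : b ∈ Set.uIcc a b := Set.right_mem_uIcc
  have hLa : Tendsto (fun t => σ.eval t * ω t) (𝓝[>] a) (𝓝 La) := by
    rw [← nhdsWithin_Ioo_eq_nhdsGT hab]
    have h1 : Tendsto (fun x => σ.eval c * ω c + ∫ s in c..x, g s)
        (𝓝[Set.Ioo a b] a) (𝓝 La) := by
      apply Tendsto.const_add
      have := (hprim a hmemab).tendsto
      exact this.mono_left (nhdsWithin_mono _ (by
        rw [Set.uIcc_of_le hab.le]; exact Set.Ioo_subset_Icc_self))
    apply h1.congr'
    filter_upwards [self_mem_nhdsWithin] with t ht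
    exact (hrep t ht).symm
  have hLb : Tendsto (fun t => σ.eval t * ω t) (𝓝[<] b) (𝓝 Lb) := by
    rw [← nhdsWithin_Ioo_eq_nhdsLT hab]
    have h1 : Tendsto (fun x => σ.eval c * ω c + ∫ s in c..x, g s)
        (𝓝[Set.Ioo a b] b) (𝓝 Lb) := by
      apply Tendsto.const_add
      have := (hprim b hmembb).tendsto
      exact this.mono_left (nhdsWithin_mono _ (by
        rw [Set.uIcc_of_le hab.le]; exact Set.Ioo_subset_Icc_self))
    apply h1.congr'
    filter_upwards [self_mem_nhdsWithin] with t ht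
    exact (hrep t ht).symm
  refine ⟨La, Lb, fun p => ?_⟩
  apply intervalIntegral.integral_eq_sub_of_hasDerivAt_of_tendsto hab
  · intro x hx
    have hd := (hPearson x hx).mul (p.hasDerivAt x)
    convert hd using 1
    · rfl
    simp only [Polynomial.eval_add, Polynomial.eval_mul]
    ring
  · exact hω_int _
  · exact hLa.mul ((p.continuous.tendsto a).mono_left nhdsWithin_le_nhds)
  · exact hLb.mul ((p.continuous.tendsto b).mono_left nhdsWithin_le_nhds)


/-- **Lowering relation at the roots of `π_{n+1}`.**
For a classical family of hypergeometric type, at any root `x_j` of `π_{n+1}` we have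
`σ(x_j) π_{n+1}'(x_j) = (ν_{2n+2} k_n h_{n+1} / ((2n+2) k_{n+1} h_n)) π_n(x_j)`. -/
theorem lowering_at_roots_hypergeometric
    (a b : ℝ) (hab : a < b) (ω : ℝ → ℝ)
    (hω_pos : ∀ t ∈ Set.Ioo a b, 0 < ω t)
    (hω_int : ∀ p : Polynomial ℝ,
      IntervalIntegrable (fun t => ω t * p.eval t) volume a b)
    (σ τ : Polynomial ℝ) (hσ : σ.degree ≤ 2) (hτ : τ.degree = 1)
    (hPearson : ∀ t ∈ Set.Ioo a b,
      HasDerivAt (fun s => σ.eval s * ω s) (τ.eval t * ω t) t)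
    (ν : ℕ → ℝ)
    (hν : ∀ m : ℕ, ν m = -(m : ℝ) * τ.coeff 1
      - ((m : ℝ) * ((m : ℝ) - 1) / 2) * (2 * σ.coeff 2))
    (π : ℕ → Polynomial ℝ)
    (hdeg : ∀ i, (π i).natDegree = i)
    (k : ℕ → ℝ) (hk : ∀ i, k i = (π i).coeff i) (hk0 : ∀ i, k i ≠ 0)
    (hODE : ∀ i, σ * derivative (derivative (π i)) + τ * derivative (π i)
      + Polynomial.C (ν i) * π i = 0)
    (h : ℕ → ℝ) (hpos : ∀ i, 0 < h i)
    (horth : ∀ i l : ℕ,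
      (∫ t in a..b, ω t * (π i).eval t * (π l).eval t) = if i = l then h l else 0)
    (n : ℕ) (xj : ℝ) (hroot : (π (n + 1)).eval xj = 0) :
    σ.eval xj * (derivative (π (n + 1))).eval xj =
      (ν (2 * n + 2) * k n * h (n + 1) / ((2 * (n : ℝ) + 2) * k (n + 1) * h n))
        * (π n).eval xj := by
  classical
  have hklead : ∀ i, (π i).coeff i ≠ 0 := fun i => by rw [← hk i]; exact hk0 i
  -- the integral functional
  set Φ : Polynomial ℝ → ℝ := fun p => ∫ t in a..b, ω t * p.eval t with hΦdef
  have hΦadd : ∀ p q : Polynomial ℝ, Φ (p + q) = Φ p + Φ q := by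
    intro p q
    simp only [hΦdef, Polynomial.eval_add, mul_add]
    exact intervalIntegral.integral_add (hω_int p) (hω_int q)
  have hΦC : ∀ (c : ℝ) (p : Polynomial ℝ), Φ (Polynomial.C c * p) = c * Φ p := by
    intro c p
    simp only [hΦdef, Polynomial.eval_mul, Polynomial.eval_C]
    rw [← intervalIntegral.integral_const_mul]
    congr 1; funext t; ring
  have hΦneg : ∀ p : Polynomial ℝ, Φ (-p) = - Φ p := by
    intro p
    have := hΦC (-1) p
    simpa using this
  have hΦsub : ∀ p q : Polynomial ℝ, Φ (p - q) = Φ p - Φ q := by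
    intro p q
    rw [sub_eq_add_neg, hΦadd, hΦneg]; ring
  have hΦorth : ∀ i l : ℕ, Φ (π i * π l) = if i = l then h l else 0 := by
    intro i l
    rw [← horth i l]
    simp only [hΦdef, Polynomial.eval_mul]
    congr 1; funext t; ring
  -- orthogonality of `π i` to lower degrees
  have hO1 : ∀ i : ℕ, ∀ p : Polynomial ℝ, p.degree < (i : WithBot ℕ) →
      Φ (π i * p) = 0 := by
    intro i
    apply aux_phi_zero π hdeg hklead (fun p => Φ (π i * p))
    · intro p q; rw [mul_add]; exact hΦadd _ _
    · intro c p
      rw [show π i * (Polynomial.C c * p) = Polynomial.C c * (π i * p) by ring]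
      exact hΦC _ _
    · intro m hmi
      rw [hΦorth i m, if_neg (by omega)]
  -- Pearson boundary analysis
  obtain ⟨La, Lb, hAN⟩ := aux_pearson a b hab ω hω_int σ τ hPearson
  have hANΦ : ∀ p : Polynomial ℝ, Φ (τ * p + σ * Polynomial.derivative p)
      = Lb * p.eval b - La * p.eval a := fun p => hAN p
  -- the Wronskian-type polynomial identity
  have hP1 : ∀ i l : ℕ,
      τ * (derivative (π i) * π l - derivative (π l) * π i)
        + σ * derivative (derivative (π i) * π l - derivative (π l) * π i)
      = Polynomial.C (ν l - ν i) * (π i * π l) := by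
    intro i l
    simp only [derivative_sub, derivative_mul, map_sub]
    linear_combination (π l) * hODE i - (π i) * hODE l
  -- small degree facts
  have hπ0 : π 0 = Polynomial.C (k 0) := by
    rw [hk 0]; exact Polynomial.eq_C_of_natDegree_eq_zero (hdeg 0)
  have hd1 : derivative (π 1) = Polynomial.C (k 1) := by
    have h1 : π 1 = Polynomial.C ((π 1).coeff 1) * X + Polynomial.C ((π 1).coeff 0) :=
      Polynomial.eq_X_add_C_of_natDegree_le_one (le_of_eq (hdeg 1))
    rw [hk 1]
    conv_lhs => rw [h1]
    simp
  have hd2c : (derivative (π 2)).coeff 1 = k 2 * 2 := by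
    rw [Polynomial.coeff_derivative, hk 2]; norm_num
  have hd2deg : (derivative (π 2)).natDegree ≤ 1 := by
    have := Polynomial.natDegree_derivative_le (π 2)
    rw [hdeg 2] at this; omega
  have hd2 : derivative (π 2) = Polynomial.C ((derivative (π 2)).coeff 1) * X
      + Polynomial.C ((derivative (π 2)).coeff 0) :=
    Polynomial.eq_X_add_C_of_natDegree_le_one hd2deg
  -- boundary terms vanish
  have hW10 := hANΦ (derivative (π 1) * π 0 - derivative (π 0) * π 1)
  rw [hP1 1 0, hΦC, hΦorth 1 0, if_neg (by omega), mul_zero] at hW10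
  rw [hd1, hπ0] at hW10
  simp only [Polynomial.eval_sub, Polynomial.eval_mul, Polynomial.eval_C,
    Polynomial.derivative_C, Polynomial.eval_zero, zero_mul, sub_zero] at hW10
  have hLab : La = Lb := by
    have h1 : (Lb - La) * (k 1 * k 0) = 0 := by linear_combination -hW10
    rcases mul_eq_zero.mp h1 with h2 | h2
    · linarith [sub_eq_zero.mp h2]
    · exact absurd h2 (mul_ne_zero (hk0 1) (hk0 0))
  have hW20 := hANΦ (derivative (π 2) * π 0 - derivative (π 0) * π 2)
  rw [hP1 2 0, hΦC, hΦorth 2 0, if_neg (by omega), mul_zero] at hW20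
  rw [hπ0, hLab] at hW20
  simp only [Polynomial.eval_sub, Polynomial.eval_mul, Polynomial.eval_C,
    Polynomial.derivative_C, Polynomial.eval_zero, zero_mul, sub_zero] at hW20
  have hevb : (derivative (π 2)).eval b = k 2 * 2 * b + (derivative (π 2)).coeff 0 := by
    conv_lhs => rw [hd2]
    simp [hd2c]
  have heva : (derivative (π 2)).eval a = k 2 * 2 * a + (derivative (π 2)).coeff 0 := by
    conv_lhs => rw [hd2]
    simp [hd2c]
  rw [hevb, heva] at hW20
  have hLb0 : Lb = 0 := by
    have h1 : Lb * (k 0 * (k 2 * 2) * (b - a)) = 0 := by linear_combination -hW20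
    rcases mul_eq_zero.mp h1 with h2 | h2
    · exact h2
    · exfalso
      have : k 0 * (k 2 * 2) * (b - a) ≠ 0 :=
        mul_ne_zero (mul_ne_zero (hk0 0) (mul_ne_zero (hk0 2) two_ne_zero)) (by linarith)
      exact this h2
  have hLa0 : La = 0 := by rw [hLab, hLb0]
  have hB : ∀ p : Polynomial ℝ, Φ (τ * p + σ * Polynomial.derivative p) = 0 := by
    intro p; rw [hANΦ p, hLb0, hLa0]; ring
  -- the key integration-by-parts identity
  have hI1 : ∀ (i : ℕ) (q : Polynomial ℝ),
      Φ (σ * (derivative (π i) * derivative q)) = ν i * Φ (π i * q) := by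
    intro i q
    have hident : τ * (derivative (π i) * q) + σ * derivative (derivative (π i) * q)
        = Polynomial.C (ν i) * -(π i * q) + σ * (derivative (π i) * derivative q) := by
      simp only [derivative_mul]
      linear_combination q * hODE i
    have h0 := hB (derivative (π i) * q)
    rw [hident, hΦadd, hΦC, hΦneg] at h0
    linear_combination h0
  -- degrees of derivatives
  have hdcoeff : ∀ m : ℕ, (derivative (π (m+1))).coeff m = k (m+1) * ((m : ℝ) + 1) := by
    intro m
    rw [Polynomial.coeff_derivative, hk (m+1)]
    try push_cast
    try ring
  have hdlead : ∀ m : ℕ, (derivative (π (m+1))).coeff m ≠ 0 := by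
    intro m
    rw [hdcoeff m]
    exact mul_ne_zero (hk0 _) (by positivity)
  have hdd : ∀ m : ℕ, (derivative (π (m+1))).natDegree = m := by
    intro m
    have hle : (derivative (π (m+1))).natDegree ≤ m := by
      have := Polynomial.natDegree_derivative_le (π (m+1))
      rw [hdeg (m+1)] at this; omega
    exact le_antisymm hle (Polynomial.le_natDegree_of_ne_zero (hdlead m))
  -- orthogonality of σ π_{n+1}' to polynomials of degree < n
  have hI2 : ∀ p : Polynomial ℝ, p.degree < (n : WithBot ℕ) →
      Φ (σ * derivative (π (n+1)) * p) = 0 := by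
    apply aux_phi_zero (fun m => derivative (π (m+1))) hdd hdlead
      (fun p => Φ (σ * derivative (π (n+1)) * p))
    · intro p q; rw [mul_add]; exact hΦadd _ _
    · intro c p
      rw [show σ * derivative (π (n+1)) * (Polynomial.C c * p)
        = Polynomial.C c * (σ * derivative (π (n+1)) * p) by ring]
      exact hΦC _ _
    · intro m hmn
      have h1 := hI1 (n+1) (π (m+1))
      rw [hΦorth (n+1) (m+1), if_neg (by omega), mul_zero] at h1
      rw [show σ * derivative (π (n+1)) * derivative (π (m+1))
        = σ * (derivative (π (n+1)) * derivative (π (m+1))) by ring]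
      exact h1
  -- value of ∫ ω σ (π_{n+1}')²
  have hself : Φ (σ * (derivative (π (n+1)) * derivative (π (n+1))))
      = ν (n+1) * h (n+1) := by
    rw [hI1 (n+1) (π (n+1)), hΦorth (n+1) (n+1), if_pos rfl]
  -- value of ∫ ω σ π_{n+1}' π_n
  set cρ : ℝ := k n / (((n : ℝ) + 1) * k (n+1)) with hcρ
  set ρ : Polynomial ℝ := π n - Polynomial.C cρ * derivative (π (n+1)) with hρdef
  have hρdeg : ρ.degree < (n : WithBot ℕ) := by
    rw [Polynomial.degree_lt_iff_coeff_zero]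
    intro m hm
    rcases eq_or_lt_of_le hm with hm1 | hm1
    · rw [hρdef, Polynomial.coeff_sub, Polynomial.coeff_C_mul, ← hm1, ← hk n, hdcoeff n,
        hcρ]
      field_simp [hk0 (n+1)]
      try ring
    · rw [hρdef, Polynomial.coeff_sub, Polynomial.coeff_C_mul,
        Polynomial.coeff_eq_zero_of_natDegree_lt (by rw [hdeg n]; omega),
        Polynomial.coeff_eq_zero_of_natDegree_lt (by rw [hdd n]; omega)]
      ring
  have hI3 : Φ (σ * derivative (π (n+1)) * π n) = cρ * (ν (n+1) * h (n+1)) := by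
    have hsplit : σ * derivative (π (n+1)) * π n
        = Polynomial.C cρ * (σ * (derivative (π (n+1)) * derivative (π (n+1))))
          + σ * derivative (π (n+1)) * ρ := by
      rw [hρdef]; ring
    rw [hsplit, hΦadd, hΦC, hself, hI2 ρ hρdeg, add_zero]
  -- ∫ ω π_{n+1} X π_n
  have hXn : Φ (π (n+1) * (X * π n)) = k n / k (n+1) * h (n+1) := by
    set ρ₂ : Polynomial ℝ := X * π n - Polynomial.C (k n / k (n+1)) * π (n+1) with hρ₂def
    have hρ₂deg : ρ₂.degree < ((n+1 : ℕ) : WithBot ℕ) := by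
      rw [Polynomial.degree_lt_iff_coeff_zero]
      intro m hm
      rcases eq_or_lt_of_le hm with hm1 | hm1
      · rw [hρ₂def, Polynomial.coeff_sub, Polynomial.coeff_C_mul, ← hm1,
          Polynomial.coeff_X_mul, ← hk n, ← hk (n+1)]
        field_simp [hk0 (n+1)]
        try ring
      · rw [hρ₂def, Polynomial.coeff_sub, Polynomial.coeff_C_mul,
          Polynomial.coeff_eq_zero_of_natDegree_lt
            (lt_of_le_of_lt (Polynomial.natDegree_mul_le)
              (by rw [Polynomial.natDegree_X, hdeg n]; omega)),
          Polynomial.coeff_eq_zero_of_natDegree_lt (by rw [hdeg (n+1)]; omega)]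
        ring
    have hsplit : π (n+1) * (X * π n)
        = Polynomial.C (k n / k (n+1)) * (π (n+1) * π (n+1)) + π (n+1) * ρ₂ := by
      rw [hρ₂def]; ring
    rw [hsplit, hΦadd, hΦC, hΦorth (n+1) (n+1), if_pos rfl, hO1 (n+1) ρ₂ hρ₂deg, add_zero]
  -- leading coefficients of S = σ π_{n+1}'
  set S : Polynomial ℝ := σ * derivative (π (n+1)) with hSdef
  have hσnat : σ.natDegree ≤ 2 := Polynomial.natDegree_le_iff_degree_le.mpr hσ
  have hSnat : S.natDegree ≤ n + 2 := by
    apply le_trans Polynomial.natDegree_mul_le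
    rw [hdd n]
    omega
  have hStop : S.coeff (n+2) = σ.coeff 2 * (k (n+1) * ((n : ℝ) + 1)) := by
    rw [hSdef, Polynomial.coeff_mul]
    rw [Finset.sum_eq_single (2, n)]
    · rw [hdcoeff n]
    · rintro ⟨i, j⟩ hmem hne
      simp only [Finset.HasAntidiagonal.mem_antidiagonal] at hmem
      by_cases hi : 2 < i
      · rw [Polynomial.coeff_eq_zero_of_natDegree_lt (lt_of_le_of_lt hσnat hi), zero_mul]
      · have hj : n < j := by
          rcases Nat.lt_or_ge i 2 with h2 | h2
          · omega
          · exfalso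
            apply hne
            have h2i : i = 2 := by omega
            have h2j : j = n := by omega
            rw [h2i, h2j]
        have hz : (derivative (π (n+1))).coeff j = 0 :=
          Polynomial.coeff_eq_zero_of_natDegree_lt (by rw [hdd n]; exact hj)
        rw [hz, mul_zero]
    · intro habs
      exfalso
      exact habs (by rw [Finset.HasAntidiagonal.mem_antidiagonal]; omega)
  -- construct the structure relation
  set α : ℝ := σ.coeff 2 * ((n : ℝ) + 1) with hα
  set β : ℝ := (S.coeff (n+1) - α * (π (n+1)).coeff n) / k (n+1) with hβ
  set γ : ℝ := ν (2 * n + 2) * k n * h (n + 1) / ((2 * (n : ℝ) + 2) * k (n + 1) * h n)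
    with hγ
  set q : Polynomial ℝ := Polynomial.C α * X + Polynomial.C β with hqdef
  have hqπ : ∀ m : ℕ, (q * π (n+1)).coeff m
      = α * (X * π (n+1)).coeff m + β * (π (n+1)).coeff m := by
    intro m
    rw [hqdef, add_mul, Polynomial.coeff_add, mul_assoc,
      Polynomial.coeff_C_mul, Polynomial.coeff_C_mul]
  have hqπnat : (q * π (n+1)).natDegree ≤ n + 2 := by
    apply le_trans Polynomial.natDegree_mul_le
    have hq1 : q.natDegree ≤ 1 := by
      apply le_trans (Polynomial.natDegree_add_le _ _)
      simp only [max_le_iff]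
      constructor
      · exact le_trans (Polynomial.natDegree_C_mul_le _ _)
          (le_of_eq Polynomial.natDegree_X)
      · simp [Polynomial.natDegree_C]
    rw [hdeg (n+1)]
    omega
  set w : Polynomial ℝ := S - q * π (n+1) with hwdef
  have hw2 : w.coeff (n+2) = 0 := by
    have hz : (π (n+1)).coeff (n+2) = 0 :=
      Polynomial.coeff_eq_zero_of_natDegree_lt (by rw [hdeg (n+1)]; omega)
    rw [hwdef, Polynomial.coeff_sub, hStop, hqπ (n+2), Polynomial.coeff_X_mul,
      ← hk (n+1), hz, hα]
    ring
  have hw1 : w.coeff (n+1) = 0 := by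
    rw [hwdef, Polynomial.coeff_sub, hqπ (n+1), Polynomial.coeff_X_mul, ← hk (n+1), hβ]
    field_simp [hk0 (n+1)]
    try ring
  have hwdeg : w.degree < ((n+1 : ℕ) : WithBot ℕ) := by
    rw [Polynomial.degree_lt_iff_coeff_zero]
    intro m hm
    by_cases h1 : m = n+1
    · rw [h1]; exact hw1
    by_cases h2 : m = n+2
    · rw [h2]; exact hw2
    have hm3 : n+2 < m := by omega
    rw [hwdef, Polynomial.coeff_sub,
      Polynomial.coeff_eq_zero_of_natDegree_lt (lt_of_le_of_lt hSnat hm3),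
      Polynomial.coeff_eq_zero_of_natDegree_lt (lt_of_le_of_lt hqπnat hm3)]
    ring
  set u : Polynomial ℝ := w - Polynomial.C γ * π n with hudef
  have hudeg : u.degree < ((n+1 : ℕ) : WithBot ℕ) := by
    apply lt_of_le_of_lt (Polynomial.degree_sub_le _ _)
    rw [max_lt_iff]
    refine ⟨hwdeg, ?_⟩
    apply lt_of_le_of_lt Polynomial.degree_le_natDegree
    have : (Polynomial.C γ * π n).natDegree ≤ n :=
      le_trans (Polynomial.natDegree_C_mul_le _ _) (le_of_eq (hdeg n))
    exact_mod_cast lt_of_le_of_lt this (by omega)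
  -- the crucial arithmetic identity
  have harith : γ * h n = cρ * (ν (n+1) * h (n+1)) - α * (k n / k (n+1) * h (n+1)) := by
    rw [hγ, hcρ, hα, hν (2*n+2), hν (n+1)]
    have h1 : h n ≠ 0 := ne_of_gt (hpos n)
    have h2 : k (n+1) ≠ 0 := hk0 (n+1)
    have h3 : ((n : ℝ) + 1) ≠ 0 := by positivity
    have h4 : (2 * (n : ℝ) + 2) ≠ 0 := by positivity
    push_cast
    field_simp
    ring
  -- u is orthogonal to π_0,…,π_n
  have hum : ∀ m : ℕ, m ≤ n → Φ (u * π m) = 0 := by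
    intro m hm
    have hsplit : u * π m
        = S * π m - (Polynomial.C α * (π (n+1) * (X * π m))
            + Polynomial.C β * (π (n+1) * π m))
          - Polynomial.C γ * (π n * π m) := by
      rw [hudef, hwdef, hqdef]; ring
    rw [hsplit, hΦsub, hΦsub, hΦadd, hΦC, hΦC, hΦC,
      hΦorth (n+1) m, if_neg (by omega)]
    rcases eq_or_lt_of_le hm with hmn | hmn
    · -- m = n
      subst hmn
      rw [hXn, hΦorth m m, if_pos rfl]
      rw [show S * π m = σ * derivative (π (m+1)) * π m from by rw [hSdef]]
      rw [hI3]
      linear_combination -harith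
    · -- m < n
      rw [hΦorth n m, if_neg (by omega)]
      rw [show S * π m = σ * derivative (π (n+1)) * π m from by rw [hSdef]]
      rw [hI2 (π m) (by
        rw [Polynomial.degree_eq_natDegree (fun h0 => hklead m (by simp [h0])), hdeg m]
        exact_mod_cast hmn)]
      have hXm : Φ (π (n+1) * (X * π m)) = 0 := by
        apply hO1
        apply lt_of_le_of_lt Polynomial.degree_le_natDegree
        have : (X * π m).natDegree ≤ 1 + m := by
          apply le_trans Polynomial.natDegree_mul_le
          rw [Polynomial.natDegree_X, hdeg m]
        exact_mod_cast lt_of_le_of_lt this (by omega)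
      rw [hXm]
      ring
  -- hence u = 0
  have hu0 : u = 0 := by
    by_contra hne
    have hdu : u.natDegree ≤ n := by
      have h1 := hudeg
      rw [Polynomial.degree_eq_natDegree hne] at h1
      have : u.natDegree < n + 1 := by exact_mod_cast h1
      omega
    set d := u.natDegree with hddef
    set c : ℝ := u.coeff d / k d with hcdef2
    set q₂ : Polynomial ℝ := u - Polynomial.C c * π d with hq₂def
    have hq₂deg : q₂.degree < (d : WithBot ℕ) := by
      rw [Polynomial.degree_lt_iff_coeff_zero]
      intro m hm
      rcases eq_or_lt_of_le hm with hm1 | hm1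
      · rw [hq₂def, Polynomial.coeff_sub, Polynomial.coeff_C_mul, ← hm1, ← hk d, hcdef2]
        field_simp [hk0 d]
        try ring
      · rw [hq₂def, Polynomial.coeff_sub,
          Polynomial.coeff_eq_zero_of_natDegree_lt (by omega),
          Polynomial.coeff_C_mul,
          Polynomial.coeff_eq_zero_of_natDegree_lt (by rw [hdeg d]; omega)]
        ring
    have h1 : Φ (π d * u) = c * h d := by
      rw [show π d * u = π d * q₂ + Polynomial.C c * (π d * π d) from by
        rw [hq₂def]; ring]
      rw [hΦadd, hΦC, hO1 d q₂ hq₂deg, hΦorth d d, if_pos rfl, zero_add]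
    have h2 : Φ (π d * u) = 0 := by
      rw [mul_comm]; exact hum d hdu
    have h3 : c = 0 := by
      have := h1.symm.trans h2
      rcases mul_eq_zero.mp this with h4 | h4
      · exact h4
      · exact absurd h4 (ne_of_gt (hpos d))
    have h4 : u.coeff d = 0 := by
      rw [hcdef2] at h3
      exact (div_eq_zero_iff.mp h3).resolve_right (hk0 d)
    apply hne
    apply Polynomial.leadingCoeff_eq_zero.mp
    rw [Polynomial.leadingCoeff, ← hddef]
    exact h4
  -- conclude
  have hstruct : S = q * π (n+1) + Polynomial.C γ * π n := by
    have h1 : w - Polynomial.C γ * π n = 0 := by rw [← hudef]; exact hu0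
    rw [hwdef] at h1
    linear_combination h1
  have heval := congrArg (Polynomial.eval xj) hstruct
  rw [hSdef] at heval
  simp only [Polynomial.eval_add, Polynomial.eval_mul, Polynomial.eval_C, hroot,
    mul_zero, zero_add] at heval
  rw [hγ] at heval
  exact heval
end

section
/- Let ω be a positive integrable weight on (a,b), σ a real polynomial of degree at most 2, τ a real polynomial of degree 1, with (σ(x)ω(x))' = τ(x)ω(x) on (a,b). Set ν_m := −m τ' − (m(m−1)/2) σ''. Let {π_n} be polynomials with deg π_n = n and leading coefficient k_n ≠ 0, each satisfying σ π_n'' + τ π_n' + ν_n π_n = 0, and orthogonal: ∫_a^b ω π_m π_n = h_n δ_{mn} with h_n > 0. Let x_0 < ⋯ < x_n be the n+1 roots of π_{n+1}, assumed real, distinct and in (a,b); let λ_j := 1/∏_{k≠j}(x_j − x_k) and w_j := ∫_a^b ω(x) ∏_{k≠j}((x − x_k)/(x_j − x_k)) dx. Then for each j = 0,…,n: λ_j² · ν_{2n+2} · h_{n+1} = k_{n+1}² (2n+2) σ(x_j) w_j, and the sign of λ_j is (−1)^{n+j}. -/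
open MeasureTheory Polynomial Finset

lemma J_vanish (J : Polynomial ℝ → ℝ)
    (hadd : ∀ q r : Polynomial ℝ, J (q + r) = J q + J r)
    (hsmul : ∀ (c : ℝ) (q : Polynomial ℝ), J (Polynomial.C c * q) = c * J q)
    (N : ℕ) (f : ℕ → Polynomial ℝ)
    (hdeg : ∀ i, i ≤ N → (f i).natDegree ≤ i)
    (hlc : ∀ i, i ≤ N → (f i).coeff i ≠ 0)
    (hJ : ∀ i, i ≤ N → J (f i) = 0) :
    ∀ q : Polynomial ℝ, q.natDegree ≤ N → J q = 0 := by
  suffices H : ∀ d, ∀ q : Polynomial ℝ, q.natDegree ≤ N → q.natDegree ≤ d → J q = 0 by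
    exact fun q hq => H q.natDegree q hq le_rfl
  have key : ∀ (q : Polynomial ℝ), q.natDegree ≤ N →
      (q - Polynomial.C (q.coeff q.natDegree / (f q.natDegree).coeff q.natDegree)
        * f q.natDegree).natDegree ≤ q.natDegree ∧
      (q - Polynomial.C (q.coeff q.natDegree / (f q.natDegree).coeff q.natDegree)
        * f q.natDegree).coeff q.natDegree = 0 ∧
      J q = J (q - Polynomial.C (q.coeff q.natDegree / (f q.natDegree).coeff q.natDegree)
        * f q.natDegree) := by
    intro q hq
    set m := q.natDegree with hm
    set c := q.coeff m / (f m).coeff m with hc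
    refine ⟨?_, ?_, ?_⟩
    · refine (natDegree_sub_le _ _).trans ?_
      simp only [max_le_iff]
      exact ⟨le_rfl, (natDegree_C_mul_le _ _).trans (hdeg m hq)⟩
    · rw [coeff_sub, coeff_C_mul, hc, div_mul_cancel₀ _ (hlc m hq), sub_self]
    · conv_lhs => rw [show q = (q - Polynomial.C c * f m) + Polynomial.C c * f m by ring]
      rw [hadd, hsmul, hJ m hq, mul_zero, add_zero]
  intro d
  induction d with
  | zero =>
    intro q hq hq0
    obtain ⟨h1, h2, h3⟩ := key q hq
    rw [h3]
    have hd0 : q.natDegree = 0 := Nat.le_zero.mp hq0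
    set r := q - Polynomial.C (q.coeff q.natDegree / (f q.natDegree).coeff q.natDegree)
      * f q.natDegree with hr
    have : r = Polynomial.C (r.coeff 0) := eq_C_of_natDegree_le_zero (h1.trans hq0)
    rw [hd0] at h2
    rw [this, h2, map_zero]
    have := hsmul 0 1
    simpa using this
  | succ d ih =>
    intro q hq hqd
    rcases Nat.lt_or_ge q.natDegree (d+1) with hlt | hge
    · exact ih q hq (Nat.lt_succ_iff.mp hlt)
    · have hdeq : q.natDegree = d + 1 := le_antisymm hqd hge
      obtain ⟨h1, h2, h3⟩ := key q hq
      rw [h3]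
      set r := q - Polynomial.C (q.coeff q.natDegree / (f q.natDegree).coeff q.natDegree)
        * f q.natDegree with hr
      have hrd : r.natDegree ≤ d := by
        rcases Nat.lt_or_ge r.natDegree (d+1) with hlt | hge'
        · omega
        · exfalso
          have : r.natDegree = d + 1 := le_antisymm (h1.trans hqd) hge'
          have hlc' : r.coeff r.natDegree ≠ 0 := by
            intro hcon
            have : r = 0 := leadingCoeff_eq_zero.mp hcon
            rw [this] at hge'
            simp at hge'
          rw [this] at hlc'
          rw [hdeq] at h2
          exact hlc' h2
      exact ih r (hrd.trans (by omega)) hrd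


lemma core (J : Polynomial ℝ → ℝ)
    (hadd : ∀ q r : Polynomial ℝ, J (q + r) = J q + J r)
    (hsmul : ∀ (c : ℝ) (q : Polynomial ℝ), J (Polynomial.C c * q) = c * J q)
    (σ τ : Polynomial ℝ) (hσ2 : σ.natDegree ≤ 2) (hτ1 : τ.natDegree ≤ 1)
    (n : ℕ) (K : ℝ) (hK : K ≠ 0) (p g : Polynomial ℝ) (x0 : ℝ)
    (hpg : p = (Polynomial.X - Polynomial.C x0) * g)
    (hgn : g.natDegree ≤ n) (hgK : g.coeff n = K)
    (H : ℝ) (hpp : J (p * p) = H)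
    (horthp : ∀ q : Polynomial ℝ, q.natDegree ≤ n → J (p * q) = 0)
    (hE : ∀ q : Polynomial ℝ, J (τ * q + σ * Polynomial.derivative q) = 0) :
    σ.eval x0 * g.eval x0 * J g
      = -(τ.coeff 1 + n * σ.coeff 2) * H - ((n : ℝ) + 1) * σ.coeff 2 * H := by
  have Jsub : ∀ q r : Polynomial ℝ, J (q - r) = J q - J r := by
    intro q r
    have h1 : q - r = q + Polynomial.C (-1) * r := by
      rw [map_neg, map_one]; ring
    rw [h1, hadd, hsmul]; ring
  -- degree facts about p
  have hpdeg : p.natDegree ≤ n + 1 := by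
    rw [hpg]
    refine natDegree_mul_le.trans ?_
    have : (Polynomial.X - Polynomial.C x0).natDegree = 1 := natDegree_X_sub_C x0
    omega
  have hpK : p.coeff (n + 1) = K := by
    rw [hpg, sub_mul, coeff_sub, coeff_X_mul, coeff_C_mul,
        coeff_eq_zero_of_natDegree_lt (lt_of_le_of_lt hgn (Nat.lt_succ_self n)), mul_zero,
        sub_zero, hgK]
  have hp'deg : (Polynomial.derivative p).natDegree ≤ n := by
    refine (natDegree_derivative_le p).trans ?_
    omega
  have hp'K : (Polynomial.derivative p).coeff n = K * ((n : ℝ) + 1) := by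
    rw [coeff_derivative, hpK]
  have hpx0 : p.eval x0 = 0 := by simp [hpg]
  have hp'x0 : (Polynomial.derivative p).eval x0 = g.eval x0 := by
    simp [hpg, derivative_mul]
  -- evaluation lemma
  have evalg : ∀ u : Polynomial ℝ, u.natDegree ≤ n + 1 → J (g * u) = u.eval x0 * J g := by
    intro u hu
    have hdvd : (Polynomial.X - Polynomial.C x0) ∣ (u - Polynomial.C (u.eval x0)) := by
      rw [dvd_iff_isRoot]
      simp [IsRoot]
    obtain ⟨s, hs⟩ := hdvd
    have hsdeg : s.natDegree ≤ n := by
      by_cases hs0 : s = 0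
      · simp [hs0]
      · have h1 : (u - Polynomial.C (u.eval x0)).natDegree ≤ n + 1 := by
          refine (natDegree_sub_le _ _).trans ?_
          simp [hu]
        rw [hs, natDegree_mul (X_sub_C_ne_zero x0) hs0, natDegree_X_sub_C] at h1
        omega
    have hgu : g * u = Polynomial.C (u.eval x0) * g + p * s := by
      rw [hpg]; linear_combination g * hs
    rw [hgu, hadd, hsmul, horthp s hsdeg, add_zero]
  -- u := τ g + σ g'
  set u : Polynomial ℝ := τ * g + σ * Polynomial.derivative g with hu_def
  have hg'0 : g.natDegree = 0 → Polynomial.derivative g = 0 := by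
    intro h0
    rw [eq_C_of_natDegree_eq_zero h0]
    simp
  have hudeg : u.natDegree ≤ n + 1 := by
    refine (natDegree_add_le _ _).trans ?_
    simp only [max_le_iff]
    constructor
    · exact natDegree_mul_le.trans (by omega)
    · rcases Nat.eq_zero_or_pos g.natDegree with h0 | h0
      · rw [hg'0 h0]; simp
      · refine natDegree_mul_le.trans ?_
        have := natDegree_derivative_le g
        omega
  have hutop : u.coeff (n + 1) = τ.coeff 1 * K + σ.coeff 2 * ((n : ℝ) * K) := by
    rw [coeff_add]
    have h1 : (τ * g).coeff (n + 1) = τ.coeff 1 * K := by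
      have := coeff_mul_add_eq_of_natDegree_le hτ1 hgn
      rw [show 1 + n = n + 1 by ring] at this
      rw [this, hgK]
    rw [h1]
    congr 1
    rcases n with _ | m
    · -- n = 0 : g constant
      have h0 : g.natDegree = 0 := Nat.le_zero.mp hgn
      rw [hg'0 h0]
      simp
    · have hg' : (Polynomial.derivative g).natDegree ≤ m := by
        refine (natDegree_derivative_le g).trans ?_
        omega
      have := coeff_mul_add_eq_of_natDegree_le hσ2 hg'
      rw [show 2 + m = m + 1 + 1 by ring] at this
      rw [this, coeff_derivative, hgK]
      push_cast; ring
  -- J (p * u) = c H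
  have hpu : J (p * u) = (τ.coeff 1 + (n : ℝ) * σ.coeff 2) * H := by
    set c : ℝ := τ.coeff 1 + (n : ℝ) * σ.coeff 2 with hc
    have hr : (u - Polynomial.C c * p).natDegree ≤ n := by
      rw [natDegree_le_iff_coeff_eq_zero]
      intro m hm
      rcases Nat.lt_or_ge m (n + 2) with h1 | h1
      · have : m = n + 1 := by omega
        subst this
        rw [coeff_sub, coeff_C_mul, hutop, hpK, hc]
        ring
      · rw [coeff_sub, coeff_C_mul,
          coeff_eq_zero_of_natDegree_lt (lt_of_le_of_lt hudeg (by omega)),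
          coeff_eq_zero_of_natDegree_lt (lt_of_le_of_lt hpdeg (by omega))]
        ring
    have hsplit : p * u = p * (u - Polynomial.C c * p) + Polynomial.C c * (p * p) := by
      ring
    rw [hsplit, hadd, hsmul, horthp _ hr, hpp, zero_add, hc]
  -- J (σ p' g) = -c H
  have hEpg : J (σ * Polynomial.derivative p * g)
      = -((τ.coeff 1 + (n : ℝ) * σ.coeff 2) * H) := by
    have hid : τ * (p * g) + σ * Polynomial.derivative (p * g)
        = σ * Polynomial.derivative p * g + p * u := by
      rw [derivative_mul, hu_def]; ring
    have := hE (p * g)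
    rw [hid, hadd, hpu] at this
    linarith
  -- J (p * (X * g)) = H
  have hXg : J (p * (Polynomial.X * g)) = H := by
    have hv : (Polynomial.X * g - p).natDegree ≤ n := by
      rw [natDegree_le_iff_coeff_eq_zero]
      intro m hm
      rcases Nat.lt_or_ge m (n + 2) with h1 | h1
      · have : m = n + 1 := by omega
        subst this
        rw [coeff_sub, coeff_X_mul, hgK, hpK, sub_self]
      · obtain ⟨m', rfl⟩ : ∃ m', m = m' + 1 := ⟨m - 1, by omega⟩
        rw [coeff_sub, coeff_X_mul,
          coeff_eq_zero_of_natDegree_lt (lt_of_le_of_lt hgn (by omega)),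
          coeff_eq_zero_of_natDegree_lt (lt_of_le_of_lt hpdeg (by omega)), sub_self]
    have hsplit : p * (Polynomial.X * g) = p * (Polynomial.X * g - p) + p * p := by ring
    rw [hsplit, hadd, horthp _ hv, zero_add, hpp]
  -- R
  set R : Polynomial ℝ := σ * Polynomial.derivative p
    - Polynomial.C (((n : ℝ) + 1) * σ.coeff 2) * (Polynomial.X * p) with hR_def
  have hRdeg : R.natDegree ≤ n + 1 := by
    rw [natDegree_le_iff_coeff_eq_zero]
    intro m hm
    rcases Nat.lt_or_ge m (n + 3) with h1 | h1
    · have : m = n + 2 := by omega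
      subst this
      rw [hR_def, coeff_sub, coeff_C_mul, coeff_X_mul, hpK]
      have := coeff_mul_add_eq_of_natDegree_le hσ2 hp'deg
      rw [show 2 + n = n + 2 by ring] at this
      rw [this, hp'K]
      ring
    · rw [hR_def, coeff_sub, coeff_C_mul]
      have h2 : (σ * Polynomial.derivative p).coeff m = 0 := by
        refine coeff_eq_zero_of_natDegree_lt (lt_of_le_of_lt natDegree_mul_le ?_)
        omega
      have h3 : (Polynomial.X * p).coeff m = 0 := by
        obtain ⟨m', rfl⟩ : ∃ m', m = m' + 1 := ⟨m - 1, by omega⟩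
        rw [coeff_X_mul]
        exact coeff_eq_zero_of_natDegree_lt (lt_of_le_of_lt hpdeg (by omega))
      rw [h2, h3]; ring
  have hReval : R.eval x0 = σ.eval x0 * g.eval x0 := by
    rw [hR_def]
    simp [hpx0, hp'x0]
  -- combine
  have hway2 : J (g * R) = -((τ.coeff 1 + (n : ℝ) * σ.coeff 2) * H)
      - ((n : ℝ) + 1) * σ.coeff 2 * H := by
    have hsplit : g * R = σ * Polynomial.derivative p * g
        - Polynomial.C (((n : ℝ) + 1) * σ.coeff 2) * (p * (Polynomial.X * g)) := by
      rw [hR_def]; ring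
    rw [hsplit, Jsub, hsmul, hEpg, hXg]
  have hway1 := evalg R hRdeg
  rw [hway2, hReval] at hway1
  linarith


/-- **Theorem 2.2 of the paper.**
For a classical family of hypergeometric type, the barycentric weights `λ_j` at the
roots of `π_{n+1}` satisfy `λ_j² ν_{2n+2} h_{n+1} = k_{n+1}² (2n+2) σ(x_j) w_j`, and
`λ_j` has sign `(-1)^{n+j}`. -/
theorem barycentric_sq_eq_gauss_hypergeometric
    (a b : ℝ) (hab : a < b) (ω : ℝ → ℝ)
    (hω_pos : ∀ t ∈ Set.Ioo a b, 0 < ω t)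
    (hω_int : ∀ p : Polynomial ℝ,
      IntervalIntegrable (fun t => ω t * p.eval t) volume a b)
    (σ τ : Polynomial ℝ) (hσ : σ.degree ≤ 2) (hτ : τ.degree = 1)
    (hPearson : ∀ t ∈ Set.Ioo a b,
      HasDerivAt (fun s => σ.eval s * ω s) (τ.eval t * ω t) t)
    (ν : ℕ → ℝ)
    (hν : ∀ m : ℕ, ν m = -(m : ℝ) * τ.coeff 1
      - ((m : ℝ) * ((m : ℝ) - 1) / 2) * (2 * σ.coeff 2))
    (π : ℕ → Polynomial ℝ)
    (hdeg : ∀ i, (π i).natDegree = i)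
    (k : ℕ → ℝ) (hk : ∀ i, k i = (π i).coeff i) (hk0 : ∀ i, k i ≠ 0)
    (hODE : ∀ i, σ * derivative (derivative (π i)) + τ * derivative (π i)
      + Polynomial.C (ν i) * π i = 0)
    (h : ℕ → ℝ) (hpos : ∀ i, 0 < h i)
    (horth : ∀ i l : ℕ,
      (∫ t in a..b, ω t * (π i).eval t * (π l).eval t) = if i = l then h l else 0)
    (n : ℕ) (x : Fin (n + 1) → ℝ)
    (hx_mono : StrictMono x)
    (hx_mem : ∀ j, x j ∈ Set.Ioo a b)
    (hx_root : ∀ j, (π (n + 1)).eval (x j) = 0)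
    (lam w : Fin (n + 1) → ℝ)
    (hlam : ∀ j, lam j = (∏ l ∈ Finset.univ.erase j, (x j - x l))⁻¹)
    (hw : ∀ j, w j =
      ∫ t in a..b, ω t * ∏ l ∈ Finset.univ.erase j, ((t - x l) / (x j - x l))) :
    ∀ j : Fin (n + 1),
      (lam j) ^ 2 * ν (2 * n + 2) * h (n + 1)
        = (k (n + 1)) ^ 2 * (2 * (n : ℝ) + 2) * σ.eval (x j) * w j
      ∧ Real.sign (lam j) = (-1 : ℝ) ^ (n + (j : ℕ)) := by
  intro j
  -- basic degree facts
  have hσ2 : σ.natDegree ≤ 2 := natDegree_le_iff_degree_le.mpr (by exact_mod_cast hσ)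
  have hτ1 : τ.natDegree ≤ 1 := natDegree_le_iff_degree_le.mpr (by rw [hτ]; norm_cast)
  set K : ℝ := k (n + 1) with hK_def
  set p : Polynomial ℝ := π (n + 1) with hp_def
  have hKne : K ≠ 0 := hk0 (n + 1)
  have hpK : p.coeff (n + 1) = K := (hk (n + 1)).symm
  have hpdeg : p.natDegree = n + 1 := hdeg (n + 1)
  -- Pr and the sign part
  set Pr : ℝ := ∏ l ∈ Finset.univ.erase j, (x j - x l) with hPr_def
  have hsplit_erase : (Finset.univ.erase j : Finset (Fin (n+1)))
      = Finset.Iio j ∪ Finset.Ioi j := by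
    ext l
    simp only [Finset.mem_erase, Finset.mem_univ, and_true, Finset.mem_union,
      Finset.mem_Iio, Finset.mem_Ioi]
    exact ne_iff_lt_or_gt
  have hdisj : Disjoint (Finset.Iio j) (Finset.Ioi j) := by
    rw [Finset.disjoint_left]
    intro l hl hl'
    simp only [Finset.mem_Iio] at hl
    simp only [Finset.mem_Ioi] at hl'
    exact absurd (hl.trans hl') (lt_irrefl l)
  have hA_pos : 0 < ∏ l ∈ Finset.Iio j, (x j - x l) := by
    apply Finset.prod_pos
    intro l hl
    simp only [Finset.mem_Iio] at hl
    exact sub_pos.mpr (hx_mono hl)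
  have hC_pos : 0 < ∏ l ∈ Finset.Ioi j, (x l - x j) := by
    apply Finset.prod_pos
    intro l hl
    simp only [Finset.mem_Ioi] at hl
    exact sub_pos.mpr (hx_mono hl)
  have hcard_Ioi : (Finset.Ioi j).card = n - (j : ℕ) := by
    rw [Fin.card_Ioi]
    omega
  have hB_eq : ∏ l ∈ Finset.Ioi j, (x j - x l)
      = (-1 : ℝ) ^ (n - (j : ℕ)) * ∏ l ∈ Finset.Ioi j, (x l - x j) := by
    rw [← hcard_Ioi, ← Finset.prod_const, ← Finset.prod_mul_distrib]
    apply Finset.prod_congr rfl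
    intro l _
    ring
  have hPr_eq : Pr = (-1 : ℝ) ^ (n - (j : ℕ))
      * ((∏ l ∈ Finset.Iio j, (x j - x l)) * ∏ l ∈ Finset.Ioi j, (x l - x j)) := by
    rw [hPr_def, hsplit_erase, Finset.prod_union hdisj, hB_eq]
    ring
  set P : ℝ := (∏ l ∈ Finset.Iio j, (x j - x l)) * ∏ l ∈ Finset.Ioi j, (x l - x j)
    with hP_def
  have hP_pos : 0 < P := mul_pos hA_pos hC_pos
  have hPrne : Pr ≠ 0 := by
    rw [hPr_eq]
    exact mul_ne_zero (pow_ne_zero _ (by norm_num)) (ne_of_gt hP_pos)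
  have hjle : (j : ℕ) ≤ n := Fin.is_le j
  have hsign : Real.sign (lam j) = (-1 : ℝ) ^ (n + (j : ℕ)) := by
    rw [hlam j, ← hPr_def, hPr_eq, mul_inv, ← inv_pow, inv_neg, inv_one]
    rcases Nat.even_or_odd (n - (j : ℕ)) with he | ho
    · have h1 : Even (n + (j : ℕ)) := by
        rw [Nat.even_add]
        rw [Nat.even_sub hjle] at he
        exact he
      rw [he.neg_one_pow, h1.neg_one_pow, one_mul]
      exact Real.sign_of_pos (inv_pos.mpr hP_pos)
    · have h1 : Odd (n + (j : ℕ)) := by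
        rw [Nat.odd_add]
        rw [Nat.odd_sub hjle] at ho
        exact ho
      rw [ho.neg_one_pow, h1.neg_one_pow, neg_one_mul]
      rw [Real.sign_of_neg (by simpa using inv_pos.mpr hP_pos)]
  refine ⟨?_, hsign⟩
  -- factorization of p
  set G : Polynomial ℝ := ∏ l ∈ Finset.univ.erase j, (Polynomial.X - Polynomial.C (x l))
    with hG_def
  have hGmonic : G.Monic := monic_prod_of_monic _ _ (fun l _ => monic_X_sub_C (x l))
  have hGdeg : G.natDegree = n := by
    rw [hG_def, natDegree_prod_of_monic _ _ (fun l _ => monic_X_sub_C (x l))]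
    simp [natDegree_X_sub_C, Finset.card_erase_of_mem]
  set Gf : Polynomial ℝ := ∏ l ∈ (Finset.univ : Finset (Fin (n+1))),
      (Polynomial.X - Polynomial.C (x l)) with hGf_def
  have hGfmonic : Gf.Monic := monic_prod_of_monic _ _ (fun l _ => monic_X_sub_C (x l))
  have hGfdeg : Gf.natDegree = n + 1 := by
    rw [hGf_def, natDegree_prod_of_monic _ _ (fun l _ => monic_X_sub_C (x l))]
    simp [natDegree_X_sub_C]
  have hP1 : p = Polynomial.C K * Gf := by
    have hD : p - Polynomial.C K * Gf = 0 := by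
      apply Polynomial.eq_zero_of_natDegree_lt_card_of_eval_eq_zero _ hx_mono.injective
      · intro l
        have hGf0 : Gf.eval (x l) = 0 := by
          rw [hGf_def, eval_prod]
          apply Finset.prod_eq_zero (Finset.mem_univ l)
          simp
        simp [hx_root l, hGf0]
      · have hle : (p - Polynomial.C K * Gf).natDegree ≤ n := by
          rw [natDegree_le_iff_coeff_eq_zero]
          intro m hm
          rcases Nat.lt_or_ge m (n+2) with h1 | h1
          · have hmeq : m = n + 1 := by omega
            subst hmeq
            rw [coeff_sub, coeff_C_mul, hpK]
            have hco : Gf.coeff (n+1) = 1 := by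
              have := hGfmonic.coeff_natDegree
              rwa [hGfdeg] at this
            rw [hco, mul_one, sub_self]
          · rw [coeff_sub, coeff_C_mul,
              coeff_eq_zero_of_natDegree_lt (by omega : p.natDegree < m),
              coeff_eq_zero_of_natDegree_lt (by omega : Gf.natDegree < m)]
            ring
        have hcard : Fintype.card (Fin (n+1)) = n + 1 := by simp
        omega
    exact sub_eq_zero.mp hD
  set g : Polynomial ℝ := Polynomial.C K * G with hg_def
  have hpg : p = (Polynomial.X - Polynomial.C (x j)) * g := by
    rw [hP1, hGf_def, ← Finset.mul_prod_erase Finset.univ _ (Finset.mem_univ j), hg_def,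
      hG_def]
    ring
  have hgn : g.natDegree ≤ n := by
    rw [hg_def]
    exact (natDegree_C_mul_le _ _).trans (le_of_eq hGdeg)
  have hgK : g.coeff n = K := by
    rw [hg_def, coeff_C_mul]
    have hco : G.coeff n = 1 := by
      have := hGmonic.coeff_natDegree
      rwa [hGdeg] at this
    rw [hco, mul_one]
  -- integral linearity
  have hadd : ∀ q r : Polynomial ℝ,
      (∫ t in a..b, ω t * (q + r).eval t)
        = (∫ t in a..b, ω t * q.eval t) + ∫ t in a..b, ω t * r.eval t := by
    intro q r
    simp only [eval_add, mul_add]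
    exact intervalIntegral.integral_add (hω_int q) (hω_int r)
  have hsmul : ∀ (c : ℝ) (q : Polynomial ℝ),
      (∫ t in a..b, ω t * (Polynomial.C c * q).eval t)
        = c * ∫ t in a..b, ω t * q.eval t := by
    intro c q
    simp only [eval_mul, eval_C]
    rw [← intervalIntegral.integral_const_mul]
    congr 1
    ext t
    ring
  have hπ0 : π 0 = Polynomial.C (k 0) := by
    rw [hk 0]
    exact eq_C_of_natDegree_eq_zero (hdeg 0)
  have Ipi : ∀ m : ℕ, m ≠ 0 → (∫ t in a..b, ω t * (π m).eval t) = 0 := by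
    intro m hm
    have h0 := horth m 0
    rw [if_neg hm] at h0
    have h1 : (∫ t in a..b, ω t * (π m).eval t * (π 0).eval t)
        = (∫ t in a..b, ω t * (π m).eval t) * k 0 := by
      rw [← intervalIntegral.integral_mul_const]
      congr 1
      ext t
      rw [hπ0, eval_C]
    rw [h1] at h0
    exact (mul_eq_zero.mp h0).resolve_right (hk0 0)
  -- E functional vanishes
  have hE : ∀ q : Polynomial ℝ,
      (∫ t in a..b, ω t * (τ * q + σ * Polynomial.derivative q).eval t) = 0 := by
    intro q
    refine J_vanish
      (fun q => ∫ t in a..b, ω t * (τ * q + σ * Polynomial.derivative q).eval t)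
      ?_ ?_ q.natDegree (fun i => Polynomial.derivative (π (i+1))) ?_ ?_ ?_ q le_rfl
    · intro q r
      have h1 : τ * (q + r) + σ * Polynomial.derivative (q + r)
          = (τ * q + σ * Polynomial.derivative q)
            + (τ * r + σ * Polynomial.derivative r) := by
        rw [derivative_add]
        ring
      simp only [h1]
      exact hadd _ _
    · intro c q
      have h1 : τ * (Polynomial.C c * q) + σ * Polynomial.derivative (Polynomial.C c * q)
          = Polynomial.C c * (τ * q + σ * Polynomial.derivative q) := by
        rw [derivative_C_mul]
        ring
      simp only [h1]
      exact hsmul _ _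
    · intro i _
      refine (natDegree_derivative_le _).trans ?_
      rw [hdeg]
      omega
    · intro i _
      rw [coeff_derivative, ← hk (i+1)]
      exact mul_ne_zero (hk0 (i+1)) (by positivity)
    · intro i _
      have hODE' : τ * Polynomial.derivative (π (i+1))
          + σ * Polynomial.derivative (Polynomial.derivative (π (i+1)))
          = Polynomial.C (-(ν (i+1))) * π (i+1) := by
        rw [map_neg]
        linear_combination hODE (i+1)
      simp only [hODE']
      rw [hsmul, Ipi (i+1) (Nat.succ_ne_zero i), mul_zero]
  -- orthogonality of p against low degrees
  have horthp : ∀ q : Polynomial ℝ, q.natDegree ≤ n →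
      (∫ t in a..b, ω t * (p * q).eval t) = 0 := by
    intro q hq
    refine J_vanish (fun q => ∫ t in a..b, ω t * (p * q).eval t) ?_ ?_ n π ?_ ?_ ?_ q hq
    · intro q r
      have h1 : p * (q + r) = p * q + p * r := by ring
      simp only [h1]
      exact hadd _ _
    · intro c q
      have h1 : p * (Polynomial.C c * q) = Polynomial.C c * (p * q) := by ring
      simp only [h1]
      exact hsmul _ _
    · intro i _
      exact le_of_eq (hdeg i)
    · intro i _
      rw [← hk i]
      exact hk0 i
    · intro i hi
      have hoi := horth (n+1) i
      rw [if_neg (by omega)] at hoi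
      simp only [eval_mul, ← mul_assoc]
      exact hoi
  have hpp : (∫ t in a..b, ω t * (p * p).eval t) = h (n + 1) := by
    have hoi := horth (n+1) (n+1)
    rw [if_pos rfl] at hoi
    simp only [eval_mul, ← mul_assoc]
    exact hoi
  -- the core identity
  have key := core (fun q => ∫ t in a..b, ω t * q.eval t) hadd hsmul σ τ hσ2 hτ1 n K hKne
    p g (x j) hpg hgn hgK (h (n+1)) hpp horthp hE
  -- evaluation facts
  have hgval : g.eval (x j) = K * Pr := by
    rw [hg_def, eval_mul, eval_C, hG_def, eval_prod]
    simp only [eval_sub, eval_X, eval_C]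
    rw [hPr_def]
  have hJg : (∫ t in a..b, ω t * g.eval t) = K * ∫ t in a..b, ω t * G.eval t := by
    rw [hg_def]
    exact hsmul K G
  have hwj : w j = (∫ t in a..b, ω t * G.eval t) * Pr⁻¹ := by
    rw [hw j, ← intervalIntegral.integral_mul_const]
    congr 1
    ext t
    rw [Finset.prod_div_distrib, hG_def, eval_prod]
    simp only [eval_sub, eval_X, eval_C]
    rw [← hPr_def, div_eq_mul_inv]
    ring
  have hν2 : ν (2 * n + 2) = (2 * (n : ℝ) + 2)
      * (-(τ.coeff 1 + (n : ℝ) * σ.coeff 2) - ((n : ℝ) + 1) * σ.coeff 2) := by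
    rw [hν]
    push_cast
    ring
  rw [hgval, hJg] at key
  rw [hlam j, ← hPr_def, hwj, hν2]
  field_simp
  linear_combination (-1 : ℝ) * key
end

section
/- Let α > −1 and let x_0 < ⋯ < x_n be the n+1 roots of the Laguerre polynomial L_{n+1}^{(α)}, which lie in (0,∞). Let λ_j := 1/∏_{k≠j}(x_j − x_k) be the barycentric weights and w_j := ∫_0^∞ x^α e^{−x} ∏_{k≠j}((x − x_k)/(x_j − x_k)) dx the Gauss–Laguerre quadrature weights. Then for every j = 0,…,n: λ_j = (−1)^{n+j} · √( x_j w_j / ( Γ(n+α+2) · (n+1)! ) ). -/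
open MeasureTheory Finset Real

/-- The Laguerre polynomial `L_n^{(α)}` defined by the Rodrigues formula. -/
noncomputable def laguerreL (α : ℝ) (n : ℕ) : ℝ → ℝ := fun x =>
  x ^ (-α) * Real.exp x / (Nat.factorial n : ℝ)
    * deriv^[n] (fun t => Real.exp (-t) * t ^ ((n : ℝ) + α)) x


open MeasureTheory Finset Real Filter Set Polynomial

namespace BaryLag

/-- Rodrigues recurrence polynomials. -/
noncomputable def Qp (β : ℝ) : ℕ → Polynomial ℝ
  | 0 => 1
  | (k+1) => (C (β - (k : ℝ)) - X) * Qp β k + X * derivative (Qp β k)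

lemma natDegree_Qp (β : ℝ) (k : ℕ) : (Qp β k).natDegree ≤ k := by
  induction k with
  | zero => simp [Qp]
  | succ k ih =>
    refine (natDegree_add_le _ _).trans (max_le ?_ ?_)
    · refine (natDegree_mul_le).trans ?_
      have h1 : (C (β - (k : ℝ)) - X).natDegree ≤ 1 := by
        compute_degree
      omega
    · refine (natDegree_mul_le).trans ?_
      have := natDegree_derivative_le (Qp β k)
      simp only [natDegree_X]
      omega

lemma coeff_Qp (β : ℝ) (k : ℕ) : (Qp β k).coeff k = (-1 : ℝ) ^ k := by
  induction k with
  | zero => simp [Qp]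
  | succ k ih =>
    have hd : (Qp β k).coeff (k+1) = 0 :=
      coeff_eq_zero_of_natDegree_lt (lt_of_le_of_lt (natDegree_Qp β k) (by omega))
    have hd' : (derivative (Qp β k)).coeff k = 0 := by
      rw [coeff_derivative, hd]; ring
    simp only [Qp, coeff_add, sub_mul, coeff_sub, coeff_C_mul, coeff_X_mul, hd, ih, hd',
      pow_succ]
    ring

lemma hasDerivAt_aux (c : ℝ) (q : Polynomial ℝ) {t : ℝ} (ht : 0 < t) :
    HasDerivAt (fun s : ℝ => Real.exp (-s) * s ^ c * q.eval s)
      (Real.exp (-t) * t ^ (c - 1) *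
        (((C c - X) * q + X * derivative q).eval t)) t := by
  have h1 : HasDerivAt (fun s : ℝ => Real.exp (-s)) (-Real.exp (-t)) t := by
    simpa [Function.comp_def] using (Real.hasDerivAt_exp (-t)).comp t (hasDerivAt_neg t)
  have h2 : HasDerivAt (fun s : ℝ => s ^ c) (c * t ^ (c - 1)) t :=
    Real.hasDerivAt_rpow_const (Or.inl ht.ne')
  have h3 := q.hasDerivAt t
  have h : HasDerivAt (fun s : ℝ => Real.exp (-s) * s ^ c * q.eval s) _ t := (h1.mul h2).mul h3
  convert h using 1
  have hts : t ^ c = t ^ (c - 1) * t := by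
    rw [Real.rpow_sub_one ht.ne' c, div_mul_cancel₀ _ ht.ne']
  simp only [eval_add, eval_mul, eval_sub, eval_C, eval_X, hts, Pi.mul_apply]
  ring

lemma iter_deriv_g (β : ℝ) :
    ∀ (k : ℕ) {t : ℝ}, 0 < t →
      deriv^[k] (fun s : ℝ => Real.exp (-s) * s ^ β) t
        = Real.exp (-t) * t ^ (β - (k : ℝ)) * (Qp β k).eval t := by
  intro k
  induction k with
  | zero => intro t ht; simp [Qp]
  | succ k ih =>
    intro t ht
    rw [Function.iterate_succ_apply']
    have hev : deriv^[k] (fun s : ℝ => Real.exp (-s) * s ^ β)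
        =ᶠ[nhds t] fun s => Real.exp (-s) * s ^ (β - (k : ℝ)) * (Qp β k).eval s := by
      filter_upwards [Ioi_mem_nhds ht] with s hs
      exact ih hs
    rw [hev.deriv_eq, (hasDerivAt_aux (β - (k : ℝ)) (Qp β k) ht).deriv]
    have hcast : β - (k : ℝ) - 1 = β - ((k+1 : ℕ) : ℝ) := by push_cast; ring
    rw [hcast]
    rfl

lemma integrableOn_poly {c : ℝ} (hc : -1 < c) (q : Polynomial ℝ) :
    IntegrableOn (fun t => Real.exp (-t) * t ^ c * q.eval t) (Ioi (0:ℝ)) := by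
  induction q using Polynomial.induction_on' with
  | add p r hp hr =>
    refine MeasureTheory.IntegrableOn.congr_fun (hp.add hr) (fun t _ => ?_) measurableSet_Ioi
    simp [eval_add]; ring
  | monomial m a =>
    have hbase : IntegrableOn (fun t : ℝ => Real.exp (-t) * t ^ (c + (m:ℝ))) (Ioi (0:ℝ)) := by
      have := Real.GammaIntegral_convergent (s := c + (m:ℝ) + 1)
        (by have : (0:ℝ) ≤ (m:ℝ) := Nat.cast_nonneg m; linarith)
      simpa using this
    refine MeasureTheory.IntegrableOn.congr_fun (hbase.const_mul a) (fun t ht => ?_)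
      measurableSet_Ioi
    have ht' : (0:ℝ) < t := ht
    simp only [eval_monomial]
    rw [Real.rpow_add ht', Real.rpow_natCast]
    ring

lemma tendsto_top_poly (c : ℝ) (q : Polynomial ℝ) :
    Tendsto (fun t => Real.exp (-t) * t ^ c * q.eval t) atTop (nhds 0) := by
  induction q using Polynomial.induction_on' with
  | add p r hp hr =>
    have h := hp.add hr
    rw [add_zero] at h
    exact h.congr (fun t => by simp [eval_add]; ring)
  | monomial m a =>
    have hbase := (tendsto_rpow_mul_exp_neg_mul_atTop_nhds_zero (c + (m:ℝ)) 1 one_pos).const_mul a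
    rw [mul_zero] at hbase
    refine hbase.congr' ?_
    filter_upwards [eventually_gt_atTop (0:ℝ)] with t ht
    simp only [eval_monomial]
    rw [Real.rpow_add ht, Real.rpow_natCast, neg_one_mul]
    ring

lemma cont_zero {c : ℝ} (hc : 0 < c) (q : Polynomial ℝ) :
    ContinuousWithinAt (fun t => Real.exp (-t) * t ^ c * q.eval t) (Ici (0:ℝ)) 0 := by
  refine ContinuousAt.continuousWithinAt ?_
  have h1 : ContinuousAt (fun t : ℝ => Real.exp (-t)) 0 := by fun_prop
  have h2 : ContinuousAt (fun t : ℝ => t ^ c) 0 :=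
    Real.continuousAt_rpow_const 0 c (Or.inr hc.le)
  have h3 : ContinuousAt (fun t : ℝ => q.eval t) 0 := by fun_prop
  exact (h1.mul h2).mul h3

set_option maxHeartbeats 1000000 in
/-- Single integration by parts step. -/
lemma ibp {c : ℝ} (hc : 0 < c) (q : Polynomial ℝ) :
    ∫ t in Ioi (0:ℝ), Real.exp (-t) * t ^ (c - 1) *
      (((C c - X) * q + X * derivative q).eval t) = 0 := by
  have hint : IntegrableOn (fun t => Real.exp (-t) * t ^ (c - 1) *
      (((C c - X) * q + X * derivative q).eval t)) (Ioi (0:ℝ)) volume :=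
    integrableOn_poly (by linarith) _
  have key := MeasureTheory.integral_Ioi_of_hasDerivAt_of_tendsto
    (f := fun t => Real.exp (-t) * t ^ c * q.eval t)
    (a := 0) (m := 0)
    (cont_zero hc q)
    (fun x hx => hasDerivAt_aux c q hx)
    hint
    (tendsto_top_poly c q)
  rw [key]
  simp [Real.zero_rpow hc.ne']

/-- Iterated integration by parts (Rodrigues). -/
lemma master (β : ℝ) :
    ∀ (N : ℕ), (N : ℝ) < β + 1 → ∀ (φ : Polynomial ℝ),
      ∫ t in Ioi (0:ℝ), Real.exp (-t) * t ^ (β - (N : ℝ)) * ((Qp β N) * φ).eval t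
        = (-1:ℝ) ^ N * ∫ t in Ioi (0:ℝ),
            Real.exp (-t) * t ^ β * ((derivative)^[N] φ).eval t := by
  intro N
  induction N with
  | zero => intro _ φ; simp [Qp]
  | succ N ih =>
    intro hN φ
    have hNβ : (N : ℝ) < β + 1 := by push_cast at hN ⊢; linarith
    have hc : 0 < β - (N : ℝ) := by push_cast at hN; linarith
    -- ibp with c = β - N, q = Qp β N * φ
    have h0 := ibp hc (Qp β N * φ)
    have hsplit : ((C (β - (N:ℝ)) - X) * (Qp β N * φ)
          + X * derivative (Qp β N * φ))
        = (Qp β (N+1)) * φ + X * (Qp β N * derivative φ) := by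
      rw [derivative_mul]
      simp only [Qp]
      ring
    rw [hsplit] at h0
    have hInt1 : IntegrableOn
        (fun t => Real.exp (-t) * t ^ (β - (N:ℝ) - 1) * ((Qp β (N+1)) * φ).eval t)
        (Ioi (0:ℝ)) := integrableOn_poly (by linarith) _
    have hInt2 : IntegrableOn
        (fun t => Real.exp (-t) * t ^ (β - (N:ℝ) - 1) * (X * (Qp β N * derivative φ)).eval t)
        (Ioi (0:ℝ)) := integrableOn_poly (by linarith) _
    have hadd : (∫ t in Ioi (0:ℝ), Real.exp (-t) * t ^ (β - (N:ℝ) - 1) *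
          ((Qp β (N+1)) * φ).eval t)
        + (∫ t in Ioi (0:ℝ), Real.exp (-t) * t ^ (β - (N:ℝ) - 1) *
          (X * (Qp β N * derivative φ)).eval t) = 0 := by
      rw [← MeasureTheory.integral_add hInt1 hInt2]
      refine Eq.trans ?_ h0
      refine MeasureTheory.setIntegral_congr_fun measurableSet_Ioi (fun t _ => ?_)
      simp only [Pi.add_apply, eval_add]
      ring
    have hcast : β - (N:ℝ) - 1 = β - ((N+1 : ℕ) : ℝ) := by push_cast; ring
    have hsecond : ∫ t in Ioi (0:ℝ), Real.exp (-t) * t ^ (β - (N:ℝ) - 1) *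
          (X * (Qp β N * derivative φ)).eval t
        = ∫ t in Ioi (0:ℝ), Real.exp (-t) * t ^ (β - (N:ℝ)) *
          ((Qp β N) * derivative φ).eval t := by
      refine MeasureTheory.setIntegral_congr_fun measurableSet_Ioi (fun t ht => ?_)
      have ht' : (0:ℝ) < t := ht
      simp only [eval_mul, eval_X]
      rw [Real.rpow_sub_one ht'.ne' (β - (N:ℝ))]
      field_simp
    have := ih hNβ (derivative φ)
    rw [hsecond, this] at hadd
    rw [← hcast, Function.iterate_succ_apply]
    have hA : ∫ t in Ioi (0:ℝ), Real.exp (-t) * t ^ (β - (N:ℝ) - 1) *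
          ((Qp β (N+1)) * φ).eval t
        = -((-1:ℝ) ^ N * ∫ t in Ioi (0:ℝ), Real.exp (-t) * t ^ β *
            ((derivative)^[N] (derivative φ)).eval t) := by linarith
    rw [hA]; ring

/-- The weighted integral functional. -/
noncomputable def Jf (c : ℝ) (φ : Polynomial ℝ) : ℝ :=
  ∫ t in Ioi (0:ℝ), Real.exp (-t) * t ^ c * φ.eval t

lemma Jf_add {c : ℝ} (hc : -1 < c) (φ ψ : Polynomial ℝ) :
    Jf c (φ + ψ) = Jf c φ + Jf c ψ := by
  unfold Jf
  rw [← MeasureTheory.integral_add (integrableOn_poly hc φ) (integrableOn_poly hc ψ)]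
  refine MeasureTheory.setIntegral_congr_fun measurableSet_Ioi (fun t _ => ?_)
  simp only [Pi.add_apply, eval_add]
  ring

lemma Jf_Cmul (c a : ℝ) (φ : Polynomial ℝ) : Jf c (C a * φ) = a * Jf c φ := by
  unfold Jf
  rw [← MeasureTheory.integral_const_mul]
  refine MeasureTheory.setIntegral_congr_fun measurableSet_Ioi (fun t _ => ?_)
  simp only [eval_mul, eval_C]
  ring

lemma Jf_zero (c : ℝ) : Jf c 0 = 0 := by
  unfold Jf; simp

lemma Jf_sub {c : ℝ} (hc : -1 < c) (φ ψ : Polynomial ℝ) :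
    Jf c (φ - ψ) = Jf c φ - Jf c ψ := by
  have h := Jf_add hc (φ - ψ) ψ
  rw [sub_add_cancel] at h
  linarith

lemma Jf_sum {c : ℝ} (hc : -1 < c) {ι : Type*} (s : Finset ι) (f : ι → Polynomial ℝ) :
    Jf c (∑ k ∈ s, f k) = ∑ k ∈ s, Jf c (f k) := by
  unfold Jf
  rw [← MeasureTheory.integral_finset_sum s (fun k _ => integrableOn_poly hc (f k))]
  refine MeasureTheory.setIntegral_congr_fun measurableSet_Ioi (fun t _ => ?_)
  simp [eval_finset_sum, Finset.mul_sum]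

lemma Jf_C {c : ℝ} (hc : -1 < c) (r : ℝ) : Jf c (C r) = r * Real.Gamma (c + 1) := by
  unfold Jf
  rw [Real.Gamma_eq_integral (by linarith)]
  rw [← MeasureTheory.integral_const_mul]
  refine MeasureTheory.setIntegral_congr_fun measurableSet_Ioi (fun t _ => ?_)
  simp only [eval_C, add_sub_cancel_right]
  ring

lemma Jf_ibp {c : ℝ} (hc : -1 < c) (q : Polynomial ℝ) :
    Jf c ((C (c + 1) - X) * q + X * derivative q) = 0 := by
  have h := ibp (c := c + 1) (by linarith) q
  rw [show c + 1 - 1 = c by ring] at h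
  exact h

lemma Jf_master (β : ℝ) (N : ℕ) (hN : (N : ℝ) < β + 1) (φ : Polynomial ℝ) :
    Jf (β - (N : ℝ)) (Qp β N * φ) = (-1:ℝ) ^ N * Jf β ((derivative)^[N] φ) :=
  master β N hN φ

end BaryLag


open BaryLag Polynomial in
/-- **Corollary 2.4: barycentric weights for Gauss–Laguerre points.**
If `x_0 < ⋯ < x_n` are the roots of `L_{n+1}^{(α)}` then
`λ_j = (-1)^{n+j} √( x_j w_j / (Γ(n+α+2) (n+1)!) )`. -/
theorem barycentric_laguerre
    (α : ℝ) (hα : -1 < α)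
    (n : ℕ) (x : Fin (n + 1) → ℝ)
    (hx_mono : StrictMono x)
    (hx_mem : ∀ j, 0 < x j)
    (hx_root : ∀ j, laguerreL α (n + 1) (x j) = 0)
    (lam w : Fin (n + 1) → ℝ)
    (hlam : ∀ j, lam j = (∏ k ∈ Finset.univ.erase j, (x j - x k))⁻¹)
    (hw : ∀ j, w j = ∫ t in Set.Ioi (0 : ℝ), t ^ α * Real.exp (-t)
      * ∏ k ∈ Finset.univ.erase j, ((t - x k) / (x j - x k))) :
    ∀ j : Fin (n + 1),
      lam j = (-1 : ℝ) ^ (n + (j : ℕ))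
        * Real.sqrt (x j * w j
            / (Real.Gamma ((n : ℝ) + α + 2) * (Nat.factorial (n + 1) : ℝ))) := by
  classical
  set β : ℝ := ((n + 1 : ℕ) : ℝ) + α with hβdef
  have hinj : Function.Injective x := hx_mono.injective
  set P : Polynomial ℝ := Lagrange.nodal Finset.univ x with hPdef
  set p : Fin (n + 1) → Polynomial ℝ :=
    fun j => Lagrange.nodal (Finset.univ.erase j) x with hpdef
  have hPdeg : P.natDegree = n + 1 := by
    rw [hPdef, Lagrange.natDegree_nodal, Finset.card_univ, Fintype.card_fin]
  have hpdeg : ∀ j, (p j).natDegree = n := by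
    intro j
    rw [hpdef, Lagrange.natDegree_nodal, Finset.card_erase_of_mem (mem_univ j),
      Finset.card_univ, Fintype.card_fin]
    omega
  have hPj : ∀ j, P = (Polynomial.X - Polynomial.C (x j)) * p j := by
    intro j
    exact Lagrange.nodal_eq_mul_nodal_erase (mem_univ j)
  have hP' : Polynomial.derivative P = ∑ k, p k := Lagrange.derivative_nodal
  -- roots of the Rodrigues polynomial
  have hΦroot : ∀ i, (Qp β (n + 1)).eval (x i) = 0 := by
    intro i
    have h := hx_root i
    have hxi := hx_mem i
    unfold laguerreL at h
    rw [iter_deriv_g β (n + 1) hxi] at h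
    have h2 : ((x i) ^ (-α) * Real.exp (x i) / ((Nat.factorial (n + 1) : ℝ))
        * (Real.exp (-(x i)) * (x i) ^ (β - ((n + 1 : ℕ) : ℝ))))
        * (Qp β (n + 1)).eval (x i) = 0 := by
      rw [← h]; ring
    rcases mul_eq_zero.mp h2 with h3 | h3
    · exfalso
      have hpos : 0 < (x i) ^ (-α) * Real.exp (x i) / ((Nat.factorial (n + 1) : ℝ))
          * (Real.exp (-(x i)) * (x i) ^ (β - ((n + 1 : ℕ) : ℝ))) := by
        have h1 := Real.rpow_pos_of_pos hxi (-α)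
        have h4 := Real.rpow_pos_of_pos hxi (β - ((n + 1 : ℕ) : ℝ))
        have h5 : (0:ℝ) < (Nat.factorial (n + 1) : ℝ) := by
          exact_mod_cast Nat.factorial_pos (n + 1)
        positivity
      linarith [hpos]
    · exact h3
  -- identification with the nodal polynomial
  have hΦ : Qp β (n + 1) = Polynomial.C ((-1:ℝ) ^ (n + 1)) * P := by
    have hD : Qp β (n + 1) - Polynomial.C ((-1:ℝ) ^ (n + 1)) * P = 0 := by
      apply Polynomial.eq_zero_of_natDegree_lt_card_of_eval_eq_zero _ hinj
      · intro i
        simp only [Polynomial.eval_sub, Polynomial.eval_mul, Polynomial.eval_C]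
        rw [hΦroot i]
        have : P.eval (x i) = 0 := by
          rw [hPdef]; exact Lagrange.eval_nodal_at_node (mem_univ i)
        rw [this]; ring
      · rw [Fintype.card_fin]
        have hsub : (Qp β (n + 1) - Polynomial.C ((-1:ℝ) ^ (n + 1)) * P).natDegree ≤ n + 1 :=
          (Polynomial.natDegree_sub_le _ _).trans (max_le (natDegree_Qp β (n + 1))
            ((Polynomial.natDegree_C_mul_le _ _).trans hPdeg.le))
        have hco : (Qp β (n + 1) - Polynomial.C ((-1:ℝ) ^ (n + 1)) * P).coeff (n + 1) = 0 := by
          rw [Polynomial.coeff_sub, coeff_Qp, Polynomial.coeff_C_mul]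
          have hmonic : P.Monic := Lagrange.nodal_monic
          have : P.coeff (n + 1) = 1 := by
            have := hmonic.leadingCoeff
            rwa [Polynomial.leadingCoeff, hPdeg] at this
          rw [this]; ring
        rcases eq_or_ne (Qp β (n + 1) - Polynomial.C ((-1:ℝ) ^ (n + 1)) * P) 0 with h0 | h0
        · rw [h0]; simp
        · have := Polynomial.natDegree_eq_of_degree_eq_some
            (Polynomial.degree_eq_natDegree h0)
          rcases Nat.lt_or_ge ((Qp β (n + 1) - Polynomial.C ((-1:ℝ) ^ (n + 1)) * P).natDegree)
            (n + 1) with hlt | hge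
          · omega
          · exfalso
            have heq : (Qp β (n + 1) - Polynomial.C ((-1:ℝ) ^ (n + 1)) * P).natDegree = n + 1 :=
              le_antisymm hsub hge
            have := Polynomial.leadingCoeff_ne_zero.mpr h0
            rw [Polynomial.leadingCoeff, heq, hco] at this
            exact this rfl
    exact sub_eq_zero.mp hD
  -- β facts
  have hβn : ((n + 1 : ℕ) : ℝ) < β + 1 := by
    rw [hβdef]; push_cast; linarith
  have hβα : β - ((n + 1 : ℕ) : ℝ) = α := by rw [hβdef]; ring
  -- Step A : orthogonality
  have keyA : ∀ φ : Polynomial ℝ, φ.natDegree ≤ n → Jf α (P * φ) = 0 := by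
    intro φ hφ
    have hm := Jf_master β (n + 1) hβn φ
    rw [hβα, hΦ] at hm
    rw [Polynomial.iterate_derivative_eq_zero (by omega : φ.natDegree < n + 1)] at hm
    rw [mul_assoc, Jf_Cmul, Jf_zero, mul_zero] at hm
    have hne : ((-1:ℝ) ^ (n + 1)) ≠ 0 := by
      simp
    exact (mul_eq_zero.mp hm).resolve_left hne
  -- Step B : norm of P
  set Cst : ℝ := ((Nat.factorial (n + 1) : ℝ)) * Real.Gamma (β + 1) with hCstdef
  have keyB : Jf α (P * P) = Cst := by
    have hm := Jf_master β (n + 1) hβn P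
    rw [hβα, hΦ] at hm
    have hiter : (Polynomial.derivative)^[n + 1] P
        = Polynomial.C ((Nat.factorial (n + 1) : ℝ)) := by
      have hdeg : ((Polynomial.derivative)^[n + 1] P).natDegree ≤ 0 := by
        have := Polynomial.natDegree_iterate_derivative P (n + 1)
        omega
      rw [Polynomial.eq_C_of_natDegree_le_zero hdeg]
      congr 1
      rw [Polynomial.coeff_iterate_derivative]
      have hmonic : P.Monic := Lagrange.nodal_monic
      have hco : P.coeff (0 + (n + 1)) = 1 := by
        have := hmonic.leadingCoeff
        rw [Polynomial.leadingCoeff, hPdeg] at this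
        simpa using this
      rw [hco, zero_add, Nat.descFactorial_self, nsmul_eq_mul, mul_one]
    rw [hiter, Jf_C (by linarith : (-1:ℝ) < β)] at hm
    rw [mul_assoc, Jf_Cmul] at hm
    have h2 : Jf α (P * P) = ((-1:ℝ) ^ (n + 1))⁻¹ * ((-1:ℝ) ^ (n + 1)
        * ((Nat.factorial (n + 1) : ℝ) * Real.Gamma (β + 1))) := by
      rw [← hm]
      field_simp
    rw [h2, hCstdef]
    field_simp
  -- K2 : ∫ ω t P' p_j = Cst
  have K2 : ∀ j, Jf α (Polynomial.X * Polynomial.derivative P * p j) = Cst := by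
    intro j
    have h0 := Jf_ibp hα (P * p j)
    have heq : Polynomial.X * Polynomial.derivative P * p j
        = ((Polynomial.C (α + 1) - Polynomial.X) * (P * p j)
            + Polynomial.X * Polynomial.derivative (P * p j))
          + ((P * P + Polynomial.C (x j) * (P * p j))
            - (Polynomial.C (α + 1) * (P * p j) + P * (Polynomial.X * Polynomial.derivative (p j)))) := by
      rw [Polynomial.derivative_mul]
      have hXp : Polynomial.X * p j = P + Polynomial.C (x j) * p j := by
        rw [hPj j]; ring
      calc Polynomial.X * Polynomial.derivative P * p j
          = ((Polynomial.C (α + 1) - Polynomial.X) * (P * p j)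
            + Polynomial.X * (Polynomial.derivative P * p j + P * Polynomial.derivative (p j)))
          + ((P * (Polynomial.X * p j)
            - (Polynomial.C (α + 1) * (P * p j) + P * (Polynomial.X * Polynomial.derivative (p j))))) := by ring
        _ = _ := by rw [hXp]; ring
    have hd1 : (P * P + Polynomial.C (x j) * (P * p j)).natDegree ≤ 2 * n + 2 := by
      exact Polynomial.natDegree_add_le _ _ |>.trans (by
        have h1 : (P*P).natDegree ≤ 2*n+2 := Polynomial.natDegree_mul_le.trans (by omega)
        have h2 : (Polynomial.C (x j) * (P * p j)).natDegree ≤ 2*n+2 :=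
          (Polynomial.natDegree_C_mul_le _ _).trans (Polynomial.natDegree_mul_le.trans (by
            have := hpdeg j; omega))
        omega)
    -- integrate
    rw [heq, Jf_add hα, h0, zero_add, Jf_sub hα, Jf_add hα, Jf_add hα, keyB,
      Jf_Cmul, keyA (p j) (hpdeg j).le, Jf_Cmul, keyA (p j) (hpdeg j).le]
    have hlast : Jf α (P * (Polynomial.X * Polynomial.derivative (p j))) = 0 := by
      apply keyA
      rcases Nat.eq_zero_or_pos n with hn | hn
      · have : (p j).natDegree = 0 := by rw [hpdeg j, hn]
        rw [Polynomial.eq_C_of_natDegree_le_zero this.le]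
        simp
      · refine Polynomial.natDegree_mul_le.trans ?_
        have := Polynomial.natDegree_derivative_le (p j)
        rw [hpdeg j] at this
        simp only [Polynomial.natDegree_X]
        omega
    rw [hlast]
    ring
  -- K1 : mutual orthogonality
  have K1 : ∀ j k, j ≠ k → Jf α (Polynomial.X * p j * p k) = 0 := by
    intro j k hjk
    have hn : 1 ≤ n := by
      by_contra hn
      push_neg at hn
      exact hjk (Fin.ext (by omega))
    set q : Polynomial ℝ := Lagrange.nodal ((Finset.univ.erase j).erase k) x with hqdef
    have hpjq : p j = (Polynomial.X - Polynomial.C (x k)) * q :=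
      Lagrange.nodal_eq_mul_nodal_erase (Finset.mem_erase.mpr ⟨Ne.symm hjk, mem_univ k⟩)
    have hsetcomm : (Finset.univ.erase k).erase j = (Finset.univ.erase j).erase k := by
      ext t; simp only [Finset.mem_erase]; tauto
    have hpkq : p k = (Polynomial.X - Polynomial.C (x j)) * q := by
      have := Lagrange.nodal_eq_mul_nodal_erase
        (s := Finset.univ.erase k) (v := x) (i := j)
        (Finset.mem_erase.mpr ⟨hjk, mem_univ j⟩)
      rw [hsetcomm] at this
      exact this
    have hfac : Polynomial.X * p j * p k = P * (Polynomial.X * q) := by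
      rw [hPj j, hpjq, hpkq]
      ring
    rw [hfac]
    apply keyA
    have hqdeg : q.natDegree = n - 1 := by
      rw [hqdef, Lagrange.natDegree_nodal,
        Finset.card_erase_of_mem (Finset.mem_erase.mpr ⟨Ne.symm hjk, mem_univ k⟩),
        Finset.card_erase_of_mem (mem_univ j), Finset.card_univ, Fintype.card_fin]
      omega
    refine Polynomial.natDegree_mul_le.trans ?_
    rw [Polynomial.natDegree_X, hqdeg]
    omega
  -- Lagrange partition of unity
  have hsum1 : (1 : Polynomial ℝ) = ∑ k, Polynomial.C (lam k) * p k := by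
    have hD : (1 : Polynomial ℝ) - ∑ k, Polynomial.C (lam k) * p k = 0 := by
      apply Polynomial.eq_zero_of_natDegree_lt_card_of_eval_eq_zero _ hinj
      · intro i
        simp only [Polynomial.eval_sub, Polynomial.eval_one, Polynomial.eval_finset_sum,
          Polynomial.eval_mul, Polynomial.eval_C]
        rw [Finset.sum_eq_single i]
        · have hpi : (p i).eval (x i) = ∏ m ∈ Finset.univ.erase i, (x i - x m) := by
            rw [hpdef]; exact Lagrange.eval_nodal
          rw [hpi, hlam i, inv_mul_cancel₀]
          · ring
          · rw [Finset.prod_ne_zero_iff]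
            intro m hm
            have : m ≠ i := (Finset.mem_erase.mp hm).1
            exact sub_ne_zero.mpr fun hc => this (hinj hc.symm)
        · intro k _ hki
          have : (p k).eval (x i) = 0 := by
            rw [hpdef]
            exact Lagrange.eval_nodal_at_node
              (Finset.mem_erase.mpr ⟨fun hc => hki hc.symm, mem_univ i⟩)
          rw [this]; ring
        · intro h; exact absurd (Finset.mem_univ i) h
      · rw [Fintype.card_fin]
        have : ((1 : Polynomial ℝ) - ∑ k, Polynomial.C (lam k) * p k).natDegree ≤ n := by
          refine (Polynomial.natDegree_sub_le _ _).trans (max_le (by simp) ?_)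
          refine Polynomial.natDegree_sum_le_of_forall_le _ _ (fun k _ => ?_)
          exact (Polynomial.natDegree_C_mul_le _ _).trans (hpdeg k).le
        omega
    have := sub_eq_zero.mp hD
    exact this
  intro j
  -- norm of p j
  have hpj2 : Jf α (Polynomial.X * p j * p j) = Cst := by
    have h := K2 j
    rw [hP'] at h
    have hexp : Polynomial.X * (∑ k, p k) * p j = ∑ k, Polynomial.X * p k * p j := by
      rw [Finset.mul_sum, Finset.sum_mul]
    rw [hexp, Jf_sum hα] at h
    rw [Finset.sum_eq_single j] at h
    · exact h
    · intro k _ hkj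
      have := K1 k j hkj
      exact this
    · intro h'; exact absurd (Finset.mem_univ j) h'
  -- ∫ ω t p_j = lam j * Cst
  have hXpj : Jf α (Polynomial.X * p j) = lam j * Cst := by
    have hexp : Polynomial.X * p j = ∑ k, Polynomial.C (lam k) * (Polynomial.X * p j * p k) := by
      calc Polynomial.X * p j = Polynomial.X * p j * 1 := by ring
        _ = Polynomial.X * p j * ∑ k, Polynomial.C (lam k) * p k := by rw [← hsum1]
        _ = ∑ k, Polynomial.C (lam k) * (Polynomial.X * p j * p k) := by
            rw [Finset.mul_sum]; congr 1; funext k; ring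
    rw [hexp, Jf_sum hα]
    have : ∀ k, Jf α (Polynomial.C (lam k) * (Polynomial.X * p j * p k))
        = lam k * Jf α (Polynomial.X * p j * p k) := fun k => Jf_Cmul _ _ _
    rw [Finset.sum_congr rfl (fun k _ => this k)]
    rw [Finset.sum_eq_single j]
    · rw [hpj2]
    · intro k _ hkj
      rw [K1 j k (fun hc => hkj hc.symm)]; ring
    · intro h'; exact absurd (Finset.mem_univ j) h'
  have hJP : Jf α P = 0 := by
    have := keyA 1 (by simp)
    rwa [mul_one] at this
  -- x_j * ∫ ω p_j = lam j * Cst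
  have hJpj : x j * Jf α (p j) = lam j * Cst := by
    have hid : Polynomial.C (x j) * p j = Polynomial.X * p j - P := by
      rw [hPj j]; ring
    have h := Jf_Cmul α (x j) (p j)
    rw [hid, Jf_sub hα, hXpj, hJP, sub_zero] at h
    linarith [h]
  -- w j in terms of Jf
  have hwj : w j = lam j * Jf α (p j) := by
    rw [hw j]
    have hptw : ∀ t : ℝ, t ^ α * Real.exp (-t)
        * ∏ k ∈ Finset.univ.erase j, ((t - x k) / (x j - x k))
        = lam j * (Real.exp (-t) * t ^ α * (p j).eval t) := by
      intro t
      rw [Finset.prod_div_distrib]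
      have hevn : (p j).eval t = ∏ k ∈ Finset.univ.erase j, (t - x k) := by
        rw [hpdef]; exact Lagrange.eval_nodal
      rw [hevn, hlam j, div_eq_mul_inv]
      ring
    rw [show (fun t => t ^ α * Real.exp (-t)
        * ∏ k ∈ Finset.univ.erase j, ((t - x k) / (x j - x k)))
        = fun t => lam j * (Real.exp (-t) * t ^ α * (p j).eval t) from funext hptw]
    rw [MeasureTheory.integral_const_mul]
    rfl
  -- the central identity
  have hxw : x j * w j = Cst * lam j ^ 2 := by
    rw [hwj, show x j * (lam j * Jf α (p j)) = lam j * (x j * Jf α (p j)) by ring, hJpj]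
    ring
  -- relate Cst to the stated constant
  have hCsteq : Real.Gamma ((n : ℝ) + α + 2) * ((Nat.factorial (n + 1) : ℝ)) = Cst := by
    rw [hCstdef]
    have hb1 : β + 1 = (n : ℝ) + α + 2 := by rw [hβdef]; push_cast; ring
    rw [hb1]; ring
  have hCstpos : 0 < Cst := by
    rw [hCstdef]
    have h1 : (0:ℝ) < (Nat.factorial (n + 1) : ℝ) := by exact_mod_cast Nat.factorial_pos (n + 1)
    have h2 : 0 < Real.Gamma (β + 1) := by
      apply Real.Gamma_pos_of_pos
      rw [hβdef]
      have : (0:ℝ) ≤ ((n + 1 : ℕ) : ℝ) := Nat.cast_nonneg _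
      linarith
    exact mul_pos h1 h2
  have harg : x j * w j / (Real.Gamma ((n : ℝ) + α + 2) * (Nat.factorial (n + 1) : ℝ))
      = lam j ^ 2 := by
    rw [hxw, hCsteq, mul_comm Cst (lam j ^ 2), mul_div_assoc, div_self hCstpos.ne', mul_one]
  rw [harg, Real.sqrt_sq_eq_abs]
  -- sign analysis
  have hsplit : Finset.univ.erase j = Finset.Iio j ∪ Finset.Ioi j := by
    ext k
    simp only [Finset.mem_erase, Finset.mem_univ, and_true, Finset.mem_union,
      Finset.mem_Iio, Finset.mem_Ioi]
    exact ne_iff_lt_or_gt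
  have hdisj : Disjoint (Finset.Iio j) (Finset.Ioi j) := by
    refine Finset.disjoint_left.mpr (fun k hk1 hk2 => ?_)
    exact absurd (lt_trans (Finset.mem_Iio.mp hk1) (Finset.mem_Ioi.mp hk2)) (lt_irrefl k)
  set B : ℝ := ∏ k ∈ Finset.Iio j, (x j - x k) with hBdef
  set A : ℝ := ∏ k ∈ Finset.Ioi j, (x k - x j) with hAdef
  have hBpos : 0 < B :=
    Finset.prod_pos (fun k hk => sub_pos.mpr (hx_mono (Finset.mem_Iio.mp hk)))
  have hApos : 0 < A :=
    Finset.prod_pos (fun k hk => sub_pos.mpr (hx_mono (Finset.mem_Ioi.mp hk)))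
  have hprod : ∏ k ∈ Finset.univ.erase j, (x j - x k) = (-1:ℝ) ^ (n - (j : ℕ)) * (B * A) := by
    rw [hsplit, Finset.prod_union hdisj]
    have h2 : ∏ k ∈ Finset.Ioi j, (x j - x k) = (-1:ℝ) ^ (n - (j : ℕ)) * A := by
      have hc : ∀ k ∈ Finset.Ioi j, (x j - x k) = (-1) * (x k - x j) := fun k _ => by ring
      rw [Finset.prod_congr rfl hc, Finset.prod_mul_distrib, Finset.prod_const, hAdef]
      congr 2
      rw [Fin.card_Ioi]
      omega
    rw [h2, hBdef]
    ring
  have hlamj : lam j = (-1:ℝ) ^ (n - (j : ℕ)) * (B * A)⁻¹ := by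
    rw [hlam j, hprod, mul_inv]
    congr 1
    rw [← inv_pow, inv_neg, inv_one]
  have habs : |lam j| = (B * A)⁻¹ := by
    rw [hlamj, abs_mul, abs_pow, abs_neg, abs_one, one_pow, one_mul,
      abs_of_pos (inv_pos.mpr (mul_pos hBpos hApos))]
  have hpow : ((-1:ℝ)) ^ (n + (j : ℕ)) = (-1:ℝ) ^ (n - (j : ℕ)) := by
    have hj : (j : ℕ) ≤ n := Nat.lt_succ_iff.mp j.isLt
    have hsum : n + (j : ℕ) = (n - (j : ℕ)) + 2 * (j : ℕ) := by omega
    rw [hsum, pow_add, pow_mul]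
    norm_num
  rw [hpow, habs, hlamj]
end

section
/- Let x_0 < ⋯ < x_n be the n+1 roots of the (physicists') Hermite polynomial H_{n+1}, which are real and distinct. Let λ_j := 1/∏_{k≠j}(x_j − x_k) be the barycentric weights and w_j := ∫_{−∞}^∞ e^{−x²} ∏_{k≠j}((x − x_k)/(x_j − x_k)) dx the Gauss–Hermite quadrature weights. Then for every j = 0,…,n: λ_j = (−1)^{n+j} · √( 2^n / ( (n+1)! · √π ) ) · √(w_j). -/
open MeasureTheory Finset Real

namespace BaryH
open Polynomial Filter


noncomputable def g : ℝ → ℝ := fun t => Real.exp (-t ^ 2)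

noncomputable def Q : ℕ → Polynomial ℝ
  | 0 => 1
  | n + 1 => derivative (Q n) - C 2 * X * Q n

@[simp] lemma Q_zero : Q 0 = 1 := rfl
lemma Q_succ (n : ℕ) : Q (n + 1) = derivative (Q n) - C 2 * X * Q n := rfl

lemma g_pos (t : ℝ) : 0 < g t := Real.exp_pos _

lemma hasDerivAt_g (t : ℝ) : HasDerivAt g (-2 * t * g t) t := by
  have h : HasDerivAt (fun s : ℝ => -s ^ 2) (-2 * t) t := by
    simpa using (hasDerivAt_pow 2 t).fun_neg
  have := h.exp
  rw [show g = fun t => Real.exp (-t ^ 2) from rfl]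
  simpa [g, mul_comm] using this

lemma hasDerivAt_poly_gauss (b : Polynomial ℝ) (t : ℝ) :
    HasDerivAt (fun s => b.eval s * g s)
      ((derivative b - C 2 * X * b).eval t * g t) t := by
  have h : HasDerivAt (fun s => b.eval s * g s) _ t :=
    (b.hasDerivAt t).fun_mul (hasDerivAt_g t)
  convert h using 1
  simp only [eval_sub, eval_mul, eval_C, eval_X]
  ring

lemma rodrigues : ∀ m, deriv^[m] g = fun t => (Q m).eval t * g t
  | 0 => by funext t; simp
  | (m + 1) => by
      funext t
      rw [Function.iterate_succ_apply', rodrigues m, Q_succ]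
      exact (hasDerivAt_poly_gauss (Q m) t).deriv

lemma continuous_g : Continuous g := Real.continuous_exp.comp (continuous_pow 2).neg

lemma integrable_pow_gauss (n : ℕ) : Integrable (fun t : ℝ => t ^ n * g t) := by
  have hg : Integrable (fun t : ℝ =>
      ((n.factorial : ℝ) * Real.exp 1) * Real.exp (-(1/2 : ℝ) * t ^ 2)) :=
    (integrable_exp_neg_mul_sq (by norm_num)).const_mul _
  refine hg.mono' (((continuous_pow n).mul continuous_g).aestronglyMeasurable) ?_
  filter_upwards with t
  have h1 : |t| ^ n ≤ (n.factorial : ℝ) * Real.exp |t| := by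
    have h := Real.pow_div_factorial_le_exp (x := |t|) (abs_nonneg t) n
    rw [div_le_iff₀ (by positivity)] at h
    linarith
  have h3 : Real.exp |t| * Real.exp (-t ^ 2) ≤ Real.exp 1 * Real.exp (-(1/2 : ℝ) * t ^ 2) := by
    rw [← Real.exp_add, ← Real.exp_add]
    apply Real.exp_le_exp.mpr
    nlinarith [sq_nonneg (|t| - 1), sq_abs t]
  have h2 : ‖t ^ n * g t‖ = |t| ^ n * g t := by
    rw [norm_mul, norm_pow, Real.norm_eq_abs, Real.norm_eq_abs, abs_of_pos (g_pos t)]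
  rw [h2]
  calc |t| ^ n * g t ≤ ((n.factorial : ℝ) * Real.exp |t|) * g t :=
        mul_le_mul_of_nonneg_right h1 (g_pos t).le
    _ = (n.factorial : ℝ) * (Real.exp |t| * Real.exp (-t ^ 2)) := by rw [g]; ring
    _ ≤ (n.factorial : ℝ) * (Real.exp 1 * Real.exp (-(1/2 : ℝ) * t ^ 2)) :=
        mul_le_mul_of_nonneg_left h3 (by positivity)
    _ = ((n.factorial : ℝ) * Real.exp 1) * Real.exp (-(1/2 : ℝ) * t ^ 2) := by ring

lemma integrable_poly_gauss (p : Polynomial ℝ) : Integrable (fun t => p.eval t * g t) := by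
  have h : (fun t => p.eval t * g t)
      = fun t => ∑ i ∈ Finset.range (p.natDegree + 1), p.coeff i * (t ^ i * g t) := by
    funext t
    rw [Polynomial.eval_eq_sum_range, Finset.sum_mul]
    simp [mul_assoc]
  rw [h]
  exact integrable_finset_sum _ fun i _ => (integrable_pow_gauss i).const_mul _

lemma integrable_poly_poly_gauss (a b : Polynomial ℝ) :
    Integrable (fun t => a.eval t * (b.eval t * g t)) := by
  have h := integrable_poly_gauss (a * b)
  simpa [eval_mul, mul_assoc] using h

lemma ibp_step (a b : Polynomial ℝ) :
    ∫ t, a.eval t * ((derivative b - C 2 * X * b).eval t * g t)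
      = - ∫ t, (derivative a).eval t * (b.eval t * g t) := by
  exact integral_mul_deriv_eq_deriv_mul_of_integrable
    (u := fun t => a.eval t) (u' := fun t => (derivative a).eval t)
    (v := fun t => b.eval t * g t)
    (v' := fun t => (derivative b - C 2 * X * b).eval t * g t)
    (fun t _ => a.hasDerivAt t) (fun t _ => hasDerivAt_poly_gauss b t)
    (integrable_poly_poly_gauss a _)
    (integrable_poly_poly_gauss (derivative a) b)
    (integrable_poly_poly_gauss a b)

lemma ibp_iter (m : ℕ) (q : Polynomial ℝ) :
    ∫ t, q.eval t * deriv^[m] g t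
      = (-1 : ℝ) ^ m * ∫ t, (derivative^[m] q).eval t * g t := by
  induction m generalizing q with
  | zero => simp
  | succ m ih =>
    have ih' := ih (derivative q)
    simp only [rodrigues m] at ih'
    simp only [rodrigues (m + 1), Q_succ]
    rw [ibp_step q (Q m), ih', Function.iterate_succ_apply]
    ring

lemma orth {m : ℕ} {r : Polynomial ℝ} (hr : derivative^[m] r = 0) :
    ∫ t, (Q m).eval t * (r.eval t * g t) = 0 := by
  have h : ∫ t, r.eval t * deriv^[m] g t = 0 := by
    rw [ibp_iter, hr]; simp
  simp only [rodrigues m] at h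
  rw [← h]
  congr 1; funext t; ring

lemma derivative_Q (m : ℕ) :
    derivative (Q (m + 1)) = C (-2 * (m + 1) : ℝ) * Q m := by
  induction m using Nat.twoStepInduction with
  | zero =>
    apply Polynomial.funext; intro t
    simp [Q_succ]
  | one =>
    apply Polynomial.funext; intro t
    simp [Q_succ]
    ring
  | more n ih1 ih2 =>
    have e2 : C (2 : ℝ) * X * Q (n + 1) = C (-2 * (n + 1) : ℝ) * Q n - Q (n + 2) := by
      rw [Q_succ (n + 1), ih1]; ring
    rw [Q_succ (n + 2), derivative_sub, derivative_mul, derivative_mul, derivative_C,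
      derivative_X, ih2, derivative_mul, derivative_C, ih1]
    apply Polynomial.funext; intro t
    have e2t := congrArg (Polynomial.eval t) e2
    simp only [eval_mul, eval_sub, eval_add, eval_C, eval_X, eval_zero, eval_one,
      zero_mul, one_mul, zero_add] at e2t ⊢
    push_cast at e2t ⊢
    linear_combination 2 * ((n : ℝ) + 2) * e2t

lemma iterate_derivative_Q (m : ℕ) :
    derivative^[m] (Q m) = C ((-2) ^ m * m.factorial : ℝ) := by
  induction m with
  | zero => simp
  | succ m ih =>
    rw [Function.iterate_succ_apply, derivative_Q m, Polynomial.iterate_derivative_C_mul, ih,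
      ← C_mul]
    congr 1
    rw [Nat.factorial_succ]
    push_cast
    ring

lemma natDegree_Q_le (m : ℕ) : (Q m).natDegree ≤ m := by
  induction m with
  | zero => simp
  | succ m ih =>
    rw [Q_succ]
    refine le_trans (natDegree_sub_le _ _) (max_le ?_ ?_)
    · exact le_trans (natDegree_derivative_le _) (by omega)
    · refine le_trans (natDegree_mul_le) ?_
      have h1 : (C (2:ℝ) * X).natDegree ≤ 1 :=
        le_trans natDegree_mul_le (by simp)
      omega

lemma coeff_Q (m : ℕ) : (Q m).coeff m = (-2) ^ m := by
  induction m with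
  | zero => simp
  | succ m ih =>
    rw [Q_succ, coeff_sub]
    have h1 : (derivative (Q m)).coeff (m + 1) = 0 := by
      apply coeff_eq_zero_of_natDegree_lt
      have := natDegree_derivative_le (Q m)
      have := natDegree_Q_le m
      omega
    have h2 : (C (2:ℝ) * X * Q m).coeff (m + 1) = 2 * (Q m).coeff m := by
      rw [mul_assoc, coeff_C_mul, coeff_X_mul]
    rw [h1, h2, ih]; ring

lemma natDegree_lt_of_coeff_eq_zero (D : Polynomial ℝ) (m : ℕ)
    (h1 : D.natDegree ≤ m) (h2 : D.coeff m = 0) (hm : 0 < m) : D.natDegree < m := by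
  rcases eq_or_ne D 0 with rfl | hD
  · simpa using hm
  · refine lt_of_le_of_ne h1 fun h => hD ?_
    rw [← leadingCoeff_eq_zero, leadingCoeff, h]
    exact h2

end BaryH


open BaryH Polynomial
/-- The (physicists') Hermite polynomial `H_n` defined by the Rodrigues formula. -/
noncomputable def hermiteH (n : ℕ) : ℝ → ℝ := fun x =>
  (-1 : ℝ) ^ n * Real.exp (x ^ 2) * deriv^[n] (fun t => Real.exp (-t ^ 2)) x

/-- **Corollary 2.5: barycentric weights for Gauss–Hermite points.**
If `x_0 < ⋯ < x_n` are the roots of `H_{n+1}` then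
`λ_j = (-1)^{n+j} √(2^n / ((n+1)! √π)) √(w_j)`. -/
theorem barycentric_hermite
    (n : ℕ) (x : Fin (n + 1) → ℝ)
    (hx_mono : StrictMono x)
    (hx_root : ∀ j, hermiteH (n + 1) (x j) = 0)
    (lam w : Fin (n + 1) → ℝ)
    (hlam : ∀ j, lam j = (∏ k ∈ Finset.univ.erase j, (x j - x k))⁻¹)
    (hw : ∀ j, w j = ∫ t : ℝ, Real.exp (-t ^ 2)
      * ∏ k ∈ Finset.univ.erase j, ((t - x k) / (x j - x k))) :
    ∀ j : Fin (n + 1),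
      lam j = (-1 : ℝ) ^ (n + (j : ℕ))
        * Real.sqrt ((2 : ℝ) ^ n / ((Nat.factorial (n + 1) : ℝ) * Real.sqrt Real.pi))
        * Real.sqrt (w j) := by
  
  intro j
  classical
  have hinj := hx_mono.injective
  -- roots of Q (n+1)
  have hQroot : ∀ k, (Q (n + 1)).eval (x k) = 0 := by
    intro k
    have h := hx_root k
    rw [hermiteH, show (fun t => Real.exp (-t ^ 2)) = g from rfl, rodrigues (n + 1)] at h
    have h2 : ((-1 : ℝ)) ^ (n + 1) ≠ 0 := pow_ne_zero _ (by norm_num)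
    simp only [mul_eq_zero, h2, Real.exp_ne_zero, or_false, false_or, g] at h
    tauto
  -- factorization of Q (n+1)
  set F : Polynomial ℝ := ∏ k : Fin (n + 1), (X - C (x k)) with hF
  have hFm : F.Monic := monic_prod_of_monic _ _ fun k _ => monic_X_sub_C _
  have hFdeg : F.natDegree = n + 1 := by
    rw [hF, natDegree_prod _ _ fun k _ => X_sub_C_ne_zero (x k)]
    simp
  have hc : ((-2 : ℝ)) ^ (n + 1) ≠ 0 := pow_ne_zero _ (by norm_num)
  have hfull : Q (n + 1) = C ((-2 : ℝ) ^ (n + 1)) * F := by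
    have hD : Q (n + 1) - C ((-2 : ℝ) ^ (n + 1)) * F = 0 := by
      apply Polynomial.eq_zero_of_natDegree_lt_card_of_eval_eq_zero _ hinj
      · intro k
        have hFe : F.eval (x k) = 0 := by
          rw [hF, eval_prod]
          exact Finset.prod_eq_zero (Finset.mem_univ k) (by simp)
        simp [hQroot k, hFe]
      · have hd1 : (Q (n + 1) - C ((-2 : ℝ) ^ (n + 1)) * F).natDegree ≤ n + 1 := by
          refine le_trans (natDegree_sub_le _ _) (max_le (natDegree_Q_le _) ?_)
          exact le_trans natDegree_mul_le (by simp [hFdeg])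
        have hd2 : (Q (n + 1) - C ((-2 : ℝ) ^ (n + 1)) * F).coeff (n + 1) = 0 := by
          rw [coeff_sub, coeff_C_mul, coeff_Q, ← hFdeg, hFm.coeff_natDegree]
          ring
        have := natDegree_lt_of_coeff_eq_zero _ _ hd1 hd2 (Nat.succ_pos n)
        simpa using this
    exact sub_eq_zero.mp hD
  -- the node polynomial with node j removed
  set p : Polynomial ℝ := ∏ k ∈ Finset.univ.erase j, (X - C (x k)) with hp
  have hprod : p * (X - C (x j)) = C ((-2 : ℝ) ^ (n + 1))⁻¹ * Q (n + 1) := by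
    rw [hfull, ← mul_assoc, ← C_mul, inv_mul_cancel₀ hc, C_1, one_mul, hF, hp]
    exact Finset.prod_erase_mul _ _ (Finset.mem_univ j)
  have hpm : p.Monic := monic_prod_of_monic _ _ fun k _ => monic_X_sub_C _
  have hpdeg : p.natDegree = n := by
    rw [hp, natDegree_prod _ _ fun k _ => X_sub_C_ne_zero (x k)]
    simp [Finset.card_erase_of_mem]
  -- the value of the node product at x j
  set pj : ℝ := p.eval (x j) with hpj
  have hpj_eq : pj = ∏ k ∈ Finset.univ.erase j, (x j - x k) := by
    rw [hpj, hp, eval_prod]; simp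
  have hpj_ne : pj ≠ 0 := by
    rw [hpj_eq]
    refine Finset.prod_ne_zero_iff.mpr fun k hk => sub_ne_zero.mpr ?_
    exact fun h => (Finset.mem_erase.mp hk).1 (hinj h.symm)
  have hlamj : lam j = pj⁻¹ := by rw [hlam j, hpj_eq]
  -- w j in terms of the node product
  set A : ℝ := ∫ t, p.eval t * g t with hA
  have hwj : w j = lam j * A := by
    rw [hw j, hA]
    rw [show (fun t : ℝ => Real.exp (-t ^ 2)
        * ∏ k ∈ Finset.univ.erase j, ((t - x k) / (x j - x k)))
        = fun t => lam j * (p.eval t * g t) from ?_, integral_const_mul _ _]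
    funext t
    rw [Finset.prod_div_distrib, hlam j, hp, eval_prod]
    simp only [eval_sub, eval_X, eval_C, g, div_eq_mul_inv]
    ring
  -- the key exactness identity
  have key : ∀ h : Polynomial ℝ, h.natDegree ≤ n + 1 →
      ∫ t, p.eval t * h.eval t * g t = h.eval (x j) * A := by
    intro h hh
    obtain ⟨r, hr⟩ := Polynomial.X_sub_C_dvd_sub_C_eval (a := x j) (p := h)
    have hrdeg : derivative^[n + 1] r = 0 := by
      rcases eq_or_ne r 0 with rfl | hr0
      · simp
      · apply Polynomial.iterate_derivative_eq_zero
        have h1 : ((X - C (x j)) * r).natDegree = 1 + r.natDegree := by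
          rw [natDegree_mul (X_sub_C_ne_zero _) hr0, natDegree_X_sub_C]
        have h2 : ((X - C (x j)) * r).natDegree ≤ n + 1 := by
          rw [← hr]
          exact le_trans (natDegree_sub_le _ _) (by simp [hh])
        omega
    have hsplit : p * h = C (h.eval (x j)) * p + C ((-2 : ℝ) ^ (n + 1))⁻¹ * (Q (n + 1) * r) := by
      have h1 : p * (h - C (h.eval (x j))) = C ((-2 : ℝ) ^ (n + 1))⁻¹ * (Q (n + 1) * r) := by
        rw [hr, ← mul_assoc, hprod, mul_assoc]
      linear_combination h1
    have e1 : Integrable (fun t => h.eval (x j) * (p.eval t * g t)) :=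
      (integrable_poly_gauss p).const_mul _
    have e2 : Integrable (fun t =>
        ((-2 : ℝ) ^ (n + 1))⁻¹ * ((Q (n + 1)).eval t * (r.eval t * g t))) :=
      (integrable_poly_poly_gauss (Q (n + 1)) r).const_mul _
    calc ∫ t, p.eval t * h.eval t * g t
        = ∫ t, (h.eval (x j) * (p.eval t * g t)
            + ((-2 : ℝ) ^ (n + 1))⁻¹ * ((Q (n + 1)).eval t * (r.eval t * g t))) := by
          congr 1; funext t
          have := congrArg (Polynomial.eval t) hsplit
          simp only [eval_mul, eval_add, eval_C] at this
          nlinarith [this, g_pos t]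
      _ = h.eval (x j) * A + ((-2 : ℝ) ^ (n + 1))⁻¹
            * ∫ t, (Q (n + 1)).eval t * (r.eval t * g t) := by
          rw [integral_add e1 e2, integral_const_mul _ _, integral_const_mul _ _, hA]
      _ = h.eval (x j) * A := by rw [orth hrdeg]; ring
  -- Gaussian integral
  have hgauss : ∫ t : ℝ, g t = Real.sqrt π := by
    have h := integral_gaussian 1
    simp only [neg_mul, one_mul, div_one] at h
    rw [show (∫ t : ℝ, g t) = ∫ x : ℝ, Real.exp (-x ^ 2) from rfl]
    exact h
  -- the L² norm of Q n
  have norm_Q : ∫ t, (Q n).eval t * ((Q n).eval t * g t)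
      = 2 ^ n * n.factorial * Real.sqrt π := by
    have h := ibp_iter n (Q n)
    simp only [rodrigues n] at h
    rw [h, iterate_derivative_Q]
    simp only [eval_C]
    rw [integral_const_mul _ _, hgauss]
    have hpow : (-1 : ℝ) ^ n * (-2 : ℝ) ^ n = 2 ^ n := by rw [← mul_pow]; norm_num
    linear_combination ((n.factorial : ℝ) * Real.sqrt π) * hpow
  -- the value of Q n at x j
  have hder1 : derivative (Q (n + 1))
      = C ((-2 : ℝ) ^ (n + 1)) * (derivative p * (X - C (x j)) + p) := by
    have hq : Q (n + 1) = C ((-2 : ℝ) ^ (n + 1)) * (p * (X - C (x j))) := by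
      rw [hprod, ← mul_assoc, ← C_mul, mul_inv_cancel₀ hc, C_1, one_mul]
    rw [hq, derivative_C_mul, derivative_mul, derivative_sub, derivative_X, derivative_C,
      sub_zero, mul_one]
  have hQnj : (-2 * ((n : ℝ) + 1)) * (Q n).eval (x j) = (-2 : ℝ) ^ (n + 1) * pj := by
    have h1 := congrArg (Polynomial.eval (x j)) (derivative_Q n)
    have h2 := congrArg (Polynomial.eval (x j)) hder1
    simp only [eval_mul, eval_add, eval_sub, eval_C, eval_X, sub_self, mul_zero, zero_add] at h1 h2
    rw [← h1, h2, ← hpj]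
  have hQn2 : ((n : ℝ) + 1) * (Q n).eval (x j) = (-2 : ℝ) ^ n * pj := by
    have hps : (-2 : ℝ) ^ (n + 1) = (-2 : ℝ) ^ n * (-2) := pow_succ _ _
    linear_combination (-(1 : ℝ)/2) * hQnj - (pj/2) * hps
  -- the quadrature value
  have hkeyQ := key (Q n) (le_trans (natDegree_Q_le n) (by omega))
  set r2 : Polynomial ℝ := C ((-2 : ℝ) ^ n)⁻¹ * Q n - p with hr2
  have hc2 : ((-2 : ℝ)) ^ n ≠ 0 := pow_ne_zero _ (by norm_num)
  have hr2d : derivative^[n] r2 = 0 := by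
    rcases eq_or_ne r2 0 with h0 | h0
    · rw [h0]; simp
    · apply Polynomial.iterate_derivative_eq_zero
      have hle : r2.natDegree ≤ n := by
        rw [hr2]
        refine le_trans (natDegree_sub_le _ _) (max_le ?_ (le_of_eq hpdeg))
        exact le_trans natDegree_mul_le (by simp [natDegree_Q_le n])
      have hco : r2.coeff n = 0 := by
        rw [hr2, coeff_sub, coeff_C_mul, coeff_Q, ← hpdeg, hpm.coeff_natDegree]
        field_simp
        norm_num
      refine lt_of_le_of_ne hle fun hEq => h0 ?_
      rw [← leadingCoeff_eq_zero, leadingCoeff, hEq]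
      exact hco
  have hval : ∫ t, p.eval t * (Q n).eval t * g t
      = (-1 : ℝ) ^ n * n.factorial * Real.sqrt π := by
    have hsplit2 : ∀ t : ℝ, p.eval t * (Q n).eval t * g t
        = ((-2 : ℝ) ^ n)⁻¹ * ((Q n).eval t * ((Q n).eval t * g t))
          - (Q n).eval t * (r2.eval t * g t) := by
      intro t
      have hre : r2.eval t = ((-2 : ℝ) ^ n)⁻¹ * (Q n).eval t - p.eval t := by
        rw [hr2]; simp [eval_sub, eval_mul, eval_C]
      rw [show p.eval t = ((-2 : ℝ) ^ n)⁻¹ * (Q n).eval t - r2.eval t from by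
        rw [hre]; ring]
      ring
    calc ∫ t, p.eval t * (Q n).eval t * g t
        = ∫ t, (((-2 : ℝ) ^ n)⁻¹ * ((Q n).eval t * ((Q n).eval t * g t))
            - (Q n).eval t * (r2.eval t * g t)) := by
          congr 1; funext t; exact hsplit2 t
      _ = ((-2 : ℝ) ^ n)⁻¹ * (2 ^ n * n.factorial * Real.sqrt π) - 0 := by
          rw [integral_sub ((integrable_poly_poly_gauss (Q n) (Q n)).const_mul _)
            (integrable_poly_poly_gauss (Q n) r2), integral_const_mul _ _, norm_Q, orth hr2d]
      _ = (-1 : ℝ) ^ n * n.factorial * Real.sqrt π := by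
          have hpow : (-2 : ℝ) ^ n = (-1 : ℝ) ^ n * 2 ^ n := by rw [← mul_pow]; norm_num
          have h2n : (2 : ℝ) ^ n ≠ 0 := by positivity
          have hmone : ((-1 : ℝ) ^ n) * ((-1 : ℝ) ^ n) = 1 := by rw [← mul_pow]; norm_num
          rw [hpow, mul_inv, sub_zero]
          have : ((-1 : ℝ) ^ n)⁻¹ = (-1 : ℝ) ^ n := inv_eq_of_mul_eq_one_right hmone
          rw [this]
          field_simp
  have hQA : (Q n).eval (x j) * A = (-1 : ℝ) ^ n * n.factorial * Real.sqrt π := by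
    rw [← hkeyQ]; exact hval
  -- solve for w j
  have hn1 : ((n : ℝ) + 1) ≠ 0 := by positivity
  have hmone : ((-1 : ℝ) ^ n) * ((-1 : ℝ) ^ n) = 1 := by rw [← mul_pow]; norm_num
  have h2n : (2 : ℝ) ^ n ≠ 0 := by positivity
  have hpjA : pj * A = ((n : ℝ) + 1) * n.factorial * Real.sqrt π / 2 ^ n := by
    have h1 : ((-2 : ℝ) ^ n * pj) * A
        = ((n : ℝ) + 1) * ((-1 : ℝ) ^ n * n.factorial * Real.sqrt π) := by
      linear_combination ((n : ℝ) + 1) * hQA - A * hQn2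
    have hpow : (-2 : ℝ) ^ n = (-1 : ℝ) ^ n * 2 ^ n := by rw [← mul_pow]; norm_num
    rw [eq_div_iff h2n]
    rw [hpow] at h1
    linear_combination ((-1 : ℝ) ^ n) * h1
      + (((n : ℝ) + 1) * n.factorial * Real.sqrt π - pj * A * 2 ^ n) * hmone
  have hfs : (((n + 1).factorial : ℝ)) = ((n : ℝ) + 1) * n.factorial := by
    rw [Nat.factorial_succ]; push_cast; ring
  have hwval : w j = lam j ^ 2 * (((n + 1).factorial : ℝ) * Real.sqrt π / 2 ^ n) := by
    rw [hwj, hlamj, hfs,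
      show A = pj⁻¹ * (pj * A) from by rw [← mul_assoc, inv_mul_cancel₀ hpj_ne, one_mul],
      hpjA]
    ring
  -- the sign of pj
  have hjle : (j : ℕ) ≤ n := Fin.is_le j
  have hsplitP := Finset.prod_filter_mul_prod_filter_not (Finset.univ.erase j)
    (fun k => j < k) (fun k => x j - x k)
  have hfilter : (Finset.univ.erase j).filter (fun k => j < k) = Finset.Ioi j := by
    ext k
    simp only [Finset.mem_filter, Finset.mem_erase, Finset.mem_univ, and_true, true_and,
      Finset.mem_Ioi]
    exact ⟨fun h => h.2, fun h => ⟨ne_of_gt h, h⟩⟩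
  have hcard : ((Finset.univ.erase j).filter (fun k => j < k)).card = n - (j : ℕ) := by
    rw [hfilter, Fin.card_Ioi]
    omega
  have hneg : ∏ k ∈ (Finset.univ.erase j).filter (fun k => j < k), (x j - x k)
      = (-1 : ℝ) ^ (n - (j : ℕ))
        * ∏ k ∈ (Finset.univ.erase j).filter (fun k => j < k), (x k - x j) := by
    rw [← hcard]
    calc ∏ k ∈ (Finset.univ.erase j).filter (fun k => j < k), (x j - x k)
        = ∏ k ∈ (Finset.univ.erase j).filter (fun k => j < k), (-1 : ℝ) * (x k - x j) :=
          Finset.prod_congr rfl fun k _ => by ring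
      _ = _ := by rw [Finset.prod_mul_distrib, Finset.prod_const]
  have hpos1 : 0 < ∏ k ∈ (Finset.univ.erase j).filter (fun k => j < k), (x k - x j) :=
    Finset.prod_pos fun k hk => sub_pos.mpr (hx_mono (Finset.mem_filter.mp hk).2)
  have hpos2 : 0 < ∏ k ∈ (Finset.univ.erase j).filter (fun k => ¬ j < k), (x j - x k) := by
    refine Finset.prod_pos fun k hk => sub_pos.mpr (hx_mono ?_)
    have h1 := Finset.mem_filter.mp hk
    have h2 := (Finset.mem_erase.mp h1.1).1
    exact lt_of_le_of_ne (not_lt.mp h1.2) h2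
  have huu : ((-1 : ℝ) ^ (n + (j : ℕ))) * ((-1 : ℝ) ^ (n - (j : ℕ))) = 1 := by
    rw [← pow_add, show n + (j : ℕ) + (n - (j : ℕ)) = 2 * n from by omega, pow_mul]
    norm_num
  have hsign : (0 : ℝ) < (-1 : ℝ) ^ (n + (j : ℕ)) * pj := by
    rw [hpj_eq, ← hsplitP, hneg]
    have hposs := mul_pos hpos1 hpos2
    calc (0 : ℝ) < (∏ k ∈ (Finset.univ.erase j).filter (fun k => j < k), (x k - x j))
          * ∏ k ∈ (Finset.univ.erase j).filter (fun k => ¬ j < k), (x j - x k) := hposs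
      _ = (-1 : ℝ) ^ (n + (j : ℕ))
          * ((-1 : ℝ) ^ (n - (j : ℕ))
            * (∏ k ∈ (Finset.univ.erase j).filter (fun k => j < k), (x k - x j))
            * ∏ k ∈ (Finset.univ.erase j).filter (fun k => ¬ j < k), (x j - x k)) := by
          linear_combination ((∏ k ∈ (Finset.univ.erase j).filter (fun k => j < k), (x k - x j))
            * ∏ k ∈ (Finset.univ.erase j).filter (fun k => ¬ j < k), (x j - x k)) * huu.symm
  -- final assembly
  have hK : (0 : ℝ) < ((n + 1).factorial : ℝ) * Real.sqrt π / 2 ^ n := by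
    have h := Real.sqrt_pos.mpr Real.pi_pos
    positivity
  have h1 : Real.sqrt (w j) = |lam j|
      * Real.sqrt (((n + 1).factorial : ℝ) * Real.sqrt π / 2 ^ n) := by
    rw [hwval, Real.sqrt_mul (sq_nonneg _), Real.sqrt_sq_eq_abs]
  have h2 : (2 : ℝ) ^ n / (((n + 1).factorial : ℝ) * Real.sqrt π)
      = (((n + 1).factorial : ℝ) * Real.sqrt π / 2 ^ n)⁻¹ := by
    rw [inv_div]
  rw [h1, h2, Real.sqrt_inv]
  have hsK : Real.sqrt (((n + 1).factorial : ℝ) * Real.sqrt π / 2 ^ n) ≠ 0 :=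
    ne_of_gt (Real.sqrt_pos.mpr hK)
  have hu2 : ((-1 : ℝ) ^ (n + (j : ℕ))) * ((-1 : ℝ) ^ (n + (j : ℕ))) = 1 := by
    rw [← mul_pow]; norm_num
  have hu_inv : ((-1 : ℝ) ^ (n + (j : ℕ)))⁻¹ = (-1 : ℝ) ^ (n + (j : ℕ)) :=
    inv_eq_of_mul_eq_one_right hu2
  have hupos : 0 < (-1 : ℝ) ^ (n + (j : ℕ)) * lam j := by
    rw [hlamj, show (-1 : ℝ) ^ (n + (j : ℕ)) * pj⁻¹ = ((-1 : ℝ) ^ (n + (j : ℕ)) * pj)⁻¹ from by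
      rw [mul_inv, hu_inv]]
    exact inv_pos.mpr hsign
  have habs := abs_of_pos hupos
  rw [abs_mul, abs_pow, abs_neg, abs_one, one_pow, one_mul] at habs
  have hlam_sign : lam j = (-1 : ℝ) ^ (n + (j : ℕ)) * |lam j| := by
    linear_combination (-((-1 : ℝ) ^ (n + (j : ℕ)))) * habs - lam j * hu2
  calc lam j = (-1 : ℝ) ^ (n + (j : ℕ)) * |lam j| := hlam_sign
    _ = (-1 : ℝ) ^ (n + (j : ℕ))
        * (Real.sqrt (((n + 1).factorial : ℝ) * Real.sqrt π / 2 ^ n))⁻¹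
        * (|lam j| * Real.sqrt (((n + 1).factorial : ℝ) * Real.sqrt π / 2 ^ n)) := by
      field_simp
end

section
/- Let ω be a nonnegative integrable weight on (a,b), let y_1,…,y_m be distinct preassigned points and set r_m(x) := ∏_{i=1}^m (x − y_i). Let π_{n+1} be a polynomial of degree n+1 with n+1 distinct real roots x_0,…,x_n in (a,b), all different from the y_i, satisfying the orthogonality ∫_a^b ω(x) r_m(x) π_{n+1}(x) x^k dx = 0 for k = 0,…,n. Let w_j := ∫_a^b ω(x) r_m(x) ∏_{k≠j}((x − x_k)/(x_j − x_k)) dx be the Gaussian quadrature weights for the weight ω·r_m at the nodes x_j. Suppose real numbers ŵ_1,…,ŵ_m and w̃_0,…,w̃_n make the quadrature rule exact: ∑_{i=1}^m ŵ_i f(y_i) + ∑_{j=0}^n w̃_j f(x_j) = ∫_a^b ω(x) f(x) dx for every polynomial f of degree at most m+2n+1. Then w̃_j = w_j / r_m(x_j) for every j = 0,…,n. -/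
open MeasureTheory Finset Polynomial

/-- **Lemma 3.1: quadrature weights with preassigned abscissae.**
If the rule `∑ ŵ_i f(y_i) + ∑ w̃_j f(x_j)` is exact for all polynomials of degree at
most `m+2n+1`, where the free nodes `x_j` are the roots of a polynomial `π` of degree
`n+1` orthogonal to all lower degrees against `ω·r_m`, then `w̃_j = w_j / r_m(x_j)`,
where `w_j` are the Gaussian quadrature weights for the weight `ω·r_m`. -/
theorem preassigned_quadrature_weights
    (a b : ℝ) (hab : a < b) (ω : ℝ → ℝ)
    (hω_nonneg : ∀ t ∈ Set.Ioo a b, 0 ≤ ω t)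
    (hω_int : ∀ p : Polynomial ℝ,
      IntervalIntegrable (fun t => ω t * p.eval t) volume a b)
    (m : ℕ) (y : Fin m → ℝ) (hy : Function.Injective y)
    (n : ℕ) (π : Polynomial ℝ) (hπdeg : π.natDegree = n + 1)
    (x : Fin (n + 1) → ℝ) (hx_inj : Function.Injective x)
    (hx_mem : ∀ j, x j ∈ Set.Ioo a b)
    (hxy : ∀ j i, x j ≠ y i)
    (hx_root : ∀ j, π.eval (x j) = 0)
    (horth : ∀ k : ℕ, k ≤ n →
      (∫ t in a..b, ω t * (∏ i, (t - y i)) * π.eval t * t ^ k) = 0)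
    (w : Fin (n + 1) → ℝ)
    (hw : ∀ j, w j = ∫ t in a..b, ω t * (∏ i, (t - y i))
      * ∏ k ∈ Finset.univ.erase j, ((t - x k) / (x j - x k)))
    (what : Fin m → ℝ) (wtil : Fin (n + 1) → ℝ)
    (hexact : ∀ f : Polynomial ℝ, f.natDegree ≤ m + 2 * n + 1 →
      (∑ i, what i * f.eval (y i)) + (∑ j, wtil j * f.eval (x j))
        = ∫ t in a..b, ω t * f.eval t) :
    ∀ j, wtil j = w j / ∏ i, (x j - y i) := by
  intro j
  set f : Polynomial ℝ :=
    (∏ i, (X - C (y i))) *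
      ∏ k ∈ Finset.univ.erase j, (C (x j - x k)⁻¹ * (X - C (x k))) with hf
  have hdeg : f.natDegree ≤ m + 2 * n + 1 := by
    have h1 : (∏ i : Fin m, (X - C (y i))).natDegree ≤ m := by
      refine le_trans (Polynomial.natDegree_prod_le _ _) ?_
      simp [Polynomial.natDegree_X_sub_C]
    have h2 : (∏ k ∈ Finset.univ.erase j,
        (C (x j - x k)⁻¹ * (X - C (x k)))).natDegree ≤ n := by
      refine le_trans (Polynomial.natDegree_prod_le _ _) ?_
      have hb : ∀ k ∈ Finset.univ.erase j,
          (C (x j - x k)⁻¹ * (X - C (x k))).natDegree ≤ 1 := fun k _ =>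
        le_trans Polynomial.natDegree_mul_le
          (by simp [Polynomial.natDegree_X_sub_C])
      refine le_trans (Finset.sum_le_sum hb) ?_
      simp
    calc f.natDegree ≤ _ + _ := Polynomial.natDegree_mul_le
      _ ≤ m + n := add_le_add h1 h2
      _ ≤ m + 2 * n + 1 := by omega
  have hfy : ∀ i, f.eval (y i) = 0 := by
    intro i
    simp only [hf, Polynomial.eval_mul, Polynomial.eval_prod, Polynomial.eval_sub,
      Polynomial.eval_X, Polynomial.eval_C]
    have : ∏ i' : Fin m, (y i - y i') = 0 :=
      Finset.prod_eq_zero (Finset.mem_univ i) (by simp)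
    rw [this, zero_mul]
  have hfx : ∀ k, k ≠ j → f.eval (x k) = 0 := by
    intro k hk
    simp only [hf, Polynomial.eval_mul, Polynomial.eval_prod, Polynomial.eval_sub,
      Polynomial.eval_X, Polynomial.eval_C]
    have : ∏ k' ∈ Finset.univ.erase j, ((x j - x k')⁻¹ * (x k - x k')) = 0 :=
      Finset.prod_eq_zero (Finset.mem_erase.mpr ⟨hk, Finset.mem_univ k⟩) (by simp)
    rw [this, mul_zero]
  have hfxj : f.eval (x j) = ∏ i, (x j - y i) := by
    simp only [hf, Polynomial.eval_mul, Polynomial.eval_prod, Polynomial.eval_sub,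
      Polynomial.eval_X, Polynomial.eval_C]
    have : ∏ k ∈ Finset.univ.erase j, ((x j - x k)⁻¹ * (x j - x k)) = 1 := by
      refine Finset.prod_eq_one fun k hk => ?_
      have : x j - x k ≠ 0 := by
        have := (Finset.mem_erase.mp hk).1
        exact sub_ne_zero.mpr fun h => this (hx_inj h.symm)
      field_simp
    rw [this, mul_one]
  have hint : w j = ∫ t in a..b, ω t * f.eval t := by
    rw [hw j]
    congr 1
    funext t
    simp only [hf, Polynomial.eval_mul, Polynomial.eval_prod, Polynomial.eval_sub,
      Polynomial.eval_X, Polynomial.eval_C]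
    rw [mul_assoc]
    congr 1
    congr 1
    refine Finset.prod_congr rfl fun k _ => ?_
    rw [div_eq_mul_inv, mul_comm]
  have he := hexact f hdeg
  rw [← hint] at he
  have hs1 : (∑ i, what i * f.eval (y i)) = 0 := by
    refine Finset.sum_eq_zero fun i _ => by rw [hfy i, mul_zero]
  have hs2 : (∑ k, wtil k * f.eval (x k)) = wtil j * ∏ i, (x j - y i) := by
    rw [Finset.sum_eq_single j (fun k _ hk => by rw [hfx k hk, mul_zero]) (by simp),
      hfxj]
  rw [hs1, hs2, zero_add] at he
  have hr : (∏ i, (x j - y i)) ≠ 0 :=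
    Finset.prod_ne_zero_iff.mpr fun i _ => sub_ne_zero.mpr (hxy j i)
  field_simp [hr] at he ⊢
  linarith [he]
end

section
/- Let n ≥ 1 and let x_j := cos(jπ/n) for j = 0,1,…,n be the Chebyshev points of the second kind (the Gauss–Chebyshev–Lobatto points). Then the barycentric weights λ_j := 1/∏_{k≠j}(x_j − x_k) satisfy λ_j = (−1)^j δ_j 2^{n−1}/n, where δ_j = 1/2 if j = 0 or j = n, and δ_j = 1 otherwise. -/
open Finset Real

section Aux
open Polynomial Polynomial.Chebyshev

lemma U_deg_lead (m : ℕ) : (U ℝ (m : ℤ)).natDegree = m ∧ (U ℝ (m : ℤ)).coeff m = 2 ^ m := by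
  induction m using Nat.twoStepInduction with
  | zero => simp [U_zero]
  | one => simp [U_one]
  | more m ih1 ih2 =>
    have hU : U ℝ ((m + 2 : ℕ) : ℤ) = 2 * X * U ℝ ((m + 1 : ℕ) : ℤ) - U ℝ (m : ℤ) := by
      rw [show ((m + 2 : ℕ) : ℤ) = (m : ℤ) + 2 by push_cast; ring, U_add_two,
        show (m : ℤ) + 1 = ((m + 1 : ℕ) : ℤ) by push_cast; ring]
    obtain ⟨hd1, hc1⟩ := ih2
    obtain ⟨hd0, hc0⟩ := ih1
    have hne1 : U ℝ ((m + 1 : ℕ) : ℤ) ≠ 0 := by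
      intro h; rw [h] at hc1; simp at hc1
      exact absurd hc1.symm (by positivity)
    have h2Xne : (2 * X : ℝ[X]) ≠ 0 := by
      intro h; simpa using congrArg (fun p => Polynomial.coeff p 1) h
    have h2X : (2 * X : ℝ[X]).natDegree = 1 := by
      simpa using natDegree_C_mul_X (2 : ℝ) two_ne_zero
    have hdm : (2 * X * U ℝ ((m + 1 : ℕ) : ℤ)).natDegree = m + 2 := by
      rw [natDegree_mul h2Xne hne1, h2X, hd1]; omega
    have hlt : (U ℝ (m : ℤ)).natDegree < (2 * X * U ℝ ((m + 1 : ℕ) : ℤ)).natDegree := by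
      rw [hdm, hd0]; omega
    refine ⟨by rw [hU, natDegree_sub_eq_left_of_natDegree_lt hlt, hdm], ?_⟩
    have hz : (U ℝ (m : ℤ)).coeff (m + 2) = 0 := coeff_eq_zero_of_natDegree_lt (by rw [hd0]; omega)
    rw [hU, coeff_sub, hz, sub_zero]
    have h22 : 2 * X * U ℝ ((m + 1 : ℕ) : ℤ) = C 2 * (X * U ℝ ((m + 1 : ℕ) : ℤ)) := by
      rw [show (C 2 : ℝ[X]) = 2 from map_ofNat Polynomial.C 2]; ring
    rw [h22, coeff_C_mul, coeff_X_mul, hc1]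
    ring

lemma U_eval_one (m : ℕ) : (U ℝ (m : ℤ)).eval 1 = m + 1 := by
  induction m using Nat.twoStepInduction with
  | zero => simp [U_zero]
  | one => norm_num [U_one]
  | more m ih1 ih2 =>
    rw [show ((m + 2 : ℕ) : ℤ) = (m : ℤ) + 2 by push_cast; ring, U_add_two,
      show (m : ℤ) + 1 = ((m + 1 : ℕ) : ℤ) by push_cast; ring]
    simp only [eval_sub, eval_mul, eval_X, eval_ofNat, ih1, ih2]
    push_cast; ring

lemma U_eval_neg_one (m : ℕ) : (U ℝ (m : ℤ)).eval (-1) = (-1) ^ m * (m + 1) := by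
  induction m using Nat.twoStepInduction with
  | zero => simp [U_zero]
  | one => norm_num [U_one]
  | more m ih1 ih2 =>
    rw [show ((m + 2 : ℕ) : ℤ) = (m : ℤ) + 2 by push_cast; ring, U_add_two,
      show (m : ℤ) + 1 = ((m + 1 : ℕ) : ℤ) by push_cast; ring]
    simp only [eval_sub, eval_mul, eval_X, eval_ofNat, ih1, ih2]
    push_cast; ring



open Polynomial Polynomial.Chebyshev in
/-- **Barycentric weights for Chebyshev points of the second kind.** -/
theorem barycentric_chebyshev_second_kind
    (n : ℕ) (hn : 1 ≤ n) (x : Fin (n + 1) → ℝ)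
    (hx : ∀ j, x j = Real.cos ((j : ℝ) * Real.pi / (n : ℝ)))
    (lam : Fin (n + 1) → ℝ)
    (hlam : ∀ j, lam j = (∏ k ∈ Finset.univ.erase j, (x j - x k))⁻¹) :
    ∀ j : Fin (n + 1),
      lam j = (-1 : ℝ) ^ (j : ℕ)
        * (if (j : ℕ) = 0 ∨ (j : ℕ) = n then (1 : ℝ) / 2 else 1)
        * (2 : ℝ) ^ (n - 1) / (n : ℝ) := by
  classical
  intro j
  have hnR : (0 : ℝ) < n := by exact_mod_cast hn
  have hn0 : (n : ℝ) ≠ 0 := ne_of_gt hnR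
  set m : ℕ := n - 1 with hm
  have hmn : m + 1 = n := by omega
  have hmR : (m : ℝ) + 1 = n := by exact_mod_cast congrArg (Nat.cast (R := ℝ)) hmn
  have h2m : ((2:ℝ) ^ m) ≠ 0 := by positivity
  -- the angles
  have hθmem : ∀ k : Fin (n + 1), (k : ℝ) * π / n ∈ Set.Icc 0 π := by
    intro k
    have hk : (k : ℝ) ≤ n := by exact_mod_cast Nat.le_of_lt_succ k.isLt
    have hk0 : (0 : ℝ) ≤ k := by positivity
    constructor
    · positivity
    · rw [div_le_iff₀ hnR]
      nlinarith [Real.pi_pos]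
  have hxinj : Function.Injective x := by
    intro a b hab
    rw [hx a, hx b] at hab
    have h := Real.injOn_cos (hθmem a) (hθmem b) hab
    rw [div_left_inj' hn0] at h
    exact Fin.ext (by exact_mod_cast mul_right_cancel₀ Real.pi_ne_zero h)
  -- vanishing of U at interior nodes
  have hUzero : ∀ k : Fin (n + 1), (k : ℕ) ≠ 0 → (k : ℕ) ≠ n →
      (U ℝ (m : ℤ)).eval (x k) = 0 := by
    intro k h0 hN
    have hkn : (k : ℕ) < n := by omega
    have hθpos : 0 < (k : ℝ) * π / n := by
      have : (0:ℝ) < (k : ℕ) := by exact_mod_cast Nat.pos_of_ne_zero h0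
      positivity
    have hθlt : (k : ℝ) * π / n < π := by
      rw [div_lt_iff₀ hnR]
      have : (k : ℝ) < n := by exact_mod_cast hkn
      nlinarith [Real.pi_pos]
    have hsin : Real.sin ((k : ℝ) * π / n) ≠ 0 :=
      ne_of_gt (Real.sin_pos_of_pos_of_lt_pi hθpos hθlt)
    have hU := Polynomial.Chebyshev.U_real_cos ((k : ℝ) * π / n) (m : ℤ)
    have harg : ((m : ℤ) + 1 : ℝ) * ((k : ℝ) * π / n) = (k : ℕ) * π := by
      push_cast
      rw [hmR]
      field_simp
    rw [harg, Real.sin_nat_mul_pi] at hU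
    rw [hx k]
    exact (mul_eq_zero.mp hU).resolve_right hsin
  -- node values at endpoints
  have hx0 : ∀ k : Fin (n + 1), (k : ℕ) = 0 → x k = 1 := by
    intro k h0; rw [hx k, h0]; norm_num
  have hxn : ∀ k : Fin (n + 1), (k : ℕ) = n → x k = -1 := by
    intro k hN
    rw [hx k, hN, mul_comm, mul_div_assoc, div_self hn0, mul_one, Real.cos_pi]
  -- the nodal polynomial and the Chebyshev side
  set P : ℝ[X] := Lagrange.nodal Finset.univ x with hP
  set Q : ℝ[X] := (X ^ 2 - 1) * U ℝ (m : ℤ) with hQdef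
  obtain ⟨hUdeg, hUcoeff⟩ := U_deg_lead m
  have hUlead : (U ℝ (m : ℤ)).leadingCoeff = 2 ^ m := by
    rw [Polynomial.leadingCoeff, hUdeg, hUcoeff]
  have hUne : U ℝ (m : ℤ) ≠ 0 := by
    rw [← Polynomial.leadingCoeff_ne_zero, hUlead]
    positivity
  have hX2m : (X ^ 2 - 1 : ℝ[X]).Monic := by
    have := Polynomial.monic_X_pow_sub_C (1 : ℝ) two_ne_zero
    simpa using this
  have hX2deg : (X ^ 2 - 1 : ℝ[X]).natDegree = 2 := by
    have := Polynomial.natDegree_X_pow_sub_C (n := 2) (r := (1 : ℝ))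
    simpa using this
  have hQdeg : Q.natDegree = n + 1 := by
    rw [hQdef, Polynomial.natDegree_mul hX2m.ne_zero hUne, hX2deg, hUdeg]; omega
  have hQlead : Q.leadingCoeff = 2 ^ m := by
    rw [hQdef, Polynomial.leadingCoeff_mul, hX2m.leadingCoeff, one_mul, hUlead]
  have hQne : Q ≠ 0 := by
    rw [← Polynomial.leadingCoeff_ne_zero, hQlead]; positivity
  -- the nodes are roots of Q
  have hroot : ∀ k : Fin (n + 1), Q.eval (x k) = 0 := by
    intro k
    rw [hQdef, Polynomial.eval_mul]
    by_cases h0 : (k : ℕ) = 0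
    · rw [hx0 k h0]; norm_num
    by_cases hN : (k : ℕ) = n
    · rw [hxn k hN]; norm_num
    · rw [hUzero k h0 hN, mul_zero]
  -- P divides Q
  have hPdvd : P ∣ Q := by
    rw [hP, Lagrange.nodal]
    exact Fintype.prod_dvd_of_coprime (Polynomial.pairwise_coprime_X_sub_C hxinj)
      (fun k => (Polynomial.dvd_iff_isRoot).mpr (hroot k))
  have hPmonic : P.Monic := Lagrange.nodal_monic
  have hPdeg : P.natDegree = n + 1 := by
    rw [hP, Lagrange.natDegree_nodal]; simp
  -- key identity
  have key : Q = P * Polynomial.C ((2 : ℝ) ^ m) := by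
    obtain ⟨c, hc⟩ := hPdvd
    have hcne : c ≠ 0 := fun h => hQne (by rw [hc, h, mul_zero])
    have hcdeg : c.natDegree = 0 := by
      have h := Polynomial.natDegree_mul hPmonic.ne_zero hcne
      rw [← hc, hQdeg, hPdeg] at h
      omega
    have hclead : c.leadingCoeff = 2 ^ m := by
      have h : Q.leadingCoeff = P.leadingCoeff * c.leadingCoeff := by
        rw [hc, Polynomial.leadingCoeff_mul]
      rw [hQlead, hPmonic.leadingCoeff, one_mul] at h
      exact h.symm
    have hcC : c = Polynomial.C ((2 : ℝ) ^ m) := by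
      rw [Polynomial.eq_C_of_natDegree_eq_zero hcdeg]
      congr 1
      rw [← hclead, Polynomial.leadingCoeff, hcdeg]
    rw [hc, hcC]
  -- evaluate derivative of P at node j
  have hprod : ∏ k ∈ Finset.univ.erase j, (x j - x k) = (Polynomial.derivative P).eval (x j) := by
    rw [hP, Lagrange.eval_nodal_derivative_eval_node_eq (Finset.mem_univ j), Lagrange.eval_nodal]
  have hQ' : Polynomial.derivative Q
      = (Polynomial.derivative (X ^ 2 - 1 : ℝ[X])) * U ℝ (m : ℤ)
        + (X ^ 2 - 1) * Polynomial.derivative (U ℝ (m : ℤ)) := by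
    rw [hQdef, Polynomial.derivative_mul]
  have hQP' : Polynomial.derivative Q = Polynomial.derivative P * Polynomial.C ((2 : ℝ) ^ m) := by
    rw [key, Polynomial.derivative_mul, Polynomial.derivative_C, mul_zero, add_zero]
  have hcosj : Real.cos ((j : ℕ) * π) = (-1) ^ (j : ℕ) := by
    have := Real.cos_nat_mul_pi_sub 0 (j : ℕ)
    simpa using this
  -- value of the derivative of Q at the node j
  have hQeval : (Polynomial.derivative Q).eval (x j)
      = if (j : ℕ) = 0 then (2 * n : ℝ)
        else if (j : ℕ) = n then 2 * (-1 : ℝ) ^ n * n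
        else (n : ℝ) * (-1) ^ (j : ℕ) := by
    rw [hQ']
    by_cases h0 : (j : ℕ) = 0
    · rw [if_pos h0, hx0 j h0]
      simp [U_eval_one m]
      linarith [hmR]
    by_cases hN : (j : ℕ) = n
    · rw [if_neg h0, if_pos hN, hxn j hN]
      simp [U_eval_neg_one m]
      rw [show n = m + 1 from hmn.symm]
      push_cast
      ring
    · rw [if_neg h0, if_neg hN]
      have hU0 : (U ℝ (m : ℤ)).eval (x j) = 0 := hUzero j h0 hN
      have hpoly := Polynomial.Chebyshev.add_one_mul_T_eq_poly_in_U (R := ℝ) (m : ℤ)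
      have hev := congrArg (Polynomial.eval (x j)) hpoly
      simp only [Polynomial.eval_mul, Polynomial.eval_add, Polynomial.eval_sub,
        Polynomial.eval_intCast, Polynomial.eval_one, Polynomial.eval_X, Polynomial.eval_pow,
        hU0, mul_zero] at hev
      have hTn : (T ℝ ((m : ℤ) + 1)).eval (x j) = (-1) ^ (j : ℕ) := by
        rw [show (m : ℤ) + 1 = (n : ℤ) by omega, hx j, Polynomial.Chebyshev.T_real_cos]
        rw [show ((n : ℤ) : ℝ) * ((j : ℝ) * π / n) = (j : ℕ) * π by push_cast; field_simp]
        exact hcosj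
      rw [hTn] at hev
      -- hev : ((m:ℝ) + 1) * (-1)^j = 0 - (1 - x j ^ 2) * eval (x j) (derivative U)
      simp only [Polynomial.eval_sub, Polynomial.eval_mul, Polynomial.eval_add,
        Polynomial.eval_pow, Polynomial.eval_X, Polynomial.eval_one, hU0, mul_zero]
      push_cast at hev
      linear_combination (-1 : ℝ) * hev + ((-1 : ℝ) ^ (j : ℕ)) * hmR
  -- finish
  have hPQeval : (Polynomial.derivative P).eval (x j)
      = (Polynomial.derivative Q).eval (x j) / 2 ^ m := by
    have h := congrArg (Polynomial.eval (x j)) hQP'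
    rw [Polynomial.eval_mul, Polynomial.eval_C] at h
    field_simp [h]
    exact h.symm
  rw [hlam j, hprod, hPQeval, hQeval]
  have hj1 : ((-1 : ℝ) ^ (j : ℕ)) * ((-1 : ℝ) ^ (j : ℕ)) = 1 := by
    rw [← mul_pow]; norm_num
  have hn1 : ((-1 : ℝ) ^ n) * ((-1 : ℝ) ^ n) = 1 := by
    rw [← mul_pow]; norm_num
  by_cases h0 : (j : ℕ) = 0
  · rw [if_pos h0, if_pos (Or.inl h0), h0]
    apply inv_eq_of_mul_eq_one_left
    field_simp
  by_cases hN : (j : ℕ) = n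
  · rw [if_neg h0, if_pos hN, if_pos (Or.inr hN), hN]
    apply inv_eq_of_mul_eq_one_left
    have hd : ((-1:ℝ) ^ n * (1 / 2) * 2 ^ m / ↑n) * (2 * (-1:ℝ) ^ n * ↑n / 2 ^ m)
        = ((-1:ℝ) ^ n * (-1:ℝ) ^ n) * ((n:ℝ) / ↑n) * ((2:ℝ) ^ m / 2 ^ m) * ((1/2) * 2) := by
      ring
    rw [hd, hn1, div_self hn0, div_self h2m]
    norm_num
  · rw [if_neg h0, if_neg hN, if_neg (by tauto)]
    apply inv_eq_of_mul_eq_one_left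
    have hd : ((-1:ℝ) ^ (j:ℕ) * 1 * 2 ^ m / ↑n) * ((n:ℝ) * (-1:ℝ) ^ (j:ℕ) / 2 ^ m)
        = ((-1:ℝ) ^ (j:ℕ) * (-1:ℝ) ^ (j:ℕ)) * ((n:ℝ) / ↑n) * ((2:ℝ) ^ m / 2 ^ m) := by
      ring
    rw [hd, hj1, div_self hn0, div_self h2m]
    norm_num

end Aux
end

section
/- Let n ≥ 0 and let x_j := cos((2j+1)π/(2n+2)) for j = 0,1,…,n be the Chebyshev points of the first kind (the roots of the Chebyshev polynomial T_{n+1}). Then the barycentric weights λ_j := 1/∏_{k≠j}(x_j − x_k) satisfy λ_j = (−1)^j (2^n/(n+1)) sin((2j+1)π/(2n+2)). -/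
open Finset Real

open Polynomial Polynomial.Chebyshev in
private lemma cheb_coeff_aux : ∀ N : ℕ,
    (T ℝ (N : ℤ)).natDegree ≤ N ∧ (T ℝ (N : ℤ)).coeff N = 2 ^ (N - 1)
  | 0 => by simp [Polynomial.Chebyshev.T_zero]
  | 1 => by simp [Polynomial.Chebyshev.T_one]
  | (N + 2) => by
    obtain ⟨h0d, h0c⟩ := cheb_coeff_aux N
    obtain ⟨h1d, h1c⟩ := cheb_coeff_aux (N + 1)
    have hrec : T ℝ ((N : ℤ) + 2) = 2 * X * T ℝ ((N : ℤ) + 1) - T ℝ (N : ℤ) :=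
      T_add_two ℝ N
    have hcast : ((N + 2 : ℕ) : ℤ) = (N : ℤ) + 2 := by push_cast; ring
    have hcast1 : ((N + 1 : ℕ) : ℤ) = (N : ℤ) + 1 := by push_cast; ring
    rw [hcast, hrec]
    have hC2 : (2 : ℝ[X]) = C 2 := by
      rw [map_ofNat]
    constructor
    · apply le_trans (natDegree_sub_le _ _)
      apply max_le _ (le_trans h0d (by omega))
      apply le_trans natDegree_mul_le
      have : (2 * X : ℝ[X]).natDegree ≤ 1 := by
        rw [hC2]; exact le_trans (natDegree_C_mul_le _ _) (by simp)
      rw [← hcast1] at *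
      omega
    · rw [coeff_sub, coeff_eq_zero_of_natDegree_lt
        (by rw [← hcast] at *; omega : (T ℝ (N : ℤ)).natDegree < N + 2),
        sub_zero, mul_assoc, hC2, coeff_C_mul, coeff_X_mul, ← hcast1, h1c]
      simp
      ring

/-- **Barycentric weights for Chebyshev points of the first kind.**
For the roots `x_j = cos((2j+1)π/(2n+2))`, `j = 0,…,n`, of the Chebyshev polynomial
`T_{n+1}`, the barycentric weights are
`λ_j = (-1)^j (2^n/(n+1)) sin((2j+1)π/(2n+2))`. -/
theorem barycentric_chebyshev_first_kind
    (n : ℕ) (x : Fin (n + 1) → ℝ)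
    (hx : ∀ j, x j = Real.cos ((2 * (j : ℝ) + 1) * Real.pi / (2 * (n : ℝ) + 2)))
    (lam : Fin (n + 1) → ℝ)
    (hlam : ∀ j, lam j = (∏ k ∈ Finset.univ.erase j, (x j - x k))⁻¹) :
    ∀ j : Fin (n + 1),
      lam j = (-1 : ℝ) ^ (j : ℕ) * ((2 : ℝ) ^ n / ((n : ℝ) + 1))
        * Real.sin ((2 * (j : ℝ) + 1) * Real.pi / (2 * (n : ℝ) + 2)) := by
  classical
  intro j
  open Polynomial Polynomial.Chebyshev Lagrange in
  · set θ : Fin (n + 1) → ℝ := fun k => (2 * (k : ℝ) + 1) * Real.pi / (2 * (n : ℝ) + 2) with hθ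
    have hn1 : (0 : ℝ) < (n : ℝ) + 1 := by positivity
    have hden : (0 : ℝ) < 2 * (n : ℝ) + 2 := by positivity
    have hθpos : ∀ k : Fin (n + 1), 0 < θ k := by
      intro k
      apply div_pos _ hden
      have : (0 : ℝ) < 2 * (k : ℝ) + 1 := by positivity
      exact mul_pos this Real.pi_pos
    have hθlt : ∀ k : Fin (n + 1), θ k < Real.pi := by
      intro k
      rw [hθ]
      simp only
      rw [div_lt_iff₀ hden]
      have hk : (k : ℝ) ≤ (n : ℝ) := by exact_mod_cast Nat.lt_succ_iff.mp k.isLt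
      nlinarith [Real.pi_pos]
    have hsin : ∀ k : Fin (n + 1), 0 < Real.sin (θ k) :=
      fun k => Real.sin_pos_of_pos_of_lt_pi (hθpos k) (hθlt k)
    have hθinj : Function.Injective θ := by
      intro a b hab
      have hpi := Real.pi_ne_zero
      have : (a : ℝ) = (b : ℝ) := by
        rw [hθ] at hab
        simp only at hab
        rw [div_eq_div_iff hden.ne' hden.ne'] at hab
        have h := mul_right_cancel₀ (mul_ne_zero Real.pi_ne_zero hden.ne')
          (by linarith [hab] : (2 * (a : ℝ) + 1) * (Real.pi * (2 * (n : ℝ) + 2))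
            = (2 * (b : ℝ) + 1) * (Real.pi * (2 * (n : ℝ) + 2)))
        linarith
      exact Fin.ext (by exact_mod_cast this)
    have hxinj : Function.Injective x := by
      intro a b hab
      apply hθinj
      apply Real.injOn_cos ⟨le_of_lt (hθpos a), le_of_lt (hθlt a)⟩
        ⟨le_of_lt (hθpos b), le_of_lt (hθlt b)⟩
      rw [hx a, hx b] at hab
      exact hab
    have hkey : ∀ k : Fin (n + 1), ((n : ℝ) + 1) * θ k = (k : ℝ) * Real.pi + Real.pi / 2 := by
      intro k
      rw [hθ]
      simp only
      field_simp
    have hcosk : ∀ k : ℕ, Real.cos ((k : ℝ) * Real.pi) = (-1 : ℝ) ^ k := by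
      intro k
      simpa using Real.cos_nat_mul_pi_sub 0 k
    have hcos0 : ∀ k : Fin (n + 1), Real.cos (((n : ℝ) + 1) * θ k) = 0 := by
      intro k
      rw [Real.cos_eq_zero_iff]
      exact ⟨(k : ℕ), by rw [hkey k]; push_cast; ring⟩
    have hsinval : ∀ k : Fin (n + 1), Real.sin (((n : ℝ) + 1) * θ k) = (-1 : ℝ) ^ (k : ℕ) := by
      intro k
      rw [hkey k, Real.sin_add_pi_div_two, hcosk]
    -- the nodal polynomial
    set P : ℝ[X] := Lagrange.nodal Finset.univ x with hP
    have hPdeg : P.natDegree = n + 1 := by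
      rw [hP, Lagrange.natDegree_nodal, Finset.card_univ, Fintype.card_fin]
    have hPmonic : P.Monic := Lagrange.nodal_monic
    -- q = T_{n+1} - 2^n * P vanishes
    set q : ℝ[X] := T ℝ ((n : ℕ) + 1 : ℤ) - C ((2 : ℝ) ^ n) * P with hq
    have hTcast : ((n : ℕ) + 1 : ℤ) = ((n + 1 : ℕ) : ℤ) := by push_cast; ring
    obtain ⟨hTd, hTc⟩ := cheb_coeff_aux (n + 1)
    rw [← hTcast] at hTd hTc
    have heval : ∀ k : Fin (n + 1), q.eval (x k) = 0 := by
      intro k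
      rw [hq]
      simp only [eval_sub, eval_mul, eval_C]
      have h1 : (T ℝ ((n : ℕ) + 1 : ℤ)).eval (x k) = 0 := by
        rw [hx k, Polynomial.Chebyshev.T_real_cos]
        have : (((n : ℕ) + 1 : ℤ) : ℝ) = (n : ℝ) + 1 := by push_cast; ring
        rw [this]
        exact hcos0 k
      have h2 : P.eval (x k) = 0 := Lagrange.eval_nodal_at_node (Finset.mem_univ k)
      rw [h1, h2, mul_zero, sub_zero]
    have hqdeg : q.natDegree ≤ n := by
      rw [Polynomial.natDegree_le_iff_coeff_eq_zero]
      intro m hm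
      rw [hq, coeff_sub, coeff_C_mul]
      rcases eq_or_lt_of_le (Nat.succ_le_of_lt hm) with h | h
      · have hP1 : P.coeff (n + 1) = 1 := by
          have := hPmonic.coeff_natDegree
          rwa [hPdeg] at this
        rw [← h, hTc, hP1]
        simp
      · rw [coeff_eq_zero_of_natDegree_lt (lt_of_le_of_lt hTd h),
          coeff_eq_zero_of_natDegree_lt (by omega : P.natDegree < m), mul_zero, sub_zero]
    have hq0 : q = 0 := by
      apply Polynomial.eq_zero_of_natDegree_lt_card_of_eval_eq_zero q hxinj heval
      rw [Fintype.card_fin]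
      omega
    have hT : T ℝ ((n : ℕ) + 1 : ℤ) = C ((2 : ℝ) ^ n) * P := by
      have := sub_eq_zero.mp hq0
      exact this
    -- differentiate and evaluate at x j
    have hderiv : derivative (T ℝ ((n : ℕ) + 1 : ℤ)) =
        (((n : ℕ) + 1 : ℤ) : ℝ[X]) * Polynomial.Chebyshev.U ℝ (n : ℕ) := by
      have := Polynomial.Chebyshev.T_derivative_eq_U (R := ℝ) ((n : ℕ) + 1)
      simpa using this
    have hU : (Polynomial.Chebyshev.U ℝ (n : ℕ)).eval (x j) * Real.sin (θ j)
        = (-1 : ℝ) ^ (j : ℕ) := by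
      rw [hx j]
      have := Polynomial.Chebyshev.U_real_cos (θ j) (n : ℕ)
      rw [this]
      have : (((n : ℕ) : ℤ) + 1 : ℝ) = (n : ℝ) + 1 := by push_cast; ring
      rw [show ((((n : ℕ) : ℤ) + 1 : ℝ)) * θ j = ((n : ℝ) + 1) * θ j by rw [this]]
      exact hsinval j
    have hprod : (2 : ℝ) ^ n * ∏ k ∈ Finset.univ.erase j, (x j - x k)
        = ((n : ℝ) + 1) * (Polynomial.Chebyshev.U ℝ (n : ℕ)).eval (x j) := by
      have h1 : (derivative (T ℝ ((n : ℕ) + 1 : ℤ))).eval (x j)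
          = ((n : ℝ) + 1) * (Polynomial.Chebyshev.U ℝ (n : ℕ)).eval (x j) := by
        rw [hderiv]
        simp only [eval_mul, eval_intCast]
        push_cast
        ring
      have h2 : (derivative (T ℝ ((n : ℕ) + 1 : ℤ))).eval (x j)
          = (2 : ℝ) ^ n * ∏ k ∈ Finset.univ.erase j, (x j - x k) := by
        rw [hT, derivative_mul, derivative_C, zero_mul, zero_add]
        simp only [eval_mul, eval_C]
        congr 1
        rw [hP, Lagrange.eval_nodal_derivative_eval_node_eq (Finset.mem_univ j),
          Lagrange.eval_nodal]
      rw [← h2, h1]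
    -- finish by algebra
    set S : ℝ := ∏ k ∈ Finset.univ.erase j, (x j - x k) with hS
    set u : ℝ := (Polynomial.Chebyshev.U ℝ (n : ℕ)).eval (x j) with hu
    have hsj := hsin j
    have hSeq : (2 : ℝ) ^ n * S * Real.sin (θ j) = ((n : ℝ) + 1) * (-1 : ℝ) ^ (j : ℕ) := by
      rw [hprod, mul_assoc, hU]
    have hsq : (-1 : ℝ) ^ (j : ℕ) * (-1 : ℝ) ^ (j : ℕ) = 1 := by
      rw [← pow_add, ← two_mul, pow_mul]
      norm_num
    have hmain : S * ((-1 : ℝ) ^ (j : ℕ) * ((2 : ℝ) ^ n / ((n : ℝ) + 1))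
        * Real.sin (θ j)) = 1 := by
      field_simp
      linear_combination ((-1 : ℝ) ^ (j : ℕ)) * hSeq + ((n : ℝ) + 1) * hsq
    rw [hlam j, ← hS]
    exact inv_eq_of_mul_eq_one_right hmain
end
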